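/- arXiv:1603.08556 — 11 statements merged into one kernel-verified Lean document; each statement's English description precedes it below -/
import Mathlib

section
/- Let 0<α<1 and r₀>0, and define f(s₁,s₂) = s₂·((s₁²+s₂²)/r₀)^α on ℝ²∖{0}. Then for every point (s₁,s₂) with 0 < s₁²+s₂² ≤ r₀/2 and every i,j ∈ {1,2}, the second-order partial derivative satisfies |∂²f/∂sᵢ∂sⱼ (s₁,s₂)| ≤ (6α/r₀^α)·(s₁²+s₂²)^{α−1/2}. -/
/-!
Since `f = r₀ ^ (-α) · profile α` with `profile α x y = y ρ ^ α`, `ρ = x² + y²`, it suffices to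
bound the second partials of `profile α`. Each has the form `2α v ρ^(α-2) w` with `v ∈ {x, y}`,
so `|v| ≤ √ρ`, and `w` one of `ρ + 2(α-1) x²`, `ρ + 2(α-1) y²`, `3ρ + 2(α-1) y²`, all in
`[-3ρ, 3ρ]` for `0 ≤ α ≤ 1`. As `ρ^(α-2) · ρ · √ρ = ρ^(α-1/2)`, each is at most `6α ρ^(α-1/2)`.
-/

/-- Partial derivative of a two-variable real function in the first variable. -/
noncomputable def pderiv1 (g : ℝ → ℝ → ℝ) (x y : ℝ) : ℝ := deriv (fun x' => g x' y) x

/-- Partial derivative of a two-variable real function in the second variable. -/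
noncomputable def pderiv2 (g : ℝ → ℝ → ℝ) (x y : ℝ) : ℝ := deriv (fun y' => g x y') y

open Real Filter Topology

theorem pderiv1_const_mul (c : ℝ) (g : ℝ → ℝ → ℝ) :
    pderiv1 (fun x y => c * g x y) = fun x y => c * pderiv1 g x y := by
  funext x y
  exact congrFun (deriv_const_mul_field' c) x

theorem pderiv2_const_mul (c : ℝ) (g : ℝ → ℝ → ℝ) :
    pderiv2 (fun x y => c * g x y) = fun x y => c * pderiv2 g x y := by
  funext x y
  exact congrFun (deriv_const_mul_field' c) y

noncomputable def profile (α x y : ℝ) : ℝ := y * (x ^ 2 + y ^ 2) ^ α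

section Derivatives

variable {x y : ℝ}

theorem eventually_sq_add_sq_ne_zero_left (h : x ^ 2 + y ^ 2 ≠ 0) :
    ∀ᶠ t in 𝓝 x, t ^ 2 + y ^ 2 ≠ 0 :=
  (by fun_prop : Continuous fun t : ℝ => t ^ 2 + y ^ 2).continuousAt.eventually_ne h

theorem eventually_sq_add_sq_ne_zero_right (h : x ^ 2 + y ^ 2 ≠ 0) :
    ∀ᶠ t in 𝓝 y, x ^ 2 + t ^ 2 ≠ 0 :=
  (by fun_prop : Continuous fun t : ℝ => x ^ 2 + t ^ 2).continuousAt.eventually_ne h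

theorem hasDerivAt_sq_add_sq_rpow_left (p : ℝ) (h : x ^ 2 + y ^ 2 ≠ 0) :
    HasDerivAt (fun t => (t ^ 2 + y ^ 2) ^ p) (2 * p * x * (x ^ 2 + y ^ 2) ^ (p - 1)) x :=
  (((hasDerivAt_pow 2 x).add_const (y ^ 2)).rpow_const (Or.inl h)).congr_deriv (by ring)

theorem hasDerivAt_sq_add_sq_rpow_right (p : ℝ) (h : x ^ 2 + y ^ 2 ≠ 0) :
    HasDerivAt (fun t => (x ^ 2 + t ^ 2) ^ p) (2 * p * y * (x ^ 2 + y ^ 2) ^ (p - 1)) y :=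
  (((hasDerivAt_pow 2 y).const_add (x ^ 2)).rpow_const (Or.inl h)).congr_deriv (by ring)

theorem rpow_sub_one_eq_rpow_sub_two_mul (p : ℝ) (h : x ^ 2 + y ^ 2 ≠ 0) :
    (x ^ 2 + y ^ 2) ^ (p - 1) = (x ^ 2 + y ^ 2) ^ (p - 2) * (x ^ 2 + y ^ 2) := by
  rw [show p - 1 = p - 2 + 1 by ring, rpow_add_one h]

variable {α : ℝ}

theorem hasDerivAt_profile_left (h : x ^ 2 + y ^ 2 ≠ 0) :
    HasDerivAt (fun t => profile α t y) (2 * α * x * y * (x ^ 2 + y ^ 2) ^ (α - 1)) x :=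
  ((hasDerivAt_sq_add_sq_rpow_left α h).const_mul y).congr_deriv (by ring)

theorem hasDerivAt_profile_right (h : x ^ 2 + y ^ 2 ≠ 0) :
    HasDerivAt (fun t => profile α x t)
      ((x ^ 2 + y ^ 2) ^ α + 2 * α * y ^ 2 * (x ^ 2 + y ^ 2) ^ (α - 1)) y :=
  ((hasDerivAt_id' y).fun_mul (hasDerivAt_sq_add_sq_rpow_right α h)).congr_deriv (by ring)

theorem pderiv1_pderiv1_profile (h : x ^ 2 + y ^ 2 ≠ 0) :
    pderiv1 (pderiv1 (profile α)) x y =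
      2 * α * y * (x ^ 2 + y ^ 2) ^ (α - 2) * (x ^ 2 + y ^ 2 + 2 * (α - 1) * x ^ 2) := by
  have hfirst : ∀ᶠ t in 𝓝 x, pderiv1 (profile α) t y = 2 * α * y * (t * (t ^ 2 + y ^ 2) ^ (α - 1)) :=
    (eventually_sq_add_sq_ne_zero_left h).mono fun t ht =>
      (hasDerivAt_profile_left ht).deriv.trans (by ring)
  have hsecond := ((hasDerivAt_id' x).fun_mul
    (hasDerivAt_sq_add_sq_rpow_left (α - 1) h)).const_mul (2 * α * y)
  rw [pderiv1, Filter.EventuallyEq.deriv_eq hfirst, hsecond.deriv,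
    rpow_sub_one_eq_rpow_sub_two_mul α h, show α - 1 - 1 = α - 2 by ring]
  ring

theorem pderiv1_pderiv2_profile (h : x ^ 2 + y ^ 2 ≠ 0) :
    pderiv1 (pderiv2 (profile α)) x y =
      2 * α * x * (x ^ 2 + y ^ 2) ^ (α - 2) * (x ^ 2 + y ^ 2 + 2 * (α - 1) * y ^ 2) := by
  have hfirst : ∀ᶠ t in 𝓝 x, pderiv2 (profile α) t y =
      (t ^ 2 + y ^ 2) ^ α + 2 * α * y ^ 2 * (t ^ 2 + y ^ 2) ^ (α - 1) :=
    (eventually_sq_add_sq_ne_zero_left h).mono fun t ht => (hasDerivAt_profile_right ht).deriv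
  have hsecond := (hasDerivAt_sq_add_sq_rpow_left α h).fun_add
    ((hasDerivAt_sq_add_sq_rpow_left (α - 1) h).const_mul (2 * α * y ^ 2))
  rw [pderiv1, Filter.EventuallyEq.deriv_eq hfirst, hsecond.deriv,
    rpow_sub_one_eq_rpow_sub_two_mul α h, show α - 1 - 1 = α - 2 by ring]
  ring

theorem pderiv2_pderiv1_profile (h : x ^ 2 + y ^ 2 ≠ 0) :
    pderiv2 (pderiv1 (profile α)) x y =
      2 * α * x * (x ^ 2 + y ^ 2) ^ (α - 2) * (x ^ 2 + y ^ 2 + 2 * (α - 1) * y ^ 2) := by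
  have hfirst : ∀ᶠ t in 𝓝 y, pderiv1 (profile α) x t = 2 * α * x * (t * (x ^ 2 + t ^ 2) ^ (α - 1)) :=
    (eventually_sq_add_sq_ne_zero_right h).mono fun t ht =>
      (hasDerivAt_profile_left ht).deriv.trans (by ring)
  have hsecond := ((hasDerivAt_id' y).fun_mul
    (hasDerivAt_sq_add_sq_rpow_right (α - 1) h)).const_mul (2 * α * x)
  rw [pderiv2, Filter.EventuallyEq.deriv_eq hfirst, hsecond.deriv,
    rpow_sub_one_eq_rpow_sub_two_mul α h, show α - 1 - 1 = α - 2 by ring]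
  ring

theorem pderiv2_pderiv2_profile (h : x ^ 2 + y ^ 2 ≠ 0) :
    pderiv2 (pderiv2 (profile α)) x y =
      2 * α * y * (x ^ 2 + y ^ 2) ^ (α - 2) * (3 * (x ^ 2 + y ^ 2) + 2 * (α - 1) * y ^ 2) := by
  have hfirst : ∀ᶠ t in 𝓝 y, pderiv2 (profile α) x t =
      (x ^ 2 + t ^ 2) ^ α + 2 * α * (t ^ 2 * (x ^ 2 + t ^ 2) ^ (α - 1)) :=
    (eventually_sq_add_sq_ne_zero_right h).mono fun t ht =>
      (hasDerivAt_profile_right ht).deriv.trans (by ring)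
  have hsecond := (hasDerivAt_sq_add_sq_rpow_right α h).fun_add
    (((hasDerivAt_pow 2 y).fun_mul (hasDerivAt_sq_add_sq_rpow_right (α - 1) h)).const_mul (2 * α))
  rw [pderiv2, Filter.EventuallyEq.deriv_eq hfirst, hsecond.deriv,
    rpow_sub_one_eq_rpow_sub_two_mul α h, show α - 1 - 1 = α - 2 by ring]
  ring

end Derivatives

theorem abs_two_mul_mul_rpow_mul_le {α ρ v w : ℝ} (hα : 0 ≤ α) (hρ : 0 < ρ) (hv : |v| ≤ √ρ)
    (hw : |w| ≤ 3 * ρ) : |2 * α * v * ρ ^ (α - 2) * w| ≤ 6 * α * ρ ^ (α - 1 / 2) := by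
  have hsplit : ρ ^ (α - 1 / 2) = ρ ^ (α - 2) * ρ * √ρ := by
    rw [sqrt_eq_rpow, ← rpow_add_one hρ.ne', ← rpow_add hρ]
    ring_nf
  calc |2 * α * v * ρ ^ (α - 2) * w| = 2 * α * ρ ^ (α - 2) * (|v| * |w|) := by
        rw [abs_mul, abs_mul, abs_mul, abs_of_nonneg (by positivity : 0 ≤ 2 * α),
          abs_of_pos (rpow_pos_of_pos hρ _)]
        ring
    _ ≤ 2 * α * ρ ^ (α - 2) * (√ρ * (3 * ρ)) := by gcongr
    _ = 6 * α * ρ ^ (α - 1 / 2) := by rw [hsplit]; ring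

theorem abs_second_partials_profile_le {α x y : ℝ} (hα : 0 ≤ α) (hα1 : α ≤ 1)
    (h : 0 < x ^ 2 + y ^ 2) :
    |pderiv1 (pderiv1 (profile α)) x y| ≤ 6 * α * (x ^ 2 + y ^ 2) ^ (α - 1 / 2) ∧
    |pderiv1 (pderiv2 (profile α)) x y| ≤ 6 * α * (x ^ 2 + y ^ 2) ^ (α - 1 / 2) ∧
    |pderiv2 (pderiv1 (profile α)) x y| ≤ 6 * α * (x ^ 2 + y ^ 2) ^ (α - 1 / 2) ∧
    |pderiv2 (pderiv2 (profile α)) x y| ≤ 6 * α * (x ^ 2 + y ^ 2) ^ (α - 1 / 2) := by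
  have hx : |x| ≤ √(x ^ 2 + y ^ 2) := abs_le_sqrt (le_add_of_nonneg_right (sq_nonneg y))
  have hy : |y| ≤ √(x ^ 2 + y ^ 2) := abs_le_sqrt (le_add_of_nonneg_left (sq_nonneg x))
  have hwx : |x ^ 2 + y ^ 2 + 2 * (α - 1) * x ^ 2| ≤ 3 * (x ^ 2 + y ^ 2) :=
    abs_le.mpr ⟨by nlinarith [sq_nonneg x, sq_nonneg y], by nlinarith [sq_nonneg x, sq_nonneg y]⟩
  have hwy : |x ^ 2 + y ^ 2 + 2 * (α - 1) * y ^ 2| ≤ 3 * (x ^ 2 + y ^ 2) :=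
    abs_le.mpr ⟨by nlinarith [sq_nonneg x, sq_nonneg y], by nlinarith [sq_nonneg x, sq_nonneg y]⟩
  have hwy' : |3 * (x ^ 2 + y ^ 2) + 2 * (α - 1) * y ^ 2| ≤ 3 * (x ^ 2 + y ^ 2) :=
    abs_le.mpr ⟨by nlinarith [sq_nonneg x, sq_nonneg y], by nlinarith [sq_nonneg x, sq_nonneg y]⟩
  rw [pderiv1_pderiv1_profile h.ne', pderiv1_pderiv2_profile h.ne', pderiv2_pderiv1_profile h.ne',
    pderiv2_pderiv2_profile h.ne']
  exact ⟨abs_two_mul_mul_rpow_mul_le hα h hy hwx, abs_two_mul_mul_rpow_mul_le hα h hx hwy,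
    abs_two_mul_mul_rpow_mul_le hα h hx hwy, abs_two_mul_mul_rpow_mul_le hα h hy hwy'⟩

theorem second_partials_bound_general (α r₀ : ℝ) (hα : 0 < α) (hα1 : α < 1) (hr₀ : 0 < r₀)
    (f : ℝ → ℝ → ℝ)
    (hf : ∀ x y : ℝ, f x y = y * ((x ^ 2 + y ^ 2) / r₀) ^ α)
    (s₁ s₂ : ℝ) (hpos : 0 < s₁ ^ 2 + s₂ ^ 2) :
    |pderiv1 (pderiv1 f) s₁ s₂| ≤ 6 * α / r₀ ^ α * (s₁ ^ 2 + s₂ ^ 2) ^ (α - 1 / 2) ∧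
    |pderiv1 (pderiv2 f) s₁ s₂| ≤ 6 * α / r₀ ^ α * (s₁ ^ 2 + s₂ ^ 2) ^ (α - 1 / 2) ∧
    |pderiv2 (pderiv1 f) s₁ s₂| ≤ 6 * α / r₀ ^ α * (s₁ ^ 2 + s₂ ^ 2) ^ (α - 1 / 2) ∧
    |pderiv2 (pderiv2 f) s₁ s₂| ≤ 6 * α / r₀ ^ α * (s₁ ^ 2 + s₂ ^ 2) ^ (α - 1 / 2) := by
  have hf_eq : f = fun x y => (r₀ ^ α)⁻¹ * profile α x y := by
    funext x y
    rw [hf, profile, div_rpow (by positivity) hr₀.le]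
    ring
  have hscale : ∀ d : ℝ, |d| ≤ 6 * α * (s₁ ^ 2 + s₂ ^ 2) ^ (α - 1 / 2) →
      |(r₀ ^ α)⁻¹ * d| ≤ 6 * α / r₀ ^ α * (s₁ ^ 2 + s₂ ^ 2) ^ (α - 1 / 2) := fun d hd => by
    rw [abs_mul, abs_inv, abs_of_pos (rpow_pos_of_pos hr₀ α), div_eq_inv_mul, mul_assoc]
    gcongr
  obtain ⟨h11, h12, h21, h22⟩ := abs_second_partials_profile_le hα.le hα1.le hpos
  subst hf_eq
  simp only [pderiv1_const_mul, pderiv2_const_mul]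
  exact ⟨hscale _ h11, hscale _ h12, hscale _ h21, hscale _ h22⟩

/-- Lemma 5.1 (Lemma `var-eq1`) of "Thermodynamics of the Katok Map":
for `f(s₁,s₂) = s₂ ((s₁²+s₂²)/r₀)^α`, all second-order partial derivatives of `f`
at a point with `0 < s₁²+s₂² ≤ r₀/2` are bounded by `(6α/r₀^α) (s₁²+s₂²)^(α-1/2)`. -/
theorem second_partials_bound (α r₀ : ℝ) (hα : 0 < α) (hα1 : α < 1) (hr₀ : 0 < r₀)
    (f : ℝ → ℝ → ℝ)
    (hf : ∀ x y : ℝ, f x y = y * ((x ^ 2 + y ^ 2) / r₀) ^ α)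
    (s₁ s₂ : ℝ) (hpos : 0 < s₁ ^ 2 + s₂ ^ 2) (hle : s₁ ^ 2 + s₂ ^ 2 ≤ r₀ / 2) :
    |pderiv1 (pderiv1 f) s₁ s₂| ≤ 6 * α / r₀ ^ α * (s₁ ^ 2 + s₂ ^ 2) ^ (α - 1 / 2) ∧
    |pderiv1 (pderiv2 f) s₁ s₂| ≤ 6 * α / r₀ ^ α * (s₁ ^ 2 + s₂ ^ 2) ^ (α - 1 / 2) ∧
    |pderiv2 (pderiv1 f) s₁ s₂| ≤ 6 * α / r₀ ^ α * (s₁ ^ 2 + s₂ ^ 2) ^ (α - 1 / 2) ∧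
    |pderiv2 (pderiv2 f) s₁ s₂| ≤ 6 * α / r₀ ^ α * (s₁ ^ 2 + s₂ ^ 2) ^ (α - 1 / 2) :=
  second_partials_bound_general α r₀ hα hα1 hr₀ f hf s₁ s₂ hpos
end

section
/- Let s₁,s₂:[0,T]→ℝ be a solution of the explicit slow-down system with s₁(t)>0 and s₂(t)>0 for all t∈[0,T]. Then: (i) for all 0≤a≤t≤T, s₂(t) ≤ s₂(a)·(1 + C₁·s₂(a)^{2α}·(t−a))^{−1/(2α)}; (ii) for all 0≤a≤t≤T, 1 − C₁·s₁(a)^{2α}·(t−a) > 0 and s₁(t) ≥ s₁(a)·(1 − C₁·s₁(a)^{2α}·(t−a))^{−1/(2α)}; (iii) for all 0≤t≤b≤T, s₁(t) ≤ s₁(b)·(1 + C₁·s₁(b)^{2α}·(b−t))^{−1/(2α)}. -/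
open Set

private lemma rpow_inv_one (x p : ℝ) (hx : 0 < x) (hp : p ≠ 0) :
    (x ^ (-p)) ^ (-(1/p)) = x := by
  rw [← Real.rpow_mul hx.le, show (-p) * (-(1/p)) = 1 by field_simp, Real.rpow_one]

private lemma rpow_bound_le (p D x y : ℝ) (hp : 0 < p) (hx : 0 < x) (hy : 0 < y) (hD : 0 ≤ D)
    (h : y ^ (-p) + D ≤ x ^ (-p)) : x ≤ y * (1 + D * y ^ p) ^ (-(1/p)) := by
  have hyp : (0:ℝ) < y ^ p := Real.rpow_pos_of_pos hy p
  have hyn : (0:ℝ) < y ^ (-p) := Real.rpow_pos_of_pos hy _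
  have hB : (0:ℝ) < 1 + D * y ^ p := by positivity
  have h1 : y ^ (-p) * y ^ p = 1 := by rw [← Real.rpow_add hy]; simp
  have key : y ^ (-p) * (1 + D * y ^ p) ≤ x ^ (-p) := by
    have : y ^ (-p) * (1 + D * y ^ p) = y ^ (-p) + D * (y ^ (-p) * y ^ p) := by ring
    rw [this, h1, mul_one]; exact h
  have h2 := Real.rpow_le_rpow_of_nonpos (mul_pos hyn hB) key
    (neg_nonpos.mpr (one_div_pos.mpr hp).le)
  rwa [Real.mul_rpow hyn.le hB.le, rpow_inv_one x p hx hp.ne', rpow_inv_one y p hy hp.ne']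
    at h2

private lemma rpow_bound_ge (p D x y : ℝ) (hp : 0 < p) (hx : 0 < x) (hy : 0 < y)
    (h : x ^ (-p) ≤ y ^ (-p) - D) :
    0 < 1 - D * y ^ p ∧ y * (1 - D * y ^ p) ^ (-(1/p)) ≤ x := by
  have hyp : (0:ℝ) < y ^ p := Real.rpow_pos_of_pos hy p
  have hyn : (0:ℝ) < y ^ (-p) := Real.rpow_pos_of_pos hy _
  have hxn : (0:ℝ) < x ^ (-p) := Real.rpow_pos_of_pos hx _
  have h1 : y ^ (-p) * y ^ p = 1 := by rw [← Real.rpow_add hy]; simp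
  have hyd : 0 < y ^ (-p) - D := lt_of_lt_of_le hxn h
  have hB : 0 < 1 - D * y ^ p := by
    have e : 1 - D * y ^ p = y ^ p * (y ^ (-p) - D) := by
      rw [mul_sub, mul_comm (y^p) (y^(-p)), h1]; ring
    rw [e]; exact mul_pos hyp hyd
  refine ⟨hB, ?_⟩
  have key : x ^ (-p) ≤ y ^ (-p) * (1 - D * y ^ p) := by
    have : y ^ (-p) * (1 - D * y ^ p) = y ^ (-p) - D * (y ^ (-p) * y ^ p) := by ring
    rw [this, h1, mul_one]; exact h
  have h2 := Real.rpow_le_rpow_of_nonpos hxn key (neg_nonpos.mpr (one_div_pos.mpr hp).le)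
  rwa [Real.mul_rpow hyn.le hB.le, rpow_inv_one x p hx hp.ne', rpow_inv_one y p hy hp.ne']
    at h2

/-- Lemma `s2estimate` (parts 2, 3, 5) of "Thermodynamics of the Katok Map":
bounds on positive solutions of the explicit slow-down system
`ds₁/dt = (log λ / r₀^α) s₁ (s₁²+s₂²)^α`, `ds₂/dt = -(log λ / r₀^α) s₂ (s₁²+s₂²)^α`. -/
theorem slowdown_solution_bounds
    (lam α r₀ C₁ T : ℝ) (hlam : 1 < lam) (hα : 0 < α) (hα1 : α < 1)
    (hr₀ : 0 < r₀) (hr₀1 : r₀ < 1)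
    (hC₁ : C₁ = 2 * α * Real.log lam / r₀ ^ α)
    (hT : 0 ≤ T)
    (s₁ s₂ : ℝ → ℝ)
    (hs₁ : ∀ t ∈ Icc (0:ℝ) T,
      HasDerivAt s₁ ((Real.log lam / r₀ ^ α) * s₁ t * (s₁ t ^ 2 + s₂ t ^ 2) ^ α) t)
    (hs₂ : ∀ t ∈ Icc (0:ℝ) T,
      HasDerivAt s₂ (-((Real.log lam / r₀ ^ α) * s₂ t * (s₁ t ^ 2 + s₂ t ^ 2) ^ α)) t)
    (hpos₁ : ∀ t ∈ Icc (0:ℝ) T, 0 < s₁ t)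
    (hpos₂ : ∀ t ∈ Icc (0:ℝ) T, 0 < s₂ t) :
    (∀ a t : ℝ, 0 ≤ a → a ≤ t → t ≤ T →
      s₂ t ≤ s₂ a * (1 + C₁ * s₂ a ^ (2 * α) * (t - a)) ^ (-(1 / (2 * α)))) ∧
    (∀ a t : ℝ, 0 ≤ a → a ≤ t → t ≤ T →
      0 < 1 - C₁ * s₁ a ^ (2 * α) * (t - a) ∧
      s₁ t ≥ s₁ a * (1 - C₁ * s₁ a ^ (2 * α) * (t - a)) ^ (-(1 / (2 * α)))) ∧
    (∀ t b : ℝ, 0 ≤ t → t ≤ b → b ≤ T →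
      s₁ t ≤ s₁ b * (1 + C₁ * s₁ b ^ (2 * α) * (b - t)) ^ (-(1 / (2 * α)))) := by
  set k : ℝ := Real.log lam / r₀ ^ α with hk_def
  have hlog : 0 < Real.log lam := Real.log_pos hlam
  have hr₀α : (0:ℝ) < r₀ ^ α := Real.rpow_pos_of_pos hr₀ α
  have hk : 0 < k := div_pos hlog hr₀α
  have hC₁' : C₁ = 2 * α * k := by rw [hC₁, hk_def]; ring
  have hC₁pos : 0 < C₁ := by rw [hC₁']; positivity
  have hp : 0 < 2 * α := by linarith
  -- key pointwise inequality
  have key : ∀ x Q : ℝ, 0 < x → x ^ 2 ≤ Q → 1 ≤ Q ^ α * x ^ (-(2*α)) := by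
    intro x Q hx hQ
    have h1 : x ^ (2*α) ≤ Q ^ α := by
      have e : (x ^ 2 : ℝ) ^ α = x ^ (2*α) := by
        rw [← Real.rpow_natCast x 2, ← Real.rpow_mul hx.le]; norm_num
      rw [← e]; exact Real.rpow_le_rpow (by positivity) hQ hα.le
    have h2 : x ^ (2*α) * x ^ (-(2*α)) = 1 := by rw [← Real.rpow_add hx]; simp
    have hxneg : (0:ℝ) < x ^ (-(2*α)) := Real.rpow_pos_of_pos hx _
    calc (1:ℝ) = x ^ (2*α) * x ^ (-(2*α)) := h2.symm
    _ ≤ Q ^ α * x ^ (-(2*α)) := mul_le_mul_of_nonneg_right h1 hxneg.le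
  have rpow_shift : ∀ x : ℝ, 0 < x → x * x ^ (-(2*α) - 1) = x ^ (-(2*α)) := by
    intro x hx
    rw [show x * x ^ (-(2*α)-1) = x ^ (1:ℝ) * x ^ (-(2*α)-1) by rw [Real.rpow_one],
      ← Real.rpow_add hx]
    norm_num
  -- F₁ = s₁^(-2α) + C₁ t is antitone on Icc 0 T
  have hdF₁ : ∀ t ∈ Icc (0:ℝ) T, HasDerivAt (fun t => s₁ t ^ (-(2*α)) + C₁ * t)
      ((k * s₁ t * (s₁ t ^ 2 + s₂ t ^ 2) ^ α) * (-(2*α)) * s₁ t ^ (-(2*α) - 1) + C₁ * 1) t := by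
    intro t ht
    exact ((hs₁ t ht).rpow_const (Or.inl (hpos₁ t ht).ne')).add
      ((hasDerivAt_id t).const_mul C₁)
  have hF₁le : ∀ t ∈ Icc (0:ℝ) T,
      (k * s₁ t * (s₁ t ^ 2 + s₂ t ^ 2) ^ α) * (-(2*α)) * s₁ t ^ (-(2*α) - 1) + C₁ * 1 ≤ 0 := by
    intro t ht
    have hx := hpos₁ t ht
    have e1 := rpow_shift (s₁ t) hx
    have hQ : 1 ≤ (s₁ t ^ 2 + s₂ t ^ 2) ^ α * s₁ t ^ (-(2*α)) :=
      key (s₁ t) _ hx (by nlinarith [sq_nonneg (s₂ t)])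
    have e2 : (k * s₁ t * (s₁ t ^ 2 + s₂ t ^ 2) ^ α) * (-(2*α)) * s₁ t ^ (-(2*α) - 1) + C₁ * 1
        = C₁ * (1 - (s₁ t ^ 2 + s₂ t ^ 2) ^ α * s₁ t ^ (-(2*α))) := by
      rw [hC₁']
      linear_combination (-(2*α) * k * (s₁ t ^ 2 + s₂ t ^ 2) ^ α) * e1
    rw [e2]
    nlinarith [hC₁pos]
  have hanti : AntitoneOn (fun t => s₁ t ^ (-(2*α)) + C₁ * t) (Icc (0:ℝ) T) := by
    apply antitoneOn_of_deriv_nonpos (convex_Icc 0 T)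
    · exact fun x hx => ((hdF₁ x hx).continuousAt).continuousWithinAt
    · intro x hx
      rw [interior_Icc] at hx
      exact ((hdF₁ x (Ioo_subset_Icc_self hx)).differentiableAt).differentiableWithinAt
    · intro x hx
      rw [interior_Icc] at hx
      have hx' := Ioo_subset_Icc_self hx
      rw [(hdF₁ x hx').deriv]
      exact hF₁le x hx'
  -- F₂ = s₂^(-2α) - C₁ t is monotone on Icc 0 T
  have hdF₂ : ∀ t ∈ Icc (0:ℝ) T, HasDerivAt (fun t => s₂ t ^ (-(2*α)) - C₁ * t)
      ((-(k * s₂ t * (s₁ t ^ 2 + s₂ t ^ 2) ^ α)) * (-(2*α)) * s₂ t ^ (-(2*α) - 1) - C₁ * 1) t := by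
    intro t ht
    exact ((hs₂ t ht).rpow_const (Or.inl (hpos₂ t ht).ne')).sub
      ((hasDerivAt_id t).const_mul C₁)
  have hF₂ge : ∀ t ∈ Icc (0:ℝ) T,
      0 ≤ (-(k * s₂ t * (s₁ t ^ 2 + s₂ t ^ 2) ^ α)) * (-(2*α)) * s₂ t ^ (-(2*α) - 1) - C₁ * 1 := by
    intro t ht
    have hx := hpos₂ t ht
    have e1 := rpow_shift (s₂ t) hx
    have hQ : 1 ≤ (s₁ t ^ 2 + s₂ t ^ 2) ^ α * s₂ t ^ (-(2*α)) :=
      key (s₂ t) _ hx (by nlinarith [sq_nonneg (s₁ t)])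
    have e2 : (-(k * s₂ t * (s₁ t ^ 2 + s₂ t ^ 2) ^ α)) * (-(2*α)) * s₂ t ^ (-(2*α) - 1) - C₁ * 1
        = C₁ * ((s₁ t ^ 2 + s₂ t ^ 2) ^ α * s₂ t ^ (-(2*α)) - 1) := by
      rw [hC₁']
      linear_combination ((2*α) * k * (s₁ t ^ 2 + s₂ t ^ 2) ^ α) * e1
    rw [e2]
    nlinarith [hC₁pos]
  have hmono : MonotoneOn (fun t => s₂ t ^ (-(2*α)) - C₁ * t) (Icc (0:ℝ) T) := by
    apply monotoneOn_of_deriv_nonneg (convex_Icc 0 T)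
    · exact fun x hx => ((hdF₂ x hx).continuousAt).continuousWithinAt
    · intro x hx
      rw [interior_Icc] at hx
      exact ((hdF₂ x (Ioo_subset_Icc_self hx)).differentiableAt).differentiableWithinAt
    · intro x hx
      rw [interior_Icc] at hx
      have hx' := Ioo_subset_Icc_self hx
      rw [(hdF₂ x hx').deriv]
      exact hF₂ge x hx'
  have half : ∀ q : ℝ, -(1/(2*α)) = -(1/(2*α)) := fun _ => rfl
  refine ⟨?_, ?_, ?_⟩
  · -- part (i)
    intro a t ha hat htT
    have haI : a ∈ Icc (0:ℝ) T := ⟨ha, le_trans hat htT⟩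
    have htI : t ∈ Icc (0:ℝ) T := ⟨le_trans ha hat, htT⟩
    have h := hmono haI htI hat
    simp only at h
    have h' : s₂ a ^ (-(2*α)) + C₁ * (t - a) ≤ s₂ t ^ (-(2*α)) := by linarith
    have := rpow_bound_le (2*α) (C₁ * (t - a)) (s₂ t) (s₂ a) hp (hpos₂ t htI) (hpos₂ a haI)
      (by nlinarith [hC₁pos]) h'
    rwa [show C₁ * (t - a) * s₂ a ^ (2*α) = C₁ * s₂ a ^ (2*α) * (t - a) by ring] at this
  · -- part (ii)
    intro a t ha hat htT
    have haI : a ∈ Icc (0:ℝ) T := ⟨ha, le_trans hat htT⟩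
    have htI : t ∈ Icc (0:ℝ) T := ⟨le_trans ha hat, htT⟩
    have h := hanti haI htI hat
    simp only at h
    have h' : s₁ t ^ (-(2*α)) ≤ s₁ a ^ (-(2*α)) - C₁ * (t - a) := by linarith
    have := rpow_bound_ge (2*α) (C₁ * (t - a)) (s₁ t) (s₁ a) hp (hpos₁ t htI) (hpos₁ a haI) h'
    rw [show C₁ * (t - a) * s₁ a ^ (2*α) = C₁ * s₁ a ^ (2*α) * (t - a) by ring] at this
    exact ⟨this.1, this.2⟩
  · -- part (iii)
    intro t b ht htb hbT
    have htI : t ∈ Icc (0:ℝ) T := ⟨ht, le_trans htb hbT⟩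
    have hbI : b ∈ Icc (0:ℝ) T := ⟨le_trans ht htb, hbT⟩
    have h := hanti htI hbI htb
    simp only at h
    have h' : s₁ b ^ (-(2*α)) + C₁ * (b - t) ≤ s₁ t ^ (-(2*α)) := by linarith
    have := rpow_bound_le (2*α) (C₁ * (b - t)) (s₁ t) (s₁ b) hp (hpos₁ t htI) (hpos₁ b hbI)
      (by nlinarith [hC₁pos]) h'
    rwa [show C₁ * (b - t) * s₁ b ^ (2*α) = C₁ * s₁ b ^ (2*α) * (b - t) by ring] at this
end

section
/- Let s=(s₁,s₂) and s̃=(s̃₁,s̃₂) be two solutions of the explicit slow-down system on [0,T] with s₁(t)>0 and s₂(t)>0 for all t, let T₁∈[0,T] be such that s₁≤s₂ on [0,T₁] and s₂≤s₁ on [T₁,T], and set Δsᵢ(t)=s̃ᵢ(t)−sᵢ(t). Let 0<μ<1 and assume: (1) Δs₂(t)>0 and |Δs₁(t)| ≤ μ·Δs₂(t) for all t∈[0,T]; (2) Δs₂(0)/s₂(0) < (1−μ)/72. Then ‖Δs(T)‖ ≤ √(1+μ²)·(s₁(T)/s₂(0))·‖Δs(0)‖, where ‖Δs(t)‖ denotes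 the Euclidean norm of the vector (Δs₁(t),Δs₂(t)). -/
open Set

private lemma slowdown_decay (f f' : ℝ → ℝ) (a b : ℝ) (hab : a ≤ b)
    (hf : ∀ t ∈ Icc a b, HasDerivAt f (f' t) t)
    (hf0 : ∀ t ∈ Icc a b, f' t ≤ 0) : f b ≤ f a := by
  have hc : ContinuousOn f (Icc a b) := fun t ht =>
    (hf t ht).continuousAt.continuousWithinAt
  have hanti : AntitoneOn f (Icc a b) := by
    apply antitoneOn_of_deriv_nonpos (convex_Icc a b) hc
    · intro t ht
      rw [interior_Icc] at ht
      exact (hf t (Ioo_subset_Icc_self ht)).differentiableAt.differentiableWithinAt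
    · intro t ht
      rw [interior_Icc] at ht
      rw [(hf t (Ioo_subset_Icc_self ht)).deriv]
      exact hf0 t (Ioo_subset_Icc_self ht)
  exact hanti (left_mem_Icc.2 hab) (right_mem_Icc.2 hab) hab

private lemma slowdown_const (f f' : ℝ → ℝ) (a b : ℝ) (hab : a ≤ b)
    (hf : ∀ t ∈ Icc a b, HasDerivAt f (f' t) t)
    (hf0 : ∀ t ∈ Icc a b, f' t = 0) : f b = f a := by
  have h1 := slowdown_decay f f' a b hab hf (fun t ht => (hf0 t ht).le)
  have h2 := slowdown_decay (fun x => -f x) (fun x => -f' x) a b hab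
    (fun t ht => (hf t ht).neg) (fun t ht => by simp only [neg_nonpos]; rw [hf0 t ht])
  simp only [neg_le_neg_iff] at h2
  linarith

private lemma slowdown_bern (x p : ℝ) (hx : 0 ≤ x) (hp0 : 0 ≤ p) (hp1 : p ≤ 1) :
    x ^ p ≤ 1 + p * (x - 1) := by
  have h := rpow_one_add_le_one_add_mul_self (s := x - 1) (by linarith) hp0 hp1
  have hx' : 1 + (x - 1) = x := by ring
  rwa [hx'] at h

private lemma slowdown_tangent (A B p : ℝ) (hA : 0 < A) (hB : 0 ≤ B)
    (hp0 : 0 ≤ p) (hp1 : p ≤ 1) :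
    A * B ^ p ≤ A * A ^ p + p * A ^ p * (B - A) := by
  have h := slowdown_bern (B / A) p (div_nonneg hB hA.le) hp0 hp1
  have hApos : 0 < A ^ p := Real.rpow_pos_of_pos hA p
  rw [Real.div_rpow hB hA.le] at h
  have h2 : B ^ p ≤ (1 + p * (B / A - 1)) * A ^ p := (div_le_iff₀ hApos).1 h
  have h3 : A * B ^ p ≤ A * ((1 + p * (B / A - 1)) * A ^ p) :=
    mul_le_mul_of_nonneg_left h2 hA.le
  calc A * B ^ p ≤ A * ((1 + p * (B / A - 1)) * A ^ p) := h3
    _ = A * A ^ p + p * A ^ p * (B - A) := by field_simp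

private lemma slowdown_key1 (μ p q P Q : ℝ) (hμ0 : 0 < μ) (hμ1 : μ < 1)
    (hp : 0 < p) (hq : 0 < q) (hpq : p ≤ q) (hd : q < Q)
    (ha : |P - p| ≤ μ * (Q - q)) :
    p ^ 2 + q ^ 2 ≤ P ^ 2 + Q ^ 2 := by
  obtain ⟨ha1, ha2⟩ := abs_le.1 ha
  nlinarith [sq_nonneg (P - p), sq_nonneg (Q - q), mul_pos (sub_pos.2 hd) hq,
    mul_pos hp hq, mul_pos (mul_pos hμ0 (sub_pos.2 hd)) hp,
    mul_nonneg hp.le (sub_nonneg.2 ha1)]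

private lemma slowdown_key2poly (α μ p q P Q : ℝ) (hα0 : 0 < α) (hα1 : α < 1)
    (hμ0 : 0 < μ) (hμ1 : μ < 1) (hp : 0 < p) (hq : 0 < q) (hd : q < Q)
    (ha : |P - p| ≤ μ * (Q - q)) :
    α * q * ((p ^ 2 + q ^ 2) - (P ^ 2 + Q ^ 2)) ≤ 2 * (Q - q) * (P ^ 2 + Q ^ 2) := by
  obtain ⟨ha1, ha2⟩ := abs_le.1 ha
  have hQ : 0 < Q := hq.trans hd
  have hdpos : 0 < Q - q := sub_pos.2 hd
  have hA : (0:ℝ) < P ^ 2 + Q ^ 2 := by positivity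
  have ht6 : 0 ≤ α * q * (Q - q) * (Q + q) :=
    mul_nonneg (mul_nonneg (mul_nonneg hα0.le hq.le) hdpos.le) (by linarith)
  rcases le_total (P + p) 0 with hPp | hPp
  · -- P + p ≤ 0, in particular P < 0
    have hPneg : P < 0 := by linarith
    have ht1 : 0 ≤ α * q * (-(P + p)) * (μ * (Q - q) - (P - p)) :=
      mul_nonneg (mul_nonneg (mul_nonneg hα0.le hq.le) (neg_nonneg.2 hPp))
        (by linarith)
    have ht2 : 0 ≤ α * μ * (Q - q) * q * p :=
      mul_nonneg (mul_nonneg (mul_nonneg (mul_nonneg hα0.le hμ0.le) hdpos.le) hq.le) hp.le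
    have ht3 : 0 ≤ α * μ * (Q - q) * (Q - q) * (-P) :=
      mul_nonneg (mul_nonneg (mul_nonneg (mul_nonneg hα0.le hμ0.le) hdpos.le) hdpos.le)
        (by linarith)
    have ht4 : 0 ≤ α * μ * (Q - q) * (P + Q) ^ 2 :=
      mul_nonneg (mul_nonneg (mul_nonneg hα0.le hμ0.le) hdpos.le) (sq_nonneg _)
    have ht5 : 0 ≤ (Q - q) * (P ^ 2 + Q ^ 2) * (4 - α * μ) := by
      have : α * μ ≤ 1 := by nlinarith
      exact mul_nonneg (mul_nonneg hdpos.le hA.le) (by linarith)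
    linarith [ht1, ht2, ht3, ht4, ht5, ht6]
  · -- 0 ≤ P + p
    have ht1 : 0 ≤ α * q * (μ * (Q - q) + (P - p)) * (P + p) :=
      mul_nonneg (mul_nonneg (mul_nonneg hα0.le hq.le) (by linarith)) hPp
    have ht2 : 0 ≤ α * μ * (Q - q) * q * (μ * (Q - q) - (p - P)) :=
      mul_nonneg (mul_nonneg (mul_nonneg (mul_nonneg hα0.le hμ0.le) hdpos.le) hq.le)
        (by linarith)
    rcases le_total (2 * P + μ * (Q - q)) 0 with h2P | h2P
    · have ht3 : 0 ≤ α * μ * (Q - q) * q * (-(2 * P + μ * (Q - q))) :=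
        mul_nonneg (mul_nonneg (mul_nonneg (mul_nonneg hα0.le hμ0.le) hdpos.le) hq.le)
          (neg_nonneg.2 h2P)
      linarith [ht1, ht2, ht3, ht6, mul_nonneg hdpos.le hA.le]
    · have ht3 : 0 ≤ α * μ * (Q - q) * (Q - q) * (2 * P + μ * (Q - q)) :=
        mul_nonneg (mul_nonneg (mul_nonneg (mul_nonneg hα0.le hμ0.le) hdpos.le) hdpos.le)
          h2P
      have htpq : 0 ≤ α * μ * (Q - q) * (P - Q) ^ 2 :=
        mul_nonneg (mul_nonneg (mul_nonneg hα0.le hμ0.le) hdpos.le) (sq_nonneg _)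
      have ht4 : 0 ≤ α * μ ^ 2 * (Q - q) * Q * q := by positivity
      have ht5 : 0 ≤ (Q - q) * (P ^ 2 + Q ^ 2) * (2 - α * μ - α * μ ^ 2) := by
        have h1 : α * μ ≤ 1 := by nlinarith
        have h2 : α * μ ^ 2 ≤ 1 := by nlinarith [sq_nonneg μ, mul_pos hμ0 hμ0]
        exact mul_nonneg (mul_nonneg hdpos.le hA.le) (by linarith)
      have ht7 : 0 ≤ α * μ ^ 2 * (Q - q) * P ^ 2 := by positivity
      linarith [ht1, ht2, ht3, htpq, ht4, ht5, ht6, ht7]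

private lemma slowdown_key2 (α μ p q P Q : ℝ) (hα0 : 0 < α) (hα1 : α < 1)
    (hμ0 : 0 < μ) (hμ1 : μ < 1) (hp : 0 < p) (hq : 0 < q) (hd : q < Q)
    (ha : |P - p| ≤ μ * (Q - q)) :
    q * ((p ^ 2 + q ^ 2) ^ α - (P ^ 2 + Q ^ 2) ^ α)
      ≤ (Q - q) * ((p ^ 2 + q ^ 2) ^ α + (P ^ 2 + Q ^ 2) ^ α) := by
  have hQ : 0 < Q := hq.trans hd
  have hA : (0:ℝ) < P ^ 2 + Q ^ 2 := by positivity
  have hB : (0:ℝ) < p ^ 2 + q ^ 2 := by positivity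
  have hΦA : 0 < (P ^ 2 + Q ^ 2) ^ α := Real.rpow_pos_of_pos hA α
  have hΦB : 0 < (p ^ 2 + q ^ 2) ^ α := Real.rpow_pos_of_pos hB α
  have hdpos : 0 < Q - q := sub_pos.2 hd
  rcases le_total (p ^ 2 + q ^ 2) (P ^ 2 + Q ^ 2) with hBA | hAB
  · have h := Real.rpow_le_rpow hB.le hBA hα0.le
    nlinarith [mul_nonneg hq.le (sub_nonneg.2 h), mul_pos hdpos (add_pos hΦB hΦA)]
  · have hΦle : (P ^ 2 + Q ^ 2) ^ α ≤ (p ^ 2 + q ^ 2) ^ α :=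
      Real.rpow_le_rpow hA.le hAB hα0.le
    have htan := slowdown_tangent (P ^ 2 + Q ^ 2) (p ^ 2 + q ^ 2) α hA hB.le hα0.le hα1.le
    have hpoly := slowdown_key2poly α μ p q P Q hα0 hα1 hμ0 hμ1 hp hq hd ha
    -- q * (B^α - A^α) * A ≤ q * (α * A^α * (B - A))
    have h1 : q * ((p ^ 2 + q ^ 2) ^ α - (P ^ 2 + Q ^ 2) ^ α) * (P ^ 2 + Q ^ 2)
        ≤ q * (α * (P ^ 2 + Q ^ 2) ^ α * ((p ^ 2 + q ^ 2) - (P ^ 2 + Q ^ 2))) := by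
      nlinarith [mul_le_mul_of_nonneg_left htan hq.le]
    have h2 : q * (α * (P ^ 2 + Q ^ 2) ^ α * ((p ^ 2 + q ^ 2) - (P ^ 2 + Q ^ 2)))
        ≤ 2 * (Q - q) * (P ^ 2 + Q ^ 2) * (P ^ 2 + Q ^ 2) ^ α := by
      calc q * (α * (P ^ 2 + Q ^ 2) ^ α * ((p ^ 2 + q ^ 2) - (P ^ 2 + Q ^ 2)))
          = (α * q * ((p ^ 2 + q ^ 2) - (P ^ 2 + Q ^ 2))) * (P ^ 2 + Q ^ 2) ^ α := by ring
        _ ≤ (2 * (Q - q) * (P ^ 2 + Q ^ 2)) * (P ^ 2 + Q ^ 2) ^ α :=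
            mul_le_mul_of_nonneg_right hpoly hΦA.le
        _ = 2 * (Q - q) * (P ^ 2 + Q ^ 2) * (P ^ 2 + Q ^ 2) ^ α := by ring
    have h3 : 2 * (Q - q) * (P ^ 2 + Q ^ 2) * (P ^ 2 + Q ^ 2) ^ α
        ≤ (Q - q) * ((p ^ 2 + q ^ 2) ^ α + (P ^ 2 + Q ^ 2) ^ α) * (P ^ 2 + Q ^ 2) := by
      nlinarith [mul_nonneg (mul_nonneg hdpos.le hA.le) (sub_nonneg.2 hΦle)]
    have h4 := le_trans h1 (le_trans h2 h3)
    exact le_of_mul_le_mul_right (by linarith) hA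

set_option maxHeartbeats 1000000 in
/-- Lemma `bad-delta` (last estimate) of "Thermodynamics of the Katok Map":
`‖Δs(T)‖ ≤ √(1+μ²) (s₁(T)/s₂(0)) ‖Δs(0)‖` for the difference of two positive
solutions of the explicit slow-down system. -/
theorem slowdown_difference_norm_bound
    (lam α r₀ C₁ T T₁ μ : ℝ) (hlam : 1 < lam) (hα : 0 < α) (hα1 : α < 1)
    (hr₀ : 0 < r₀) (hr₀1 : r₀ < 1)
    (hC₁ : C₁ = 2 * α * Real.log lam / r₀ ^ α)
    (hμ : 0 < μ) (hμ1 : μ < 1)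
    (hT₁mem : T₁ ∈ Icc (0:ℝ) T)
    (s₁ s₂ u₁ u₂ : ℝ → ℝ)
    (hs₁ : ∀ t ∈ Icc (0:ℝ) T,
      HasDerivAt s₁ ((Real.log lam / r₀ ^ α) * s₁ t * (s₁ t ^ 2 + s₂ t ^ 2) ^ α) t)
    (hs₂ : ∀ t ∈ Icc (0:ℝ) T,
      HasDerivAt s₂ (-((Real.log lam / r₀ ^ α) * s₂ t * (s₁ t ^ 2 + s₂ t ^ 2) ^ α)) t)
    (hu₁ : ∀ t ∈ Icc (0:ℝ) T,
      HasDerivAt u₁ ((Real.log lam / r₀ ^ α) * u₁ t * (u₁ t ^ 2 + u₂ t ^ 2) ^ α) t)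
    (hu₂ : ∀ t ∈ Icc (0:ℝ) T,
      HasDerivAt u₂ (-((Real.log lam / r₀ ^ α) * u₂ t * (u₁ t ^ 2 + u₂ t ^ 2) ^ α)) t)
    (hpos₁ : ∀ t ∈ Icc (0:ℝ) T, 0 < s₁ t)
    (hpos₂ : ∀ t ∈ Icc (0:ℝ) T, 0 < s₂ t)
    (hord₁ : ∀ t ∈ Icc (0:ℝ) T₁, s₁ t ≤ s₂ t)
    (hord₂ : ∀ t ∈ Icc T₁ T, s₂ t ≤ s₁ t)
    (hΔ : ∀ t ∈ Icc (0:ℝ) T, 0 < u₂ t - s₂ t ∧ |u₁ t - s₁ t| ≤ μ * (u₂ t - s₂ t))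
    (hinit : (u₂ 0 - s₂ 0) / s₂ 0 < (1 - μ) / 72) :
    Real.sqrt ((u₁ T - s₁ T) ^ 2 + (u₂ T - s₂ T) ^ 2) ≤
      Real.sqrt (1 + μ ^ 2) * (s₁ T / s₂ 0) *
        Real.sqrt ((u₁ 0 - s₁ 0) ^ 2 + (u₂ 0 - s₂ 0) ^ 2) := by
  obtain ⟨hT₁0, hT₁T⟩ := hT₁mem
  have hT0 : (0:ℝ) ≤ T := hT₁0.trans hT₁T
  set c : ℝ := Real.log lam / r₀ ^ α with hcdef
  have hcpos : 0 < c := div_pos (Real.log_pos hlam) (Real.rpow_pos_of_pos hr₀ α)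
  have hsub1 : Icc (0:ℝ) T₁ ⊆ Icc (0:ℝ) T := Icc_subset_Icc_right hT₁T
  have hsub2 : Icc T₁ T ⊆ Icc (0:ℝ) T := Icc_subset_Icc_left hT₁0
  have h0T : (0:ℝ) ∈ Icc (0:ℝ) T := ⟨le_refl 0, hT0⟩
  have hTT : T ∈ Icc (0:ℝ) T := ⟨hT0, le_refl T⟩
  have hT₁m : T₁ ∈ Icc (0:ℝ) T := ⟨hT₁0, hT₁T⟩
  -- conserved product s₁ s₂
  have hconst : ∀ t ∈ Icc (0:ℝ) T, s₁ t * s₂ t = s₁ 0 * s₂ 0 := by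
    intro t ht
    refine slowdown_const (fun x => s₁ x * s₂ x)
      (fun x => (c * s₁ x * (s₁ x ^ 2 + s₂ x ^ 2) ^ α) * s₂ x
        + s₁ x * -(c * s₂ x * (s₁ x ^ 2 + s₂ x ^ 2) ^ α)) 0 t ht.1 ?_ ?_
    · intro x hx
      have hx' : x ∈ Icc (0:ℝ) T := ⟨hx.1, hx.2.trans ht.2⟩
      exact (hs₁ x hx').mul (hs₂ x hx')
    · intro x _; ring
  -- equality at the switching time
  have heq : s₁ T₁ = s₂ T₁ :=
    le_antisymm (hord₁ T₁ ⟨hT₁0, le_refl T₁⟩) (hord₂ T₁ ⟨le_refl T₁, hT₁T⟩)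
  -- Region 1 : (u₂ - s₂) s₂ s₁² nonincreasing on [0, T₁]
  have hP : (u₂ T₁ - s₂ T₁) * s₂ T₁ * s₁ T₁ ^ 2
      ≤ (u₂ 0 - s₂ 0) * s₂ 0 * s₁ 0 ^ 2 := by
    refine slowdown_decay (fun x => (u₂ x - s₂ x) * s₂ x * s₁ x ^ 2)
      (fun x => ((-(c * u₂ x * (u₁ x ^ 2 + u₂ x ^ 2) ^ α)
            - -(c * s₂ x * (s₁ x ^ 2 + s₂ x ^ 2) ^ α)) * s₂ x
          + (u₂ x - s₂ x) * -(c * s₂ x * (s₁ x ^ 2 + s₂ x ^ 2) ^ α)) * s₁ x ^ 2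
        + (u₂ x - s₂ x) * s₂ x
            * (↑(2:ℕ) * s₁ x ^ 1 * (c * s₁ x * (s₁ x ^ 2 + s₂ x ^ 2) ^ α)))
      0 T₁ hT₁0 ?_ ?_
    · intro x hx
      have hx' := hsub1 hx
      exact (((hu₂ x hx').sub (hs₂ x hx')).mul (hs₂ x hx')).mul ((hs₁ x hx').pow 2)
    · intro x hx
      have hx' := hsub1 hx
      have hdx := (hΔ x hx').1
      have hax := (hΔ x hx').2
      have hs1x := hpos₁ x hx'
      have hs2x := hpos₂ x hx'
      have hu2x : 0 < u₂ x := by linarith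
      have hΦ : (s₁ x ^ 2 + s₂ x ^ 2) ^ α ≤ (u₁ x ^ 2 + u₂ x ^ 2) ^ α := by
        apply Real.rpow_le_rpow (by positivity) ?_ hα.le
        exact slowdown_key1 μ (s₁ x) (s₂ x) (u₁ x) (u₂ x) hμ hμ1 hs1x hs2x
          (hord₁ x hx) (by linarith) hax
      have hfac : 0 ≤ c * s₂ x * s₁ x ^ 2 * u₂ x :=
        mul_nonneg (mul_nonneg (mul_nonneg hcpos.le hs2x.le) (sq_nonneg _)) hu2x.le
      show ((-(c * u₂ x * (u₁ x ^ 2 + u₂ x ^ 2) ^ α)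
            - -(c * s₂ x * (s₁ x ^ 2 + s₂ x ^ 2) ^ α)) * s₂ x
          + (u₂ x - s₂ x) * -(c * s₂ x * (s₁ x ^ 2 + s₂ x ^ 2) ^ α)) * s₁ x ^ 2
        + (u₂ x - s₂ x) * s₂ x
            * (↑(2:ℕ) * s₁ x ^ 1 * (c * s₁ x * (s₁ x ^ 2 + s₂ x ^ 2) ^ α)) ≤ 0
      have hrw : ((-(c * u₂ x * (u₁ x ^ 2 + u₂ x ^ 2) ^ α)
            - -(c * s₂ x * (s₁ x ^ 2 + s₂ x ^ 2) ^ α)) * s₂ x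
          + (u₂ x - s₂ x) * -(c * s₂ x * (s₁ x ^ 2 + s₂ x ^ 2) ^ α)) * s₁ x ^ 2
        + (u₂ x - s₂ x) * s₂ x
            * (↑(2:ℕ) * s₁ x ^ 1 * (c * s₁ x * (s₁ x ^ 2 + s₂ x ^ 2) ^ α))
          = c * s₂ x * s₁ x ^ 2 * u₂ x
            * ((s₁ x ^ 2 + s₂ x ^ 2) ^ α - (u₁ x ^ 2 + u₂ x ^ 2) ^ α) := by
        push_cast
        ring
      rw [hrw]
      exact mul_nonpos_iff.2 (Or.inl ⟨hfac, sub_nonpos.2 hΦ⟩)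
  -- Region 2 : (u₂ - s₂) s₂ nonincreasing on [T₁, T]
  have hM : (u₂ T - s₂ T) * s₂ T ≤ (u₂ T₁ - s₂ T₁) * s₂ T₁ := by
    refine slowdown_decay (fun x => (u₂ x - s₂ x) * s₂ x)
      (fun x => (-(c * u₂ x * (u₁ x ^ 2 + u₂ x ^ 2) ^ α)
            - -(c * s₂ x * (s₁ x ^ 2 + s₂ x ^ 2) ^ α)) * s₂ x
          + (u₂ x - s₂ x) * -(c * s₂ x * (s₁ x ^ 2 + s₂ x ^ 2) ^ α))
      T₁ T hT₁T ?_ ?_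
    · intro x hx
      have hx' := hsub2 hx
      exact ((hu₂ x hx').sub (hs₂ x hx')).mul (hs₂ x hx')
    · intro x hx
      have hx' := hsub2 hx
      have hdx := (hΔ x hx').1
      have hax := (hΔ x hx').2
      have hs1x := hpos₁ x hx'
      have hs2x := hpos₂ x hx'
      have hkey := slowdown_key2 α μ (s₁ x) (s₂ x) (u₁ x) (u₂ x) hα hα1 hμ hμ1
        hs1x hs2x (by linarith) hax
      have hfac : 0 ≤ c * s₂ x := mul_nonneg hcpos.le hs2x.le
      show (-(c * u₂ x * (u₁ x ^ 2 + u₂ x ^ 2) ^ α)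
            - -(c * s₂ x * (s₁ x ^ 2 + s₂ x ^ 2) ^ α)) * s₂ x
          + (u₂ x - s₂ x) * -(c * s₂ x * (s₁ x ^ 2 + s₂ x ^ 2) ^ α) ≤ 0
      have hrw : (-(c * u₂ x * (u₁ x ^ 2 + u₂ x ^ 2) ^ α)
            - -(c * s₂ x * (s₁ x ^ 2 + s₂ x ^ 2) ^ α)) * s₂ x
          + (u₂ x - s₂ x) * -(c * s₂ x * (s₁ x ^ 2 + s₂ x ^ 2) ^ α)
          = c * s₂ x * (s₂ x * ((s₁ x ^ 2 + s₂ x ^ 2) ^ α - (u₁ x ^ 2 + u₂ x ^ 2) ^ α)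
              - (u₂ x - s₂ x) * ((s₁ x ^ 2 + s₂ x ^ 2) ^ α + (u₁ x ^ 2 + u₂ x ^ 2) ^ α)) := by
        ring
      rw [hrw]
      exact mul_nonpos_iff.2 (Or.inl ⟨hfac, sub_nonpos.2 hkey⟩)
  -- assembly
  have hs₁0 := hpos₁ 0 h0T
  have hs₂0 := hpos₂ 0 h0T
  have hs₁T := hpos₁ T hTT
  have hs₂T := hpos₂ T hTT
  have hs₂T₁ := hpos₂ T₁ hT₁m
  have hd0 := (hΔ 0 h0T).1
  have hdT := (hΔ T hTT).1
  have hcT₁ : s₁ T₁ * s₂ T₁ = s₁ 0 * s₂ 0 := hconst T₁ hT₁m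
  have hcT : s₁ T * s₂ T = s₁ 0 * s₂ 0 := hconst T hTT
  have h1 : s₁ T₁ ^ 2 = s₁ 0 * s₂ 0 := by
    rw [sq]; linear_combination hcT₁ + s₁ T₁ * heq
  rw [h1] at hP
  have hstep1 : (u₂ T₁ - s₂ T₁) * s₂ T₁ ≤ (u₂ 0 - s₂ 0) * s₁ 0 := by
    nlinarith [hP, mul_pos hs₁0 hs₂0]
  have h2 : (u₂ T - s₂ T) * s₂ T ≤ (u₂ 0 - s₂ 0) * s₁ 0 := hM.trans hstep1
  have hkeyfinal : (u₂ T - s₂ T) * s₂ 0 ≤ (u₂ 0 - s₂ 0) * s₁ T := by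
    nlinarith [mul_le_mul_of_nonneg_right h2 hs₂0.le, hcT, hs₂T]
  -- final norm computation
  have hμT := (hΔ T hTT).2
  have hsq : (u₁ T - s₁ T) ^ 2 ≤ μ ^ 2 * (u₂ T - s₂ T) ^ 2 := by
    nlinarith [pow_le_pow_left₀ (abs_nonneg (u₁ T - s₁ T)) hμT 2,
      sq_abs (u₁ T - s₁ T)]
  have hL : Real.sqrt ((u₁ T - s₁ T) ^ 2 + (u₂ T - s₂ T) ^ 2)
      ≤ Real.sqrt (1 + μ ^ 2) * (u₂ T - s₂ T) := by
    have h1' : (u₁ T - s₁ T) ^ 2 + (u₂ T - s₂ T) ^ 2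
        ≤ (1 + μ ^ 2) * (u₂ T - s₂ T) ^ 2 := by nlinarith
    calc Real.sqrt ((u₁ T - s₁ T) ^ 2 + (u₂ T - s₂ T) ^ 2)
        ≤ Real.sqrt ((1 + μ ^ 2) * (u₂ T - s₂ T) ^ 2) := Real.sqrt_le_sqrt h1'
      _ = Real.sqrt (1 + μ ^ 2) * Real.sqrt ((u₂ T - s₂ T) ^ 2) :=
          Real.sqrt_mul (by positivity) _
      _ = Real.sqrt (1 + μ ^ 2) * (u₂ T - s₂ T) := by rw [Real.sqrt_sq hdT.le]
  have h0 : (u₂ 0 - s₂ 0) ≤ Real.sqrt ((u₁ 0 - s₁ 0) ^ 2 + (u₂ 0 - s₂ 0) ^ 2) := by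
    have h := Real.sqrt_le_sqrt (show (u₂ 0 - s₂ 0) ^ 2
        ≤ (u₁ 0 - s₁ 0) ^ 2 + (u₂ 0 - s₂ 0) ^ 2 by nlinarith [sq_nonneg (u₁ 0 - s₁ 0)])
    rwa [Real.sqrt_sq hd0.le] at h
  have h2' : (u₂ T - s₂ T) ≤ s₁ T / s₂ 0 * (u₂ 0 - s₂ 0) := by
    have hrw : s₁ T / s₂ 0 * (u₂ 0 - s₂ 0) = s₁ T * (u₂ 0 - s₂ 0) / s₂ 0 := by ring
    rw [hrw, le_div_iff₀ hs₂0]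
    nlinarith [hkeyfinal]
  have hdivnn : 0 ≤ s₁ T / s₂ 0 := div_nonneg hs₁T.le hs₂0.le
  calc Real.sqrt ((u₁ T - s₁ T) ^ 2 + (u₂ T - s₂ T) ^ 2)
      ≤ Real.sqrt (1 + μ ^ 2) * (u₂ T - s₂ T) := hL
    _ ≤ Real.sqrt (1 + μ ^ 2) * (s₁ T / s₂ 0 * (u₂ 0 - s₂ 0)) :=
        mul_le_mul_of_nonneg_left h2' (Real.sqrt_nonneg _)
    _ ≤ Real.sqrt (1 + μ ^ 2)
        * (s₁ T / s₂ 0 * Real.sqrt ((u₁ 0 - s₁ 0) ^ 2 + (u₂ 0 - s₂ 0) ^ 2)) :=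
        mul_le_mul_of_nonneg_left (mul_le_mul_of_nonneg_left h0 hdivnn)
          (Real.sqrt_nonneg _)
    _ = Real.sqrt (1 + μ ^ 2) * (s₁ T / s₂ 0)
        * Real.sqrt ((u₁ 0 - s₁ 0) ^ 2 + (u₂ 0 - s₂ 0) ^ 2) := by ring
end

section
/- Let s=(s₁,s₂) and s̃=(s̃₁,s̃₂) be two solutions of the explicit slow-down system on [0,T] with s₁(t)>0 and s₂(t)>0 for all t, let T₁∈[0,T] be such that s₁≤s₂ on [0,T₁] and s₂≤s₁ on [T₁,T], and set Δsᵢ(t)=s̃ᵢ(t)−sᵢ(t). Let 0<μ<1 and assume: (1) Δs₂(t)>0 and |Δs₁(t)| ≤ μ·Δs₂(t) for all t∈[0,T]; (2) Δs₂(0)/s₂(0) < (1−μ)/72. Define κ(t) = Δs₂(t)/s₂(t). Then for every t∈[0,T₁] one has 0 < κ(t) < (1−μ)/72 and κ'(t) < −((1−μ)·α·log λ/(2r₀^α))·s₂(t)^{2α}·κ(t); in particular κ is strictly decreasing on [0,T₁]. -/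
/-!
With `c = log λ / r₀^α`, `ρ = s₁² + s₂²` and `ρ̃ = s̃₁² + s̃₂²`, the system gives
`κ' = -c (s̃₂ / s₂) (ρ̃^α - ρ^α)`. While `s₁ ≤ s₂`, the bound `|Δs₁| ≤ μ Δs₂` yields
`ρ̃ - ρ ≥ (1 - μ)(s̃₂² - s₂²) > 0`, so `κ` decreases on `[0, T₁]` and stays below
`κ(0) < (1 - μ)/72`. Smallness of `κ` keeps `ρ̃ ≤ 3 s₂²`, and the tangent-line bound for the
concave map `u ↦ u^α` at `ρ̃` turns `ρ̃ - ρ ≥ 2(1 - μ) s₂ Δs₂` into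
`ρ̃^α - ρ^α ≥ (2/3)(1 - μ) α s₂^{2α} κ`, which is the differential inequality.
-/

open Set

theorem strictAntiOn_of_hasDerivAt_neg {D : Set ℝ} (hD : Convex ℝ D) {f f' : ℝ → ℝ}
    (hf : ∀ x ∈ D, HasDerivAt f (f' x) x) (hf' : ∀ x ∈ D, f' x < 0) : StrictAntiOn f D :=
  strictAntiOn_of_hasDerivWithinAt_neg hD
    (fun x hx => (hf x hx).continuousAt.continuousWithinAt)
    (fun x hx => (hf x (interior_subset hx)).hasDerivWithinAt)
    (fun x hx => hf' x (interior_subset hx))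

theorem rpow_le_rpow_add_mul_sub {x y α : ℝ} (hx : 0 < x) (hy : 0 ≤ y)
    (hα0 : 0 ≤ α) (hα1 : α ≤ 1) :
    y ^ α ≤ x ^ α + α * x ^ (α - 1) * (y - x) := by
  have hxα : 0 < x ^ α := Real.rpow_pos_of_pos hx α
  have hbern : (y / x) ^ α ≤ 1 + α * (y / x - 1) := by
    simpa using rpow_one_add_le_one_add_mul_self (s := y / x - 1)
      (by linarith [div_nonneg hy hx.le]) hα0 hα1
  rw [Real.div_rpow hy hx.le, div_le_iff₀ hxα] at hbern
  rw [Real.rpow_sub_one hx.ne']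
  calc y ^ α ≤ (1 + α * (y / x - 1)) * x ^ α := hbern
    _ = x ^ α + α * (x ^ α / x) * (y - x) := by field_simp

theorem hasDerivAt_sub_div {s u : ℝ → ℝ} {c p q t : ℝ}
    (hs : HasDerivAt s (-(c * s t * p)) t) (hu : HasDerivAt u (-(c * u t * q)) t)
    (hst : s t ≠ 0) :
    HasDerivAt (fun τ => (u τ - s τ) / s τ) (-(c * (u t / s t) * (q - p))) t := by
  refine ((hu.sub hs).div hs hst).congr_deriv ?_
  simp only [Pi.sub_apply]
  field_simp
  ring

section

variable {α μ a x y z : ℝ}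

theorem abs_le_of_abs_sub_le_mul_sub (hμ : μ ≤ 1) (haz : a ≤ z)
    (hx : |x| ≤ a) (hyx : |y - x| ≤ μ * (z - a)) : |y| ≤ z := by
  have hμz : μ * (z - a) ≤ z - a := mul_le_of_le_one_left (sub_nonneg.2 haz) hμ
  linarith [abs_sub_abs_le_abs_sub y x]

theorem one_sub_mul_sq_sub_sq_le (hμ : μ ≤ 1) (haz : a ≤ z)
    (hx : |x| ≤ a) (hyx : |y - x| ≤ μ * (z - a)) :
    (1 - μ) * (z ^ 2 - a ^ 2) ≤ (y ^ 2 + z ^ 2) - (x ^ 2 + a ^ 2) := by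
  have hyx' : |y + x| ≤ z + a :=
    (abs_add_le y x).trans (add_le_add (abs_le_of_abs_sub_le_mul_sub hμ haz hx hyx) hx)
  have hprod : |y ^ 2 - x ^ 2| ≤ μ * (z - a) * (z + a) := by
    rw [show y ^ 2 - x ^ 2 = (y - x) * (y + x) by ring, abs_mul]
    exact mul_le_mul hyx hyx' (abs_nonneg _) ((abs_nonneg _).trans hyx)
  linear_combination neg_le_of_abs_le hprod

theorem rpow_sq_add_sq_lt_rpow_sq_add_sq (hα : 0 < α) (hμ : μ < 1)
    (haz : a < z) (hx : |x| ≤ a) (hyx : |y - x| ≤ μ * (z - a)) :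
    (x ^ 2 + a ^ 2) ^ α < (y ^ 2 + z ^ 2) ^ α := by
  have hgain := one_sub_mul_sq_sub_sq_le hμ.le haz.le hx hyx
  have ha : 0 ≤ a := (abs_nonneg x).trans hx
  refine Real.rpow_lt_rpow (by positivity) ?_ hα
  nlinarith [mul_pos (sub_pos.2 hμ) (sub_pos.2 haz)]

theorem two_div_three_mul_le_rpow_sq_add_sq_sub (hα0 : 0 ≤ α) (hα1 : α ≤ 1)
    (hμ : μ ≤ 1) (ha : 0 < a) (haz : a ≤ z) (hza : (z - a) / a ≤ 1 / 5)
    (hx : |x| ≤ a) (hyx : |y - x| ≤ μ * (z - a)) :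
    2 / 3 * ((1 - μ) * α * a ^ (2 * α) * ((z - a) / a))
      ≤ (y ^ 2 + z ^ 2) ^ α - (x ^ 2 + a ^ 2) ^ α := by
  set ρs := x ^ 2 + a ^ 2
  set ρu := y ^ 2 + z ^ 2
  have hgain := one_sub_mul_sq_sub_sq_le hμ haz hx hyx
  rw [div_le_iff₀ ha] at hza
  have hy := abs_le_of_abs_sub_le_mul_sub hμ haz hx hyx
  have hρu_ge : a ^ 2 ≤ ρu := by nlinarith [sq_nonneg y]
  have hρu_le : ρu ≤ 3 * a ^ 2 := by
    nlinarith [sq_le_sq' (neg_le_of_abs_le hy) (le_of_abs_le hy)]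
  have hρu : 0 < ρu := (by positivity : (0:ℝ) < a ^ 2).trans_le hρu_ge
  have htangent := rpow_le_rpow_add_mul_sub hρu (by positivity : 0 ≤ ρs) hα0 hα1
  have hslope : a ^ (2 * α) / (3 * a ^ 2) ≤ ρu ^ (α - 1) := by
    rw [Real.rpow_sub_one hρu.ne', Real.rpow_mul ha.le, Real.rpow_two]
    exact div_le_div₀ (by positivity) (Real.rpow_le_rpow (by positivity) hρu_ge hα0)
      hρu hρu_le
  calc 2 / 3 * ((1 - μ) * α * a ^ (2 * α) * ((z - a) / a))
      = α * (a ^ (2 * α) / (3 * a ^ 2)) * (2 * a * (1 - μ) * (z - a)) := by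
        field_simp
    _ ≤ α * ρu ^ (α - 1) * ((1 - μ) * (z ^ 2 - a ^ 2)) := by
        have hgain_lin : 2 * a * (1 - μ) * (z - a) ≤ (1 - μ) * (z ^ 2 - a ^ 2) := by
          nlinarith [mul_nonneg (sub_nonneg.2 hμ) (sub_nonneg.2 haz)]
        gcongr
    _ ≤ α * ρu ^ (α - 1) * (ρu - ρs) := by gcongr
    _ ≤ ρu ^ α - ρs ^ α := by linarith

theorem half_mul_lt_div_mul_rpow_sq_add_sq_sub (hα0 : 0 < α) (hα1 : α ≤ 1) (hμ : μ < 1)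
    (ha : 0 < a) (haz : a < z) (hza : (z - a) / a ≤ 1 / 5)
    (hx : |x| ≤ a) (hyx : |y - x| ≤ μ * (z - a)) :
    (1 - μ) * α / 2 * a ^ (2 * α) * ((z - a) / a)
      < z / a * ((y ^ 2 + z ^ 2) ^ α - (x ^ 2 + a ^ 2) ^ α) := by
  have hgain := two_div_three_mul_le_rpow_sq_add_sq_sub hα0.le hα1 hμ.le ha haz.le hza hx hyx
  have hX : 0 < (1 - μ) * α * a ^ (2 * α) * ((z - a) / a) :=
    mul_pos (mul_pos (mul_pos (sub_pos.2 hμ) hα0) (Real.rpow_pos_of_pos ha _))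
      (div_pos (sub_pos.2 haz) ha)
  have hratio : 1 ≤ z / a := (one_le_div ha).2 haz.le
  nlinarith

end

theorem slowdown_kappa_decreasing_general
    (lam α r₀ T T₁ μ : ℝ) (hlam : 1 < lam) (hα : 0 < α) (hα1 : α < 1)
    (hr₀ : 0 < r₀)
    (hμ : 0 < μ) (hμ1 : μ < 1)
    (hT₁mem : T₁ ∈ Icc (0:ℝ) T)
    (s₁ s₂ u₁ u₂ : ℝ → ℝ)
    (hs₂ : ∀ t ∈ Icc (0:ℝ) T,
      HasDerivAt s₂ (-((Real.log lam / r₀ ^ α) * s₂ t * (s₁ t ^ 2 + s₂ t ^ 2) ^ α)) t)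
    (hu₂ : ∀ t ∈ Icc (0:ℝ) T,
      HasDerivAt u₂ (-((Real.log lam / r₀ ^ α) * u₂ t * (u₁ t ^ 2 + u₂ t ^ 2) ^ α)) t)
    (hpos₁ : ∀ t ∈ Icc (0:ℝ) T, 0 < s₁ t)
    (hpos₂ : ∀ t ∈ Icc (0:ℝ) T, 0 < s₂ t)
    (hord₁ : ∀ t ∈ Icc (0:ℝ) T₁, s₁ t ≤ s₂ t)
    (hΔ : ∀ t ∈ Icc (0:ℝ) T, 0 < u₂ t - s₂ t ∧ |u₁ t - s₁ t| ≤ μ * (u₂ t - s₂ t))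
    (hinit : (u₂ 0 - s₂ 0) / s₂ 0 < (1 - μ) / 72)
    (κ : ℝ → ℝ) (hκ : ∀ t, κ t = (u₂ t - s₂ t) / s₂ t) :
    (∀ t ∈ Icc (0:ℝ) T₁,
      0 < κ t ∧ κ t < (1 - μ) / 72 ∧
      deriv κ t < -((1 - μ) * α * Real.log lam / (2 * r₀ ^ α)) * s₂ t ^ (2 * α) * κ t) ∧
    StrictAntiOn κ (Icc (0:ℝ) T₁) := by
  have hsub : Icc (0:ℝ) T₁ ⊆ Icc 0 T := Icc_subset_Icc_right hT₁mem.2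
  set c := Real.log lam / r₀ ^ α
  have hc : 0 < c := div_pos (Real.log_pos hlam) (Real.rpow_pos_of_pos hr₀ α)
  have hκ' : ∀ t ∈ Icc (0:ℝ) T₁, HasDerivAt κ (-(c * (u₂ t / s₂ t) *
      ((u₁ t ^ 2 + u₂ t ^ 2) ^ α - (s₁ t ^ 2 + s₂ t ^ 2) ^ α))) t := fun t ht =>
    funext hκ ▸ hasDerivAt_sub_div (hs₂ t (hsub ht)) (hu₂ t (hsub ht))
      (hpos₂ t (hsub ht)).ne'
  have hpoint : ∀ t ∈ Icc (0:ℝ) T₁, 0 < s₂ t ∧ s₂ t < u₂ t ∧ |s₁ t| ≤ s₂ t ∧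
      |u₁ t - s₁ t| ≤ μ * (u₂ t - s₂ t) := fun t ht =>
    ⟨hpos₂ t (hsub ht), sub_pos.1 (hΔ t (hsub ht)).1,
      (abs_of_pos (hpos₁ t (hsub ht))).trans_le (hord₁ t ht), (hΔ t (hsub ht)).2⟩
  have hanti : StrictAntiOn κ (Icc 0 T₁) := by
    refine strictAntiOn_of_hasDerivAt_neg (convex_Icc 0 T₁) hκ' fun t ht => ?_
    obtain ⟨ha, haz, hx, hyx⟩ := hpoint t ht
    have hgain := rpow_sq_add_sq_lt_rpow_sq_add_sq hα hμ1 haz hx hyx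
    exact neg_neg_of_pos (mul_pos (mul_pos hc (div_pos (ha.trans haz) ha)) (sub_pos.2 hgain))
  have hsmall : ∀ t ∈ Icc (0:ℝ) T₁, κ t < (1 - μ) / 72 := fun t ht =>
    (hanti.antitoneOn ⟨le_rfl, ht.1.trans ht.2⟩ ht ht.1).trans_lt (hκ 0 ▸ hinit)
  refine ⟨fun t ht => ⟨?_, hsmall t ht, ?_⟩, hanti⟩
  · rw [hκ]
    exact div_pos (hΔ t (hsub ht)).1 (hpos₂ t (hsub ht))
  · obtain ⟨ha, haz, hx, hyx⟩ := hpoint t ht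
    have key := half_mul_lt_div_mul_rpow_sq_add_sq_sub hα hα1.le hμ1 ha haz
      (by linarith [hκ t ▸ hsmall t ht]) hx hyx
    rw [(hκ' t ht).deriv, hκ]
    linear_combination mul_lt_mul_of_pos_left key hc

/-- The estimates \eqref{kappa-estimate} and \eqref{eq:smallt} in Lemma `bad-delta`
of "Thermodynamics of the Katok Map": the ratio `κ = Δs₂/s₂` stays in
`(0,(1-μ)/72)` on `[0,T₁]` and satisfies the strict differential inequality
`κ' < -((1-μ) α log λ /(2 r₀^α)) s₂^{2α} κ`; in particular `κ` is strictly
decreasing on `[0,T₁]`. -/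
theorem slowdown_kappa_decreasing
    (lam α r₀ C₁ T T₁ μ : ℝ) (hlam : 1 < lam) (hα : 0 < α) (hα1 : α < 1)
    (hr₀ : 0 < r₀) (hr₀1 : r₀ < 1)
    (hC₁ : C₁ = 2 * α * Real.log lam / r₀ ^ α)
    (hμ : 0 < μ) (hμ1 : μ < 1)
    (hT₁mem : T₁ ∈ Icc (0:ℝ) T)
    (s₁ s₂ u₁ u₂ : ℝ → ℝ)
    (hs₁ : ∀ t ∈ Icc (0:ℝ) T,
      HasDerivAt s₁ ((Real.log lam / r₀ ^ α) * s₁ t * (s₁ t ^ 2 + s₂ t ^ 2) ^ α) t)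
    (hs₂ : ∀ t ∈ Icc (0:ℝ) T,
      HasDerivAt s₂ (-((Real.log lam / r₀ ^ α) * s₂ t * (s₁ t ^ 2 + s₂ t ^ 2) ^ α)) t)
    (hu₁ : ∀ t ∈ Icc (0:ℝ) T,
      HasDerivAt u₁ ((Real.log lam / r₀ ^ α) * u₁ t * (u₁ t ^ 2 + u₂ t ^ 2) ^ α) t)
    (hu₂ : ∀ t ∈ Icc (0:ℝ) T,
      HasDerivAt u₂ (-((Real.log lam / r₀ ^ α) * u₂ t * (u₁ t ^ 2 + u₂ t ^ 2) ^ α)) t)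
    (hpos₁ : ∀ t ∈ Icc (0:ℝ) T, 0 < s₁ t)
    (hpos₂ : ∀ t ∈ Icc (0:ℝ) T, 0 < s₂ t)
    (hord₁ : ∀ t ∈ Icc (0:ℝ) T₁, s₁ t ≤ s₂ t)
    (hord₂ : ∀ t ∈ Icc T₁ T, s₂ t ≤ s₁ t)
    (hΔ : ∀ t ∈ Icc (0:ℝ) T, 0 < u₂ t - s₂ t ∧ |u₁ t - s₁ t| ≤ μ * (u₂ t - s₂ t))
    (hinit : (u₂ 0 - s₂ 0) / s₂ 0 < (1 - μ) / 72)
    (κ : ℝ → ℝ) (hκ : ∀ t, κ t = (u₂ t - s₂ t) / s₂ t) :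
    (∀ t ∈ Icc (0:ℝ) T₁,
      0 < κ t ∧ κ t < (1 - μ) / 72 ∧
      deriv κ t < -((1 - μ) * α * Real.log lam / (2 * r₀ ^ α)) * s₂ t ^ (2 * α) * κ t) ∧
    StrictAntiOn κ (Icc (0:ℝ) T₁) :=
  slowdown_kappa_decreasing_general lam α r₀ T T₁ μ hlam hα hα1 hr₀ hμ hμ1 hT₁mem s₁ s₂ u₁ u₂ hs₂
    hu₂ hpos₁ hpos₂ hord₁ hΔ hinit κ hκ
end

section
/- Let s=(s₁,s₂) and s̃=(s̃₁,s̃₂) be two solutions of the explicit slow-down system on [0,T] with s₁(t)>0 and s₂(t)>0 for all t, let T₁∈[0,T] be such that s₁≤s₂ on [0,T₁] and s₂≤s₁ on [T₁,T], and set Δsᵢ(t)=s̃ᵢ(t)−sᵢ(t). Let 0<μ<1 and assume: (1) Δs₂(t)>0 and |Δs₁(t)| ≤ μ·Δs₂(t) for all t∈[0,T]; (2) Δs₂(0)/s₂(0) < (1−μ)/72. Define χ(t) = Δs₂(t)/s₁(t). Then for every t∈[T₁,T] one has χ'(t) < −((1−μ)·log λ/(2r₀^α))·s₁(t)^{2α}·χ(t);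 moreover χ(T) ≤ χ(T₁)·(1 + 2^α·C₁·s₁(T)^{2α}·(T−T₁))^{−(1−μ)/(α·2^{α+1})} ≤ χ(T₁). -/
/-!
Write `k = log λ / r₀ ^ α`, `Δ = u₂ - s₂` and `ρ = s₁² + s₂²`. Concavity of `x ↦ x ^ α`
together with `|u₁ - s₁| ≤ μ Δ` gives `Δ' ≤ μ k ρ^α Δ`, while `s₁' = k ρ^α s₁`; hence
`χ' ≤ -(1 - μ) k ρ^α χ`, and `ρ^α ≥ s₁^{2α}` yields the pointwise estimate.
For the integrated one, `Δ s₁^{-μ} = χ s₁^{1-μ}` is nonincreasing, and so is `s₁^{-2α} + C₁ t`,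
which bounds `s₁(T) / s₁(T₁)` from below. Bernoulli's inequality with exponent `2 ^ α ≥ 1`
turns that bound into the stated power of `1 + 2^α C₁ s₁(T)^{2α} (T - T₁)`.
-/

open Set Real

lemma rpow_sub_rpow_le_rpow_sub_one_mul {x y a : ℝ} (hx : 0 < x) (hxy : x ≤ y) (ha : a ≤ 1) :
    y ^ a - x ^ a ≤ x ^ (a - 1) * (y - x) := by
  have hy : 0 < y := hx.trans_le hxy
  have hyx : y ^ (a - 1) ≤ x ^ (a - 1) := rpow_le_rpow_of_nonpos hx hxy (by linarith)
  have hx' : x ^ a = x ^ (a - 1) * x := by rw [rpow_sub_one hx.ne']; field_simp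
  have hy' : y ^ a = y ^ (a - 1) * y := by rw [rpow_sub_one hy.ne']; field_simp
  rw [hx', hy']
  nlinarith

lemma mul_sq_add_sq_sub_le {p q c d μ : ℝ} (hq : 0 ≤ q) (hqd : q < d)
    (h : |c - p| ≤ μ * (d - q)) :
    d * ((p ^ 2 + q ^ 2) - (c ^ 2 + d ^ 2)) ≤ μ * (1 + μ) * (d - q) * (c ^ 2 + d ^ 2) := by
  have hm : 0 ≤ μ * (d - q) := (abs_nonneg _).trans h
  have hμ : 0 ≤ μ := nonneg_of_mul_nonneg_left hm (by linarith)
  have hsum : |c + p| ≤ 2 * |c| + μ * (d - q) := by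
    calc |c + p| = |2 * c - (c - p)| := by ring_nf
      _ ≤ |2 * c| + |c - p| := abs_sub _ _
      _ ≤ 2 * |c| + μ * (d - q) := by rw [abs_mul, abs_two]; linarith
  have hsq : p ^ 2 - c ^ 2 ≤ μ * (d - q) * (2 * |c| + μ * (d - q)) :=
    calc p ^ 2 - c ^ 2 ≤ |c - p| * |c + p| := by
          rw [← abs_mul]; exact (neg_le_abs _).trans_eq' (by ring)
      _ ≤ _ := mul_le_mul h hsum (abs_nonneg _) (by positivity)
  have hd : 0 ≤ d := hq.trans hqd.le
  have hcd : 2 * |c| * d ≤ c ^ 2 + d ^ 2 := by nlinarith [sq_abs c, sq_nonneg (|c| - d)]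
  have hdq : (d - q) * d ≤ c ^ 2 + d ^ 2 := by nlinarith [sq_nonneg c]
  calc d * ((p ^ 2 + q ^ 2) - (c ^ 2 + d ^ 2))
      ≤ d * (μ * (d - q) * (2 * |c| + μ * (d - q))) := by
        have hq2 : q ^ 2 ≤ d ^ 2 := pow_le_pow_left₀ hq hqd.le 2
        nlinarith [mul_le_mul_of_nonneg_left hsq hd, mul_le_mul_of_nonneg_left hq2 hd]
    _ = μ * (d - q) * (2 * |c| * d + μ * ((d - q) * d)) := by ring
    _ ≤ μ * (d - q) * ((c ^ 2 + d ^ 2) + μ * (c ^ 2 + d ^ 2)) := by gcongr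
    _ = μ * (1 + μ) * (d - q) * (c ^ 2 + d ^ 2) := by ring

lemma neg_mul_rpow_le_mul_rpow_sub_mul_rpow {p q c d μ a : ℝ} (ha0 : 0 ≤ a) (ha1 : a ≤ 1)
    (hμ1 : μ ≤ 1) (hq : 0 ≤ q) (hqd : q < d) (h : |c - p| ≤ μ * (d - q)) :
    -(μ * (d - q) * (p ^ 2 + q ^ 2) ^ a) ≤ d * (c ^ 2 + d ^ 2) ^ a - q * (p ^ 2 + q ^ 2) ^ a := by
  have hμ : 0 ≤ μ := nonneg_of_mul_nonneg_left ((abs_nonneg _).trans h) (by linarith)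
  have hd : 0 < d := hq.trans_lt hqd
  set ρs := p ^ 2 + q ^ 2
  set ρu := c ^ 2 + d ^ 2
  have hρs : 0 ≤ ρs := by positivity
  have hρu : 0 < ρu := by positivity
  suffices d * (ρs ^ a - ρu ^ a) ≤ (1 + μ) * (d - q) * ρs ^ a by nlinarith
  rcases le_or_gt ρs ρu with hle | hlt
  · have : ρs ^ a ≤ ρu ^ a := rpow_le_rpow hρs hle ha0
    have : 0 ≤ (1 + μ) * (d - q) * ρs ^ a := by have := hqd.le; positivity
    nlinarith
  · calc d * (ρs ^ a - ρu ^ a) ≤ ρu ^ (a - 1) * (d * (ρs - ρu)) := by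
          nlinarith [rpow_sub_rpow_le_rpow_sub_one_mul hρu hlt.le ha1]
      _ ≤ ρu ^ (a - 1) * (μ * (1 + μ) * (d - q) * ρu) :=
          mul_le_mul_of_nonneg_left (mul_sq_add_sq_sub_le hq hqd h) (by positivity)
      _ = μ * (1 + μ) * (d - q) * ρu ^ a := by
          rw [rpow_sub_one hρu.ne']; field_simp
      _ ≤ 1 * (1 + μ) * (d - q) * ρs ^ a := by
          have := hqd.le
          gcongr
      _ = (1 + μ) * (d - q) * ρs ^ a := by ring

lemma rpow_two_mul_le_sq_add_sq_rpow {x y α : ℝ} (hx : 0 ≤ x) (hα : 0 ≤ α) :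
    x ^ (2 * α) ≤ (x ^ 2 + y ^ 2) ^ α := by
  rw [rpow_mul hx, rpow_two]
  exact rpow_le_rpow (by positivity) (by nlinarith) hα

lemma antitoneOn_Icc_of_hasDerivAt_nonpos {f : ℝ → ℝ} {a b : ℝ}
    (h : ∀ t ∈ Icc a b, ∃ D ≤ 0, HasDerivAt f D t) : AntitoneOn f (Icc a b) := by
  choose! f' hf'0 hf' using h
  exact antitoneOn_of_hasDerivWithinAt_nonpos (convex_Icc a b)
    (fun t ht => (hf' t ht).continuousAt.continuousWithinAt)
    (fun t ht => (hf' t (interior_subset ht)).hasDerivWithinAt)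
    (fun t ht => hf'0 t (interior_subset ht))

section SlowDown

variable {k α μ : ℝ}

lemma slowdown_field_sub_le (hk : 0 ≤ k) (hα0 : 0 ≤ α) (hα1 : α ≤ 1) (hμ1 : μ ≤ 1)
    {p q c d : ℝ} (hq : 0 ≤ q) (hqd : q < d) (h : |c - p| ≤ μ * (d - q)) :
    -(k * d * (c ^ 2 + d ^ 2) ^ α) - -(k * q * (p ^ 2 + q ^ 2) ^ α)
      ≤ μ * k * (p ^ 2 + q ^ 2) ^ α * (d - q) := by
  have := mul_le_mul_of_nonneg_left
    (neg_mul_rpow_le_mul_rpow_sub_mul_rpow hα0 hα1 hμ1 hq hqd h) hk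
  linarith

variable {s₁ s₂ u₁ u₂ : ℝ → ℝ}

lemma deriv_sub_div_le_of_slowdown (hk : 0 ≤ k) (hα0 : 0 ≤ α) (hα1 : α ≤ 1) (hμ1 : μ ≤ 1)
    {t : ℝ} (hs₁ : HasDerivAt s₁ (k * s₁ t * (s₁ t ^ 2 + s₂ t ^ 2) ^ α) t)
    (hs₂ : HasDerivAt s₂ (-(k * s₂ t * (s₁ t ^ 2 + s₂ t ^ 2) ^ α)) t)
    (hu₂ : HasDerivAt u₂ (-(k * u₂ t * (u₁ t ^ 2 + u₂ t ^ 2) ^ α)) t)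
    (hp : 0 < s₁ t) (hq : 0 ≤ s₂ t)
    (hΔ : 0 < u₂ t - s₂ t ∧ |u₁ t - s₁ t| ≤ μ * (u₂ t - s₂ t)) :
    deriv (fun t => (u₂ t - s₂ t) / s₁ t) t
      ≤ -((1 - μ) * k) * (s₁ t ^ 2 + s₂ t ^ 2) ^ α * ((u₂ t - s₂ t) / s₁ t) := by
  have hχ : HasDerivAt (fun t => (u₂ t - s₂ t) / s₁ t) _ t := (hu₂.sub hs₂).div hs₁ hp.ne'
  have hΔ' := slowdown_field_sub_le hk hα0 hα1 hμ1 hq (by linarith [hΔ.1]) hΔ.2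
  rw [hχ.deriv, Pi.sub_apply, div_le_iff₀ (by positivity)]
  calc _ ≤ μ * k * (s₁ t ^ 2 + s₂ t ^ 2) ^ α * (u₂ t - s₂ t) * s₁ t
        - (u₂ t - s₂ t) * (k * s₁ t * (s₁ t ^ 2 + s₂ t ^ 2) ^ α) := by gcongr
    _ = _ := by field_simp; ring

lemma deriv_sub_div_lt_of_slowdown (hk : 0 < k) (hα0 : 0 ≤ α) (hα1 : α ≤ 1) (hμ1 : μ < 1)
    {t : ℝ} (hs₁ : HasDerivAt s₁ (k * s₁ t * (s₁ t ^ 2 + s₂ t ^ 2) ^ α) t)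
    (hs₂ : HasDerivAt s₂ (-(k * s₂ t * (s₁ t ^ 2 + s₂ t ^ 2) ^ α)) t)
    (hu₂ : HasDerivAt u₂ (-(k * u₂ t * (u₁ t ^ 2 + u₂ t ^ 2) ^ α)) t)
    (hp : 0 < s₁ t) (hq : 0 ≤ s₂ t)
    (hΔ : 0 < u₂ t - s₂ t ∧ |u₁ t - s₁ t| ≤ μ * (u₂ t - s₂ t)) :
    deriv (fun t => (u₂ t - s₂ t) / s₁ t) t
      < -((1 - μ) * k / 2) * s₁ t ^ (2 * α) * ((u₂ t - s₂ t) / s₁ t) := by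
  have hχ : 0 < (u₂ t - s₂ t) / s₁ t := div_pos hΔ.1 hp
  have hρ := rpow_two_mul_le_sq_add_sq_rpow (y := s₂ t) hp.le hα0
  have hc : 0 < (1 - μ) * k := mul_pos (by linarith) hk
  have := deriv_sub_div_le_of_slowdown hk.le hα0 hα1 hμ1.le hs₁ hs₂ hu₂ hp hq hΔ
  nlinarith [mul_pos (mul_pos hc (rpow_pos_of_pos hp (2 * α))) hχ,
    mul_le_mul_of_nonneg_left (mul_le_mul_of_nonneg_right hρ hχ.le) hc.le]

lemma antitoneOn_sub_mul_rpow_neg_of_slowdown (hk : 0 ≤ k) (hα0 : 0 ≤ α) (hα1 : α ≤ 1)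
    (hμ1 : μ ≤ 1) {a b : ℝ}
    (hs₁ : ∀ t ∈ Icc a b, HasDerivAt s₁ (k * s₁ t * (s₁ t ^ 2 + s₂ t ^ 2) ^ α) t)
    (hs₂ : ∀ t ∈ Icc a b, HasDerivAt s₂ (-(k * s₂ t * (s₁ t ^ 2 + s₂ t ^ 2) ^ α)) t)
    (hu₂ : ∀ t ∈ Icc a b, HasDerivAt u₂ (-(k * u₂ t * (u₁ t ^ 2 + u₂ t ^ 2) ^ α)) t)
    (hp : ∀ t ∈ Icc a b, 0 < s₁ t) (hq : ∀ t ∈ Icc a b, 0 ≤ s₂ t)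
    (hΔ : ∀ t ∈ Icc a b, 0 < u₂ t - s₂ t ∧ |u₁ t - s₁ t| ≤ μ * (u₂ t - s₂ t)) :
    AntitoneOn (fun t => (u₂ t - s₂ t) * s₁ t ^ (-μ)) (Icc a b) := by
  refine antitoneOn_Icc_of_hasDerivAt_nonpos fun t ht => ⟨_, ?_,
    ((hu₂ t ht).sub (hs₂ t ht)).mul ((hs₁ t ht).rpow_const (Or.inl (hp t ht).ne'))⟩
  have hΔ' := slowdown_field_sub_le hk hα0 hα1 hμ1 (hq t ht) (by linarith [(hΔ t ht).1]) (hΔ t ht).2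
  have hpow : s₁ t * s₁ t ^ (-μ - 1) = s₁ t ^ (-μ) := by
    rw [rpow_sub_one (hp t ht).ne', mul_div_cancel₀ _ (hp t ht).ne']
  have : 0 < s₁ t ^ (-μ) := rpow_pos_of_pos (hp t ht) _
  calc _ = s₁ t ^ (-μ) * ((-(k * u₂ t * (u₁ t ^ 2 + u₂ t ^ 2) ^ α)
        - -(k * s₂ t * (s₁ t ^ 2 + s₂ t ^ 2) ^ α))
        - μ * k * (s₁ t ^ 2 + s₂ t ^ 2) ^ α * (u₂ t - s₂ t)) := by rw [← hpow, Pi.sub_apply]; ring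
    _ ≤ 0 := mul_nonpos_of_nonneg_of_nonpos this.le (by linarith)

lemma antitoneOn_rpow_neg_two_mul_add_of_slowdown (hk : 0 ≤ k) (hα : 0 ≤ α) {a b : ℝ}
    (hs₁ : ∀ t ∈ Icc a b, HasDerivAt s₁ (k * s₁ t * (s₁ t ^ 2 + s₂ t ^ 2) ^ α) t)
    (hp : ∀ t ∈ Icc a b, 0 < s₁ t) :
    AntitoneOn (fun t => s₁ t ^ (-(2 * α)) + 2 * α * k * t) (Icc a b) := by
  refine antitoneOn_Icc_of_hasDerivAt_nonpos fun t ht => ⟨_, ?_,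
    ((hs₁ t ht).rpow_const (Or.inl (hp t ht).ne')).add ((hasDerivAt_id t).const_mul _)⟩
  have hpow : s₁ t * s₁ t ^ (-(2 * α) - 1) = s₁ t ^ (-(2 * α)) := by
    rw [rpow_sub_one (hp t ht).ne', mul_div_cancel₀ _ (hp t ht).ne']
  have hone : 1 ≤ (s₁ t ^ 2 + s₂ t ^ 2) ^ α * s₁ t ^ (-(2 * α)) := by
    calc (1 : ℝ) = s₁ t ^ (2 * α) * s₁ t ^ (-(2 * α)) := by
          rw [← rpow_add (hp t ht)]; simp
      _ ≤ _ := mul_le_mul_of_nonneg_right (rpow_two_mul_le_sq_add_sq_rpow (hp t ht).le hα)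
          (rpow_nonneg (hp t ht).le _)
  have : 0 ≤ 2 * α * k := by positivity
  calc _ = 2 * α * k * (1 - (s₁ t ^ 2 + s₂ t ^ 2) ^ α * s₁ t ^ (-(2 * α))) := by
        rw [← hpow]; ring
    _ ≤ 0 := mul_nonpos_of_nonneg_of_nonpos this (by linarith)

end SlowDown

lemma div_le_div_mul_one_add_rpow_neg {a b x y C τ α μ : ℝ} (ha : 0 < a) (hb : 0 < b)
    (hx : 0 ≤ x) (hα : 0 < α) (hμ1 : μ ≤ 1) (hCτ : 0 ≤ C * τ)
    (hxy : x * b ^ (-μ) ≤ y * a ^ (-μ)) (hab : b ^ (-(2 * α)) + C * τ ≤ a ^ (-(2 * α))) :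
    x / b ≤ y / a * (1 + 2 ^ α * C * b ^ (2 * α) * τ) ^ (-((1 - μ) / (α * 2 ^ (α + 1)))) := by
  set r := b / a
  set B := 1 + 2 ^ α * C * b ^ (2 * α) * τ
  have hr : 0 < r := div_pos hb ha
  have hb2 : 0 < b ^ (2 * α) := rpow_pos_of_pos hb _
  have hCbτ : 0 ≤ C * b ^ (2 * α) * τ := by nlinarith
  have hr2 : 1 + C * b ^ (2 * α) * τ ≤ r ^ (2 * α) := by
    have hbb : b ^ (2 * α) * b ^ (-(2 * α)) = 1 := by rw [← rpow_add hb]; simp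
    have hra : r ^ (2 * α) = b ^ (2 * α) * a ^ (-(2 * α)) := by
      rw [div_rpow hb.le ha.le, rpow_neg ha.le, div_eq_mul_inv]
    rw [hra]
    nlinarith [mul_le_mul_of_nonneg_left hab hb2.le]
  have hBr : B ≤ r ^ (2 * α * 2 ^ α) :=
    calc B = 1 + 2 ^ α * (C * b ^ (2 * α) * τ) := by ring
      _ ≤ (1 + C * b ^ (2 * α) * τ) ^ (2 : ℝ) ^ α :=
          one_add_mul_self_le_rpow_one_add (by linarith) (one_le_rpow one_le_two hα.le)
      _ ≤ (r ^ (2 * α)) ^ (2 : ℝ) ^ α := rpow_le_rpow (by linarith) hr2 (by positivity)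
      _ = r ^ (2 * α * 2 ^ α) := (rpow_mul hr.le _ _).symm
  have hB : 0 < B :=
    calc (0 : ℝ) < 1 + 2 ^ α * (C * b ^ (2 * α) * τ) := by
          nlinarith [mul_nonneg (rpow_nonneg zero_le_two α) hCbτ]
      _ = B := by ring
  have hBe : B ^ ((1 - μ) / (α * 2 ^ (α + 1))) ≤ r ^ (1 - μ) :=
    calc B ^ ((1 - μ) / (α * 2 ^ (α + 1)))
        ≤ (r ^ (2 * α * 2 ^ α)) ^ ((1 - μ) / (α * 2 ^ (α + 1))) :=
          rpow_le_rpow hB.le hBr (div_nonneg (by linarith) (by positivity))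
      _ = r ^ (1 - μ) := by
          rw [← rpow_mul hr.le, rpow_add_one two_ne_zero]
          congr 1
          field_simp
  have hxr : x / b * r ^ (1 - μ) ≤ y / a := by
    have hra : r ^ (1 - μ) = b / a * (b ^ (-μ) / a ^ (-μ)) := by
      rw [sub_eq_add_neg, rpow_add hr, rpow_one, div_rpow hb.le ha.le]
    have haμ : 0 < a * a ^ (-μ) := mul_pos ha (rpow_pos_of_pos ha _)
    calc x / b * r ^ (1 - μ) = x * b ^ (-μ) / (a * a ^ (-μ)) := by rw [hra]; field_simp
      _ ≤ y * a ^ (-μ) / (a * a ^ (-μ)) := div_le_div_of_nonneg_right hxy haμ.le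
      _ = y / a := by field_simp
  rw [rpow_neg hB.le, ← div_eq_mul_inv, le_div_iff₀ (rpow_pos_of_pos hB _)]
  exact (mul_le_mul_of_nonneg_left hBe (div_nonneg hx hb.le)).trans hxr

theorem slowdown_chi_decreasing_general
    (lam α r₀ C₁ T T₁ μ : ℝ) (hlam : 1 < lam) (hα : 0 < α) (hα1 : α < 1)
    (hr₀ : 0 < r₀)
    (hC₁ : C₁ = 2 * α * Real.log lam / r₀ ^ α)
    (hμ1 : μ < 1)
    (hT₁mem : T₁ ∈ Icc (0:ℝ) T)
    (s₁ s₂ u₁ u₂ : ℝ → ℝ)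
    (hs₁ : ∀ t ∈ Icc (0:ℝ) T,
      HasDerivAt s₁ ((Real.log lam / r₀ ^ α) * s₁ t * (s₁ t ^ 2 + s₂ t ^ 2) ^ α) t)
    (hs₂ : ∀ t ∈ Icc (0:ℝ) T,
      HasDerivAt s₂ (-((Real.log lam / r₀ ^ α) * s₂ t * (s₁ t ^ 2 + s₂ t ^ 2) ^ α)) t)
    (hu₂ : ∀ t ∈ Icc (0:ℝ) T,
      HasDerivAt u₂ (-((Real.log lam / r₀ ^ α) * u₂ t * (u₁ t ^ 2 + u₂ t ^ 2) ^ α)) t)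
    (hpos₁ : ∀ t ∈ Icc (0:ℝ) T, 0 < s₁ t)
    (hpos₂ : ∀ t ∈ Icc (0:ℝ) T, 0 < s₂ t)
    (hΔ : ∀ t ∈ Icc (0:ℝ) T, 0 < u₂ t - s₂ t ∧ |u₁ t - s₁ t| ≤ μ * (u₂ t - s₂ t))
    (χ : ℝ → ℝ) (hχ : ∀ t, χ t = (u₂ t - s₂ t) / s₁ t) :
    (∀ t ∈ Icc T₁ T,
      deriv χ t < -((1 - μ) * Real.log lam / (2 * r₀ ^ α)) * s₁ t ^ (2 * α) * χ t) ∧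
    χ T ≤ χ T₁ *
      (1 + 2 ^ α * C₁ * s₁ T ^ (2 * α) * (T - T₁)) ^ (-((1 - μ) / (α * 2 ^ (α + 1)))) ∧
    χ T₁ *
      (1 + 2 ^ α * C₁ * s₁ T ^ (2 * α) * (T - T₁)) ^ (-((1 - μ) / (α * 2 ^ (α + 1)))) ≤
      χ T₁ := by
  obtain ⟨hT₁0, hT₁T⟩ := hT₁mem
  obtain rfl : χ = fun t => (u₂ t - s₂ t) / s₁ t := funext hχ
  have hk : 0 < Real.log lam / r₀ ^ α := div_pos (Real.log_pos hlam) (rpow_pos_of_pos hr₀ α)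
  have hC : C₁ = 2 * α * (Real.log lam / r₀ ^ α) := by rw [hC₁]; ring
  have hsub : Icc T₁ T ⊆ Icc 0 T := Icc_subset_Icc_left hT₁0
  have hT₁ : T₁ ∈ Icc 0 T := hsub (left_mem_Icc.2 hT₁T)
  have hT : T ∈ Icc 0 T := hsub (right_mem_Icc.2 hT₁T)
  have hΔs := antitoneOn_sub_mul_rpow_neg_of_slowdown hk.le hα.le hα1.le hμ1.le hs₁ hs₂ hu₂
    hpos₁ (fun t ht => (hpos₂ t ht).le) hΔ hT₁ hT hT₁T
  have hs₁T := antitoneOn_rpow_neg_two_mul_add_of_slowdown hk.le hα.le hs₁ hpos₁ hT₁ hT hT₁T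
  have hCτ : 0 ≤ C₁ * (T - T₁) := by rw [hC]; have := sub_nonneg.2 hT₁T; positivity
  refine ⟨fun t ht => ?_, ?_, ?_⟩
  · exact (deriv_sub_div_lt_of_slowdown hk hα.le hα1.le hμ1 (hs₁ t (hsub ht)) (hs₂ t (hsub ht))
      (hu₂ t (hsub ht)) (hpos₁ t (hsub ht)) (hpos₂ t (hsub ht)).le (hΔ t (hsub ht))).trans_eq
      (by ring)
  · refine div_le_div_mul_one_add_rpow_neg (hpos₁ T₁ hT₁) (hpos₁ T hT) (hΔ T hT).1.le hα hμ1.le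
      hCτ hΔs ?_
    simp only at hs₁T
    rw [hC]
    linarith
  · have hB : 1 ≤ 1 + 2 ^ α * C₁ * s₁ T ^ (2 * α) * (T - T₁) := by
      have := mul_nonneg (mul_nonneg (rpow_nonneg zero_le_two α)
        (rpow_pos_of_pos (hpos₁ T hT) (2 * α)).le) hCτ
      linarith
    exact mul_le_of_le_one_right (div_pos (hΔ T₁ hT₁).1 (hpos₁ T₁ hT₁)).le
      (rpow_le_one_of_one_le_of_nonpos hB (neg_nonpos.2 (div_nonneg (by linarith) (by positivity))))

/-- The estimate \eqref{eq:chi-estimate} and the final chain of inequalities in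
Lemma `bad-delta` of "Thermodynamics of the Katok Map": the ratio `χ = Δs₂/s₁`
satisfies `χ' < -((1-μ) log λ /(2 r₀^α)) s₁^{2α} χ` on `[T₁,T]` and
`χ(T) ≤ χ(T₁) (1 + 2^α C₁ s₁(T)^{2α}(T-T₁))^{-(1-μ)/(α 2^{α+1})} ≤ χ(T₁)`. -/
theorem slowdown_chi_decreasing
    (lam α r₀ C₁ T T₁ μ : ℝ) (hlam : 1 < lam) (hα : 0 < α) (hα1 : α < 1)
    (hr₀ : 0 < r₀) (hr₀1 : r₀ < 1)
    (hC₁ : C₁ = 2 * α * Real.log lam / r₀ ^ α)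
    (hμ : 0 < μ) (hμ1 : μ < 1)
    (hT₁mem : T₁ ∈ Icc (0:ℝ) T)
    (s₁ s₂ u₁ u₂ : ℝ → ℝ)
    (hs₁ : ∀ t ∈ Icc (0:ℝ) T,
      HasDerivAt s₁ ((Real.log lam / r₀ ^ α) * s₁ t * (s₁ t ^ 2 + s₂ t ^ 2) ^ α) t)
    (hs₂ : ∀ t ∈ Icc (0:ℝ) T,
      HasDerivAt s₂ (-((Real.log lam / r₀ ^ α) * s₂ t * (s₁ t ^ 2 + s₂ t ^ 2) ^ α)) t)
    (hu₁ : ∀ t ∈ Icc (0:ℝ) T,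
      HasDerivAt u₁ ((Real.log lam / r₀ ^ α) * u₁ t * (u₁ t ^ 2 + u₂ t ^ 2) ^ α) t)
    (hu₂ : ∀ t ∈ Icc (0:ℝ) T,
      HasDerivAt u₂ (-((Real.log lam / r₀ ^ α) * u₂ t * (u₁ t ^ 2 + u₂ t ^ 2) ^ α)) t)
    (hpos₁ : ∀ t ∈ Icc (0:ℝ) T, 0 < s₁ t)
    (hpos₂ : ∀ t ∈ Icc (0:ℝ) T, 0 < s₂ t)
    (hord₁ : ∀ t ∈ Icc (0:ℝ) T₁, s₁ t ≤ s₂ t)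
    (hord₂ : ∀ t ∈ Icc T₁ T, s₂ t ≤ s₁ t)
    (hΔ : ∀ t ∈ Icc (0:ℝ) T, 0 < u₂ t - s₂ t ∧ |u₁ t - s₁ t| ≤ μ * (u₂ t - s₂ t))
    (hinit : (u₂ 0 - s₂ 0) / s₂ 0 < (1 - μ) / 72)
    (χ : ℝ → ℝ) (hχ : ∀ t, χ t = (u₂ t - s₂ t) / s₁ t) :
    (∀ t ∈ Icc T₁ T,
      deriv χ t < -((1 - μ) * Real.log lam / (2 * r₀ ^ α)) * s₁ t ^ (2 * α) * χ t) ∧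
    χ T ≤ χ T₁ *
      (1 + 2 ^ α * C₁ * s₁ T ^ (2 * α) * (T - T₁)) ^ (-((1 - μ) / (α * 2 ^ (α + 1)))) ∧
    χ T₁ *
      (1 + 2 ^ α * C₁ * s₁ T ^ (2 * α) * (T - T₁)) ^ (-((1 - μ) / (α * 2 ^ (α + 1)))) ≤
      χ T₁ :=
  slowdown_chi_decreasing_general lam α r₀ C₁ T T₁ μ hlam hα hα1 hr₀ hC₁ hμ1 hT₁mem s₁ s₂ u₁ u₂ hs₁
    hs₂ hu₂ hpos₁ hpos₂ hΔ χ hχ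
end

section
/- There exists μ₀ ∈ (0,1), depending only on α, with the following property (invariance of the unstable cones of angle μ under the slow-down flow): for every μ ∈ (μ₀,1), every Katok slow-down function ψ, every solution s=(s₁,s₂):[0,T]→ℝ² of the slow-down system with s₁(t)²+s₂(t)² ≤ 1 for all t, and every differentiable solution (ζ₁,ζ₂):[0,T]→ℝ² of the variational equations dζ₁/dt = (log λ)·((ψ(u)+2s₁²ψ'(u))ζ₁ + 2s₁s₂ψ'(u)ζ₂), dζ₂/dt = −(log λ)·(2s₁s₂ψ'(u)ζ₁ + (ψ(u)+2s₂²ψ'(u))ζ₂) (where u = s₁(t)²+s₂(t)²), if |ζ₂(0)| ≤ μ·|ζ₁(0)| and (ζ₁(0),ζ₂(0)) ≠ (0,0), then |ζ₂(t)| ≤ μ·|ζ₁(t)| for all t∈[0,T]. -/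
/-!
Along the flow, the cone defect `g = μ² ζ₁² - ζ₂²` satisfies
`g' = 4 log λ · Q - 2 log λ · ψ(u) · g` with
`Q = μ² ψ(u) ζ₁² + ψ'(u) (μ² s₁ ζ₁ + s₂ ζ₂) (s₁ ζ₁ + s₂ ζ₂)`.
A Katok slow-down function satisfies `u ψ'(u) ≤ 2 ψ(u)`: on the power-law part `u ψ' = α ψ`,
and on `(r₀/2, r₀)` the derivative decreases while `ψ` increases, so `u ψ'(u) ≤ r₀ ψ'(r₀/2)`.
Completing the square, this makes `Q ≥ 0` as soon as `(1 - μ²)² ≤ 2 μ²`, e.g. for `μ > 3/4`.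
Hence `g' ≥ 0` wherever `g < 0`, so `g`, which starts nonnegative, stays nonnegative.
-/

open Set

theorem HasDerivAt.eq_of_eqOn_Icc {f g : ℝ → ℝ} {f' g' a b u : ℝ} (hab : a < b)
    (hu : u ∈ Icc a b) (hf : HasDerivAt f f' u) (hg : HasDerivWithinAt g g' (Icc a b) u)
    (hfg : EqOn f g (Icc a b)) : f' = g' :=
  (uniqueDiffOn_Icc hab u hu).eq_deriv _ hf.hasDerivWithinAt (hg.congr hfg (hfg hu))

theorem nonneg_of_deriv_nonneg_of_neg {g g' : ℝ → ℝ} {a b : ℝ}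
    (hcont : ContinuousOn g (Icc a b))
    (hderiv : ∀ t ∈ Ico a b, HasDerivWithinAt g (g' t) (Ici t) t)
    (hneg : ∀ t ∈ Ico a b, g t < 0 → 0 ≤ g' t) (ha : 0 ≤ g a) :
    ∀ t ∈ Icc a b, 0 ≤ g t := by
  intro t ht
  -- fence `-g` by the lines `ε (x - a + 1)`, whose slope beats `-g'` wherever they touch
  have hfence : ∀ ε > 0, -g t ≤ ε * (t - a + 1) := fun ε hε =>
    image_le_of_deriv_right_lt_deriv_boundary hcont.neg (fun x hx => (hderiv x hx).neg)
      (by simp only [Pi.neg_apply, id]; linarith)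
      (fun x => (((hasDerivAt_id x).sub_const a).add_const 1).const_mul ε)
      (fun x hx hx_eq => by
        simp only [Pi.neg_apply, id] at hx_eq ⊢
        linarith [hneg x hx (by nlinarith [hx.1])]) ht
  have hpos : 0 < t - a + 1 := by linarith [ht.1]
  refine neg_nonpos.mp (le_of_forall_pos_le_add fun δ hδ => ?_)
  simpa [div_mul_cancel₀ δ hpos.ne'] using hfence (δ / (t - a + 1)) (div_pos hδ hpos)

theorem cone_form_nonneg {μ p q a b x y : ℝ} (hμ : (1 - μ ^ 2) ^ 2 ≤ 2 * μ ^ 2)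
    (hp : 0 ≤ p) (hq : 0 ≤ q) (hpq : a ^ 2 * q ≤ 2 * p) :
    0 ≤ μ ^ 2 * p * x ^ 2 + q * (μ ^ 2 * a * x + b * y) * (a * x + b * y) := by
  -- `(μ² X + Y)(X + Y) = (Y + (1 + μ²) X / 2)² - ((1 - μ²) X / 2)²`
  have hsq : 0 ≤ q * (b * y + (1 + μ ^ 2) / 2 * a * x) ^ 2 := by positivity
  have hcoef : (1 - μ ^ 2) ^ 2 / 4 * (a ^ 2 * q) ≤ μ ^ 2 * p := by nlinarith
  have : 0 ≤ (μ ^ 2 * p - (1 - μ ^ 2) ^ 2 / 4 * (a ^ 2 * q)) * x ^ 2 := by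
    nlinarith [sq_nonneg x]
  nlinarith

structure IsKatokSlowDown (α r₀ : ℝ) (ψ ψ' : ℝ → ℝ) : Prop where
  r₀_pos : 0 < r₀
  r₀_lt_one : r₀ < 1
  mem_Icc : ∀ u ∈ Icc (0:ℝ) 1, ψ u ∈ Icc (0:ℝ) 1
  hasDerivAt : ∀ u ∈ Ioc (0:ℝ) 1, HasDerivAt ψ (ψ' u) u
  eq_one : ∀ u : ℝ, r₀ ≤ u → u ≤ 1 → ψ u = 1
  deriv_pos : ∀ u ∈ Ioo (0:ℝ) r₀, 0 < ψ' u
  antitoneOn_deriv : AntitoneOn ψ' (Ioo (0:ℝ) r₀)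
  eq_rpow : ∀ u : ℝ, 0 ≤ u → u ≤ r₀ / 2 → ψ u = (u / r₀) ^ α

namespace IsKatokSlowDown

variable {α r₀ : ℝ} {ψ ψ' : ℝ → ℝ} {u : ℝ}

theorem deriv_eq_zero (h : IsKatokSlowDown α r₀ ψ ψ') (hu₀ : r₀ ≤ u) (hu₁ : u ≤ 1) :
    ψ' u = 0 :=
  (h.hasDerivAt u ⟨h.r₀_pos.trans_le hu₀, hu₁⟩).eq_of_eqOn_Icc h.r₀_lt_one ⟨hu₀, hu₁⟩
    (hasDerivWithinAt_const u _ 1) fun v hv => h.eq_one v hv.1 hv.2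

theorem mul_deriv_eq (h : IsKatokSlowDown α r₀ ψ ψ') (hu₀ : 0 < u) (hu : u ≤ r₀ / 2) :
    u * ψ' u = α * ψ u := by
  have hr₀ := h.r₀_pos
  have hdiv : u / r₀ ≠ 0 := by positivity
  have hrpow : HasDerivAt (fun v => (v / r₀) ^ α) (1 / r₀ * α * (u / r₀) ^ (α - 1)) u := by
    simpa using ((hasDerivAt_id u).div_const r₀).rpow_const (p := α) (Or.inl hdiv)
  have hψ' : ψ' u = 1 / r₀ * α * (u / r₀) ^ (α - 1) :=
    (h.hasDerivAt u ⟨hu₀, by linarith [h.r₀_lt_one]⟩).eq_of_eqOn_Icc (by linarith)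
      ⟨hu₀.le, hu⟩ hrpow.hasDerivWithinAt fun v hv => h.eq_rpow v hv.1 hv.2
  rw [hψ', h.eq_rpow u hu₀.le hu, Real.rpow_sub_one hdiv]
  field_simp

theorem deriv_nonneg (h : IsKatokSlowDown α r₀ ψ ψ') (hu₀ : 0 < u) (hu₁ : u ≤ 1) :
    0 ≤ ψ' u := by
  rcases lt_or_ge u r₀ with hu | hu
  · exact (h.deriv_pos u ⟨hu₀, hu⟩).le
  · exact (h.deriv_eq_zero hu hu₁).ge

theorem monotoneOn (h : IsKatokSlowDown α r₀ ψ ψ') : MonotoneOn ψ (Ioc 0 1) := by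
  exact monotoneOn_of_hasDerivWithinAt_nonneg (convex_Ioc 0 1)
    (fun v hv => (h.hasDerivAt v hv).continuousAt.continuousWithinAt)
    (fun v hv => (h.hasDerivAt v (interior_subset hv)).hasDerivWithinAt)
    fun v hv => h.deriv_nonneg (interior_subset hv).1 (interior_subset hv).2

theorem mul_deriv_le (h : IsKatokSlowDown α r₀ ψ ψ') (hα : α ≤ 1) (hu₀ : 0 < u) (hu₁ : u ≤ 1) :
    u * ψ' u ≤ 2 * ψ u := by
  have hr₀ := h.r₀_pos
  have hψ_nonneg : ∀ v ∈ Icc (0:ℝ) 1, 0 ≤ ψ v := fun v hv => (h.mem_Icc v hv).1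
  rcases le_or_gt u (r₀ / 2) with hu | hu
  · rw [h.mul_deriv_eq hu₀ hu]
    nlinarith [hψ_nonneg u ⟨hu₀.le, hu₁⟩]
  rcases le_or_gt r₀ u with hu' | hu'
  · rw [h.deriv_eq_zero hu' hu₁, h.eq_one u hu' hu₁]
    norm_num
  have hhalf : r₀ / 2 ∈ Ioc (0:ℝ) 1 := ⟨by positivity, by linarith [h.r₀_lt_one]⟩
  have hderiv_le : ψ' u ≤ ψ' (r₀ / 2) :=
    h.antitoneOn_deriv ⟨hhalf.1, by linarith⟩ ⟨hu₀, hu'⟩ hu.le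
  have hψ_le : ψ (r₀ / 2) ≤ ψ u := h.monotoneOn hhalf ⟨hu₀, hu₁⟩ hu.le
  have hψ_half := hψ_nonneg (r₀ / 2) ⟨hhalf.1.le, hhalf.2⟩
  calc u * ψ' u ≤ 2 * (r₀ / 2 * ψ' (r₀ / 2)) := by
        nlinarith [h.deriv_nonneg hu₀ hu₁]
    _ = 2 * (α * ψ (r₀ / 2)) := by rw [h.mul_deriv_eq hhalf.1 le_rfl]
    _ ≤ 2 * ψ u := by nlinarith

theorem cone_form_nonneg (h : IsKatokSlowDown α r₀ ψ ψ') (hα : α ≤ 1) {μ : ℝ}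
    (hμ : (1 - μ ^ 2) ^ 2 ≤ 2 * μ ^ 2) {a b : ℝ} (hab : a ^ 2 + b ^ 2 ≤ 1) (x y : ℝ) :
    0 ≤ μ ^ 2 * ψ (a ^ 2 + b ^ 2) * x ^ 2 +
      ψ' (a ^ 2 + b ^ 2) * (μ ^ 2 * a * x + b * y) * (a * x + b * y) := by
  have hψ_nonneg := (h.mem_Icc _ ⟨by positivity, hab⟩).1
  rcases (add_nonneg (sq_nonneg a) (sq_nonneg b)).eq_or_lt with hab₀ | hab₀
  · obtain ⟨rfl, rfl⟩ : a = 0 ∧ b = 0 := by constructor <;> nlinarith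
    simpa using mul_nonneg (mul_nonneg (sq_nonneg μ) hψ_nonneg) (sq_nonneg x)
  have hq := h.deriv_nonneg hab₀ hab
  refine _root_.cone_form_nonneg hμ hψ_nonneg hq ?_
  nlinarith [h.mul_deriv_le hα hab₀ hab, mul_nonneg (sq_nonneg b) hq]

end IsKatokSlowDown

theorem abs_le_mul_abs_of_variational {ζ₁ ζ₂ p q a b : ℝ → ℝ} {L μ T : ℝ} (hL : 0 ≤ L)
    (hμ : 0 ≤ μ) (hp : ∀ t ∈ Icc 0 T, 0 ≤ p t)
    (hform : ∀ t ∈ Icc 0 T, 0 ≤ μ ^ 2 * p t * ζ₁ t ^ 2 +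
      q t * (μ ^ 2 * a t * ζ₁ t + b t * ζ₂ t) * (a t * ζ₁ t + b t * ζ₂ t))
    (h₁ : ∀ t ∈ Icc 0 T, HasDerivAt ζ₁
      (L * ((p t + 2 * a t ^ 2 * q t) * ζ₁ t + 2 * a t * b t * q t * ζ₂ t)) t)
    (h₂ : ∀ t ∈ Icc 0 T, HasDerivAt ζ₂
      (-(L * (2 * a t * b t * q t * ζ₁ t + (p t + 2 * b t ^ 2 * q t) * ζ₂ t))) t)
    (h0 : |ζ₂ 0| ≤ μ * |ζ₁ 0|) :
    ∀ t ∈ Icc 0 T, |ζ₂ t| ≤ μ * |ζ₁ t| := by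
  set g : ℝ → ℝ := fun t => μ ^ 2 * ζ₁ t ^ 2 - ζ₂ t ^ 2
  have hg : ∀ t ∈ Icc 0 T, HasDerivAt g (4 * L * (μ ^ 2 * p t * ζ₁ t ^ 2 +
      q t * (μ ^ 2 * a t * ζ₁ t + b t * ζ₂ t) * (a t * ζ₁ t + b t * ζ₂ t)) -
      2 * L * p t * g t) t := fun t ht => by
    refine (((h₁ t ht).pow 2).const_mul (μ ^ 2)).sub ((h₂ t ht).pow 2) |>.congr_deriv ?_
    simp only [g]
    push_cast
    ring
  have hg₀ : 0 ≤ g 0 := by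
    have := pow_le_pow_left₀ (abs_nonneg _) h0 2
    rw [mul_pow, sq_abs, sq_abs] at this
    linarith
  have hg_nonneg := nonneg_of_deriv_nonneg_of_neg
    (fun t ht => (hg t ht).continuousAt.continuousWithinAt)
    (fun t ht => (hg t (Ico_subset_Icc_self ht)).hasDerivWithinAt)
    (fun t ht hgt => by
      have ht' := Ico_subset_Icc_self ht
      nlinarith [mul_nonneg hL (hform t ht'), mul_nonneg hL (hp t ht')]) hg₀
  intro t ht
  refine abs_le_of_sq_le_sq ?_ (by positivity)
  rw [mul_pow, sq_abs]
  linarith [hg_nonneg t ht]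

/-- Lemma `cone_invar1` of "Thermodynamics of the Katok Map" (flow version):
there exists `μ₀ ∈ (0,1)`, depending only on `α`, such that for every
`μ ∈ (μ₀,1)` the unstable cone `{|ζ₂| ≤ μ |ζ₁|}` is invariant under the
variational flow of the Katok slow-down system, for every Katok slow-down
function `ψ`. -/
theorem unstable_cone_invariance :
    ∀ α : ℝ, 0 < α → α < 1 →
    ∃ μ₀ : ℝ, 0 < μ₀ ∧ μ₀ < 1 ∧
    ∀ lam r₀ μ : ℝ, 1 < lam → 0 < r₀ → r₀ < 1 → μ₀ < μ → μ < 1 →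
    ∀ ψ ψ' : ℝ → ℝ,
      (∀ u ∈ Icc (0:ℝ) 1, ψ u ∈ Icc (0:ℝ) 1) →
      (∀ u ∈ Ioc (0:ℝ) 1, HasDerivAt ψ (ψ' u) u) →
      (∀ u : ℝ, r₀ ≤ u → u ≤ 1 → ψ u = 1) →
      (∀ u ∈ Ioo (0:ℝ) r₀, 0 < ψ' u) →
      AntitoneOn ψ' (Ioo (0:ℝ) r₀) →
      (∀ u : ℝ, 0 ≤ u → u ≤ r₀ / 2 → ψ u = (u / r₀) ^ α) →
    ∀ T : ℝ, 0 ≤ T →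
    ∀ s₁ s₂ : ℝ → ℝ,
      (∀ t ∈ Icc (0:ℝ) T,
        HasDerivAt s₁ (s₁ t * ψ (s₁ t ^ 2 + s₂ t ^ 2) * Real.log lam) t) →
      (∀ t ∈ Icc (0:ℝ) T,
        HasDerivAt s₂ (-(s₂ t * ψ (s₁ t ^ 2 + s₂ t ^ 2) * Real.log lam)) t) →
      (∀ t ∈ Icc (0:ℝ) T, s₁ t ^ 2 + s₂ t ^ 2 ≤ 1) →
    ∀ ζ₁ ζ₂ : ℝ → ℝ,
      (∀ t ∈ Icc (0:ℝ) T,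
        HasDerivAt ζ₁ (Real.log lam *
          ((ψ (s₁ t ^ 2 + s₂ t ^ 2) + 2 * s₁ t ^ 2 * ψ' (s₁ t ^ 2 + s₂ t ^ 2)) * ζ₁ t +
            2 * s₁ t * s₂ t * ψ' (s₁ t ^ 2 + s₂ t ^ 2) * ζ₂ t)) t) →
      (∀ t ∈ Icc (0:ℝ) T,
        HasDerivAt ζ₂ (-(Real.log lam *
          (2 * s₁ t * s₂ t * ψ' (s₁ t ^ 2 + s₂ t ^ 2) * ζ₁ t +
            (ψ (s₁ t ^ 2 + s₂ t ^ 2) + 2 * s₂ t ^ 2 * ψ' (s₁ t ^ 2 + s₂ t ^ 2)) * ζ₂ t))) t) →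
      |ζ₂ 0| ≤ μ * |ζ₁ 0| → (ζ₁ 0, ζ₂ 0) ≠ (0, 0) →
      ∀ t ∈ Icc (0:ℝ) T, |ζ₂ t| ≤ μ * |ζ₁ t| := by
  intro α _ hα
  refine ⟨3 / 4, by norm_num, by norm_num, ?_⟩
  intro lam r₀ μ hlam hr₀ hr₀1 hμ₀ hμ1 ψ ψ' hmem hderiv hone hpos hanti hpow T _ s₁ s₂ _ _ hs
    ζ₁ ζ₂ hζ₁ hζ₂ h0 _
  have hψ : IsKatokSlowDown α r₀ ψ ψ' := ⟨hr₀, hr₀1, hmem, hderiv, hone, hpos, hanti, hpow⟩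
  have hμ : (1 - μ ^ 2) ^ 2 ≤ 2 * μ ^ 2 := by
    have h₀ : 0 ≤ 1 - μ ^ 2 := by nlinarith
    have h₁ : 1 - μ ^ 2 ≤ μ := by nlinarith
    nlinarith [mul_le_mul h₁ h₁ h₀ (by linarith)]
  exact abs_le_mul_abs_of_variational (μ := μ) (Real.log_pos hlam).le (by linarith)
    (fun t ht => (hmem _ ⟨by positivity, hs t ht⟩).1)
    (fun t ht => hψ.cone_form_nonneg hα.le hμ (hs t ht) _ _) hζ₁ hζ₂ h0
end

section
/- Let ψ be a Katok slow-down function. Then for every u with 0 < u < r₀ one has ψ(u) ≥ (u/(2α))·ψ'(u); equivalently, ψ(u)/ψ'(u) ≥ u/(2α) wherever ψ'(u)>0 on (0,r₀). -/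
open Set

/-- The estimate `ψ(u)/ψ'(u) ≥ u/(2α)` on `(0,r₀)` used in the proof of
Lemma `cone_invar1` of "Thermodynamics of the Katok Map", for any Katok
slow-down function `ψ`. -/
theorem katok_psi_ratio_bound
    (α r₀ : ℝ) (hα : 0 < α) (hα1 : α < 1) (hr₀ : 0 < r₀) (hr₀1 : r₀ < 1)
    (ψ ψ' : ℝ → ℝ)
    (hmap : ∀ u ∈ Icc (0:ℝ) 1, ψ u ∈ Icc (0:ℝ) 1)
    (hdiff : ∀ u ∈ Ioc (0:ℝ) 1, HasDerivAt ψ (ψ' u) u)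
    (hone : ∀ u : ℝ, r₀ ≤ u → u ≤ 1 → ψ u = 1)
    (hpos : ∀ u ∈ Ioo (0:ℝ) r₀, 0 < ψ' u)
    (hanti : AntitoneOn ψ' (Ioo (0:ℝ) r₀))
    (hpow : ∀ u : ℝ, 0 ≤ u → u ≤ r₀ / 2 → ψ u = (u / r₀) ^ α) :
    ∀ u : ℝ, 0 < u → u < r₀ → ψ u ≥ u / (2 * α) * ψ' u := by
  intro u hu0 hur
  have hr2 : (0:ℝ) < r₀ / 2 := by linarith
  have hr₀' : r₀ ≠ 0 := ne_of_gt hr₀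
  -- derivative formula on (0, r₀/2)
  have hderiv : ∀ v ∈ Ioo (0:ℝ) (r₀/2), ψ' v = α * (v/r₀)^(α-1) / r₀ := by
    intro v hv
    obtain ⟨hv0, hv2⟩ := hv
    have h1 : HasDerivAt ψ (ψ' v) v := hdiff v ⟨hv0, by linarith⟩
    have hne : v / r₀ ≠ 0 := by positivity
    have hpow' : HasDerivAt (fun x : ℝ => (x/r₀)^α) (α * (v/r₀)^(α-1) * (1/r₀)) v := by
      have hg : HasDerivAt (fun x : ℝ => x / r₀) (1/r₀) v := by
        simpa using (hasDerivAt_id v).div_const r₀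
      exact (Real.hasDerivAt_rpow_const (Or.inl hne)).comp v hg
    have heq : ψ =ᶠ[nhds v] (fun x : ℝ => (x/r₀)^α) := by
      filter_upwards [Ioo_mem_nhds hv0 hv2] with x hx
      exact hpow x hx.1.le hx.2.le
    have h1' : HasDerivAt (fun x : ℝ => (x/r₀)^α) (ψ' v) v :=
      h1.congr_of_eventuallyEq heq.symm
    have huniq := h1'.unique hpow'
    rw [huniq]; ring
  rcases lt_or_ge u (r₀/2) with h | h
  · -- case u < r₀/2 : direct computation
    have hψu : ψ u = (u/r₀)^α := hpow u hu0.le h.le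
    have hx : (0:ℝ) < u / r₀ := by positivity
    have hsplit : (u/r₀)^α = (u/r₀) * (u/r₀)^(α-1) := by
      rw [show α = 1 + (α - 1) by ring, Real.rpow_add hx, Real.rpow_one]
      ring_nf
    rw [hderiv u ⟨hu0, h⟩, hψu]
    have hαne : α ≠ 0 := ne_of_gt hα
    have hkey : u / (2*α) * (α * (u/r₀)^(α-1) / r₀) = (1/2) * ((u/r₀) * (u/r₀)^(α-1)) := by
      field_simp
    rw [hsplit, hkey]
    nlinarith [Real.rpow_pos_of_pos hx (α-1), hx]
  · -- case r₀/2 ≤ u < r₀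
    -- bound ψ'(u) by the limit of the derivative formula from the left at r₀/2
    have hbound : ψ' u ≤ α * ((1:ℝ)/2)^(α-1) / r₀ := by
      have hcont : ContinuousWithinAt (fun v : ℝ => α * (v/r₀)^(α-1) / r₀)
          (Iio (r₀/2)) (r₀/2) := by
        apply ContinuousAt.continuousWithinAt
        have h1 : ContinuousAt (fun v : ℝ => (v/r₀)^(α-1)) (r₀/2) := by
          apply ContinuousAt.rpow_const
          · exact (continuous_id.div_const r₀).continuousAt
          · left; positivity
        exact (continuousAt_const.mul h1).div_const r₀
      have key : ∀ᶠ v in nhdsWithin (r₀/2) (Iio (r₀/2)),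
          ψ' u ≤ α * (v/r₀)^(α-1) / r₀ := by
        filter_upwards [eventually_nhdsWithin_of_eventually_nhds
          (eventually_gt_nhds hr2), self_mem_nhdsWithin] with v hv0 hv2
        have hv2' : v < r₀/2 := hv2
        rw [← hderiv v ⟨hv0, hv2'⟩]
        exact hanti ⟨hv0, by linarith⟩ ⟨by linarith, hur⟩ (by linarith)
      have hlim := ge_of_tendsto hcont key
      simp only at hlim
      have heq2 : (r₀/2)/r₀ = (1:ℝ)/2 := by field_simp
      rwa [heq2] at hlim
    -- ψ is monotone on [r₀/2, u]
    have hmono : ψ (r₀/2) ≤ ψ u := by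
      rcases eq_or_lt_of_le h with heq | hlt
      · rw [heq]
      · have hsm : StrictMonoOn ψ (Icc (r₀/2) u) := by
          apply strictMonoOn_of_deriv_pos (convex_Icc _ _)
          · intro x hx
            exact (hdiff x ⟨by linarith [hx.1], by linarith [hx.2]⟩).continuousAt.continuousWithinAt
          · intro x hx
            rw [interior_Icc] at hx
            rw [(hdiff x ⟨by linarith [hx.1], by linarith [hx.2]⟩).deriv]
            exact hpos x ⟨by linarith [hx.1], by linarith [hx.2]⟩
        exact (hsm (left_mem_Icc.mpr h) (right_mem_Icc.mpr h) hlt).le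
    have hψhalf : ψ (r₀/2) = ((1:ℝ)/2)^α := by
      rw [hpow _ hr2.le le_rfl]
      congr 1
      field_simp
    -- combine
    have h2 : ((1:ℝ)/2)^(α-1) = 2 * ((1:ℝ)/2)^α := by
      rw [show α - 1 = α + (-1) by ring, Real.rpow_add (by norm_num : (0:ℝ) < 1/2),
        Real.rpow_neg_one]
      norm_num
      ring
    have hpα : (0:ℝ) < ((1:ℝ)/2)^α := Real.rpow_pos_of_pos (by norm_num) α
    have hc1 : u / (2*α) * ψ' u ≤ u / (2*α) * (α * ((1:ℝ)/2)^(α-1) / r₀) := by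
      apply mul_le_mul_of_nonneg_left hbound
      positivity
    have hc2 : u / (2*α) * (α * ((1:ℝ)/2)^(α-1) / r₀) = (u/r₀) * ((1:ℝ)/2)^α := by
      rw [h2]
      field_simp
    have hc3 : (u/r₀) * ((1:ℝ)/2)^α ≤ ((1:ℝ)/2)^α := by
      have : u / r₀ ≤ 1 := by
        rw [div_le_one hr₀]; linarith
      nlinarith
    calc u / (2*α) * ψ' u ≤ (u/r₀) * ((1:ℝ)/2)^α := by rw [← hc2]; exact hc1
      _ ≤ ((1:ℝ)/2)^α := hc3
      _ = ψ (r₀/2) := hψhalf.symm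
      _ ≤ ψ u := hmono
end

section
/- Let s₁,s₂:[0,T]→ℝ be a solution of the explicit slow-down system with s₁(t)>0, s₂(t)>0 and s₁(t)²+s₂(t)² ≤ r₀/2 for all t∈[0,T]. Let η₁,η₂:[0,T]→ℝ be two differentiable solutions of the tangent (slope) equation dη/dt = −2(log λ)·((ψ(u) + u·ψ'(u))·η + s₁s₂·ψ'(u)·(η²+1)), where u = s₁(t)²+s₂(t)², ψ(u)=(u/r₀)^α and ψ'(u)=(α/r₀^α)u^{α−1}, and assume |η₁(t)| ≤ 1 and |η₂(t)| ≤ 1 for all t. Then for every t∈[0,T], |η₁(t)−η₂(t)| ≤ |η₁(0)−η₂(0)|·(s₂(t)/s₂(0))² ≤ |η₁(0)−η₂(0)|·(1 + C₁·s₂(0)^{2α}·t)^{−1/α}. -/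
/-!
Along the slow-down flow `s₂` obeys `s₂' = -(log λ) ψ(u) s₂` with `u = s₁² + s₂²`, while the
difference `d = η₁ - η₂` of two slopes obeys
`d' = -2 (log λ) (ψ(u) + u ψ'(u) + s₁ s₂ ψ'(u) (η₁ + η₂)) d`.
Since `|η₁|, |η₂| ≤ 1` gives `u + s₁ s₂ (η₁ + η₂) ≥ (|s₁| - |s₂|)² ≥ 0`, the quotient `d² / s₂⁴`
is non-increasing, which is the first inequality. For the second, `u ≥ s₂²` turns the equation
for `s₂` into `s₂' ≤ -(log λ / r₀^α) s₂^{1+2α}`, so `s₂^{-2α}` grows at least at rate `C₁`.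
-/

open Set

theorem antitoneOn_div_of_hasDerivAt_le_mul {D : Set ℝ} (hD : Convex ℝ D) {f g f' b : ℝ → ℝ}
    (hf : ∀ x ∈ D, HasDerivAt f (f' x) x) (hg : ∀ x ∈ D, HasDerivAt g (b x * g x) x)
    (hg₀ : ∀ x ∈ D, 0 < g x) (hf' : ∀ x ∈ D, f' x ≤ b x * f x) :
    AntitoneOn (fun x => f x / g x) D := by
  have hfg : ∀ x ∈ D, HasDerivAt (fun x => f x / g x) ((f' x - b x * f x) / g x) x := by
    intro x hx
    refine ((hf x hx).div (hg x hx) (hg₀ x hx).ne').congr_deriv ?_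
    field_simp
  refine antitoneOn_of_hasDerivWithinAt_nonpos hD
    (fun x hx => (hfg x hx).continuousAt.continuousWithinAt)
    (fun x hx => (hfg x (interior_subset hx)).hasDerivWithinAt) fun x hx => ?_
  exact div_nonpos_of_nonpos_of_nonneg (sub_nonpos.2 (hf' x (interior_subset hx)))
    (hg₀ x (interior_subset hx)).le

theorem rpow_neg_add_mul_le_of_hasDerivAt_le {D : Set ℝ} (hD : Convex ℝ D) {v v' : ℝ → ℝ}
    {β k : ℝ} (hβ : 0 < β) (hv : ∀ x ∈ D, HasDerivAt v (v' x) x) (hv₀ : ∀ x ∈ D, 0 < v x)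
    (hv' : ∀ x ∈ D, v' x ≤ -k * v x ^ (1 + β)) {x y : ℝ} (hx : x ∈ D) (hy : y ∈ D)
    (hxy : x ≤ y) : v x ^ (-β) + β * k * (y - x) ≤ v y ^ (-β) := by
  have hw : ∀ t ∈ D, HasDerivAt (fun t => v t ^ (-β) - β * k * t)
      (v' t * (-β) * v t ^ (-β - 1) - β * k) t := fun t ht =>
    ((hv t ht).rpow_const (Or.inl (hv₀ t ht).ne')).sub
      (by simpa using (hasDerivAt_id t).const_mul (β * k))
  have hw' : ∀ t ∈ D, 0 ≤ v' t * (-β) * v t ^ (-β - 1) - β * k := by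
    intro t ht
    have hcancel : v t ^ (1 + β) * v t ^ (-β - 1) = 1 := by
      rw [← Real.rpow_add (hv₀ t ht), show 1 + β + (-β - 1) = 0 by ring, Real.rpow_zero]
    have hscale : 0 ≤ β * v t ^ (-β - 1) := by
      have := hv₀ t ht
      positivity
    have hbound := mul_le_mul_of_nonneg_right (hv' t ht) hscale
    have hrate : -k * v t ^ (1 + β) * (β * v t ^ (-β - 1)) = -(β * k) := by
      linear_combination (-(β * k)) * hcancel
    linarith
  have hmono := monotoneOn_of_hasDerivWithinAt_nonneg hD
    (fun t ht => (hw t ht).continuousAt.continuousWithinAt)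
    (fun t ht => (hw t (interior_subset ht)).hasDerivWithinAt)
    (fun t ht => hw' t (interior_subset ht)) hx hy hxy
  simp only at hmono
  linarith

theorem sq_div_le_rpow_of_rpow_neg_add_le {x y c α : ℝ} (hx : 0 < x) (hy : 0 < y) (hα : 0 < α)
    (hc : 0 ≤ c) (h : x ^ (-(2 * α)) + c ≤ y ^ (-(2 * α))) :
    (y / x) ^ 2 ≤ (1 + c * x ^ (2 * α)) ^ (-(1 / α)) := by
  have hsq : (y / x) ^ 2 = ((y / x) ^ (-(2 * α))) ^ (-(1 / α)) := by
    rw [← Real.rpow_mul (by positivity), show -(2 * α) * -(1 / α) = (2 : ℕ) by field_simp; norm_num,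
      Real.rpow_natCast]
  have hbase : 1 + c * x ^ (2 * α) ≤ (y / x) ^ (-(2 * α)) := by
    have hx' : x ^ (-(2 * α)) * x ^ (2 * α) = 1 := by
      rw [← Real.rpow_add hx]
      norm_num
    rw [Real.div_rpow hy.le hx.le, Real.rpow_neg hx.le, div_inv_eq_mul]
    nlinarith [mul_le_mul_of_nonneg_right h (Real.rpow_nonneg hx.le (2 * α))]
  rw [hsq]
  exact Real.rpow_le_rpow_of_nonpos (by positivity) hbase (by simp only [neg_nonpos]; positivity)

theorem sq_add_sq_add_mul_mul_add_nonneg {a b x y : ℝ} (hx : |x| ≤ 1) (hy : |y| ≤ 1) :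
    0 ≤ a ^ 2 + b ^ 2 + a * b * (x + y) := by
  have hxy : |a * b * (x + y)| ≤ 2 * |a * b| := by
    rw [abs_mul, mul_comm 2]
    exact mul_le_mul_of_nonneg_left ((abs_add_le x y).trans (by linarith)) (abs_nonneg _)
  nlinarith [abs_le.1 hxy, two_mul_le_add_sq |a| |b|, abs_mul a b, sq_abs a, sq_abs b]

namespace KatokSlowDown

noncomputable def psi (r₀ α u : ℝ) : ℝ := (u / r₀) ^ α

noncomputable def psiDeriv (r₀ α u : ℝ) : ℝ := α / r₀ ^ α * u ^ (α - 1)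

/-- Right-hand side of the slope equation at the point `(p, q)`, with `L = log λ`. -/
noncomputable def slopeField (L r₀ α p q η : ℝ) : ℝ :=
  -(2 * L * ((psi r₀ α (p ^ 2 + q ^ 2) + (p ^ 2 + q ^ 2) * psiDeriv r₀ α (p ^ 2 + q ^ 2)) * η +
    p * q * psiDeriv r₀ α (p ^ 2 + q ^ 2) * (η ^ 2 + 1)))

theorem two_mul_sub_mul_slopeField_sub_le {L r₀ α p q η₁ η₂ : ℝ} (hL : 0 ≤ L) (hα : 0 ≤ α)
    (hr₀ : 0 ≤ r₀) (h₁ : |η₁| ≤ 1) (h₂ : |η₂| ≤ 1) :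
    2 * (η₁ - η₂) * (slopeField L r₀ α p q η₁ - slopeField L r₀ α p q η₂) ≤
      -(4 * L * psi r₀ α (p ^ 2 + q ^ 2)) * (η₁ - η₂) ^ 2 := by
  have hsplit : 2 * (η₁ - η₂) * (slopeField L r₀ α p q η₁ - slopeField L r₀ α p q η₂) =
      -(4 * L * psi r₀ α (p ^ 2 + q ^ 2)) * (η₁ - η₂) ^ 2 -
        4 * L * psiDeriv r₀ α (p ^ 2 + q ^ 2) * (p ^ 2 + q ^ 2 + p * q * (η₁ + η₂)) *
          (η₁ - η₂) ^ 2 := by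
    unfold slopeField
    ring
  have hψ' : 0 ≤ psiDeriv r₀ α (p ^ 2 + q ^ 2) := by
    unfold psiDeriv
    positivity
  have := sq_add_sq_add_mul_mul_add_nonneg (a := p) (b := q) h₁ h₂
  rw [hsplit, sub_le_self_iff]
  positivity

theorem hasDerivAt_pow_four_of_slowDown {L r₀ α t : ℝ} (hr₀ : 0 ≤ r₀) {s₁ s₂ : ℝ → ℝ}
    (hs₂ : HasDerivAt s₂ (-((L / r₀ ^ α) * s₂ t * (s₁ t ^ 2 + s₂ t ^ 2) ^ α)) t) :
    HasDerivAt (fun t => s₂ t ^ 4) (-(4 * L * psi r₀ α (s₁ t ^ 2 + s₂ t ^ 2)) * s₂ t ^ 4) t := by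
  refine (hs₂.pow 4).congr_deriv ?_
  rw [psi, Real.div_rpow (by positivity) hr₀]
  push_cast
  ring

variable {L r₀ α T : ℝ} {s₁ s₂ : ℝ → ℝ}

theorem abs_sub_le_of_slopeField (hL : 0 ≤ L) (hα : 0 ≤ α) (hr₀ : 0 ≤ r₀)
    (hs₂ : ∀ t ∈ Icc (0:ℝ) T,
      HasDerivAt s₂ (-((L / r₀ ^ α) * s₂ t * (s₁ t ^ 2 + s₂ t ^ 2) ^ α)) t)
    (hpos₂ : ∀ t ∈ Icc (0:ℝ) T, 0 < s₂ t) {η₁ η₂ : ℝ → ℝ}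
    (hη₁ : ∀ t ∈ Icc (0:ℝ) T, HasDerivAt η₁ (slopeField L r₀ α (s₁ t) (s₂ t) (η₁ t)) t)
    (hη₂ : ∀ t ∈ Icc (0:ℝ) T, HasDerivAt η₂ (slopeField L r₀ α (s₁ t) (s₂ t) (η₂ t)) t)
    (hb₁ : ∀ t ∈ Icc (0:ℝ) T, |η₁ t| ≤ 1) (hb₂ : ∀ t ∈ Icc (0:ℝ) T, |η₂ t| ≤ 1) :
    ∀ t ∈ Icc (0:ℝ) T, |η₁ t - η₂ t| ≤ |η₁ 0 - η₂ 0| * (s₂ t / s₂ 0) ^ 2 := by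
  intro t ht
  have hsq : ∀ τ ∈ Icc (0:ℝ) T, HasDerivAt (fun x => (η₁ x - η₂ x) ^ 2)
      (2 * (η₁ τ - η₂ τ) * (slopeField L r₀ α (s₁ τ) (s₂ τ) (η₁ τ) -
        slopeField L r₀ α (s₁ τ) (s₂ τ) (η₂ τ))) τ := fun τ hτ =>
    (((hη₁ τ hτ).sub (hη₂ τ hτ)).pow 2).congr_deriv (by simp)
  have hanti := antitoneOn_div_of_hasDerivAt_le_mul (convex_Icc 0 T) hsq
    (fun τ hτ => hasDerivAt_pow_four_of_slowDown hr₀ (hs₂ τ hτ))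
    (fun τ hτ => pow_pos (hpos₂ τ hτ) 4)
    (fun τ hτ => two_mul_sub_mul_slopeField_sub_le hL hα hr₀ (hb₁ τ hτ) (hb₂ τ hτ))
    ⟨le_rfl, ht.1.trans ht.2⟩ ht ht.1
  have ht₄ := pow_pos (hpos₂ t ht) 4
  have h0₄ := pow_pos (hpos₂ 0 ⟨le_rfl, ht.1.trans ht.2⟩) 4
  rw [div_le_div_iff₀ ht₄ h0₄] at hanti
  have hratio : ((s₂ t / s₂ 0) ^ 2) ^ 2 = s₂ t ^ 4 / s₂ 0 ^ 4 := by ring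
  rw [← sq_le_sq₀ (abs_nonneg _) (by positivity), mul_pow, sq_abs, sq_abs, hratio,
    mul_div_assoc', le_div_iff₀ h0₄]
  exact hanti

theorem snd_div_sq_le_of_slowDown (hL : 0 ≤ L) (hα : 0 < α) (hr₀ : 0 ≤ r₀)
    (hs₂ : ∀ t ∈ Icc (0:ℝ) T,
      HasDerivAt s₂ (-((L / r₀ ^ α) * s₂ t * (s₁ t ^ 2 + s₂ t ^ 2) ^ α)) t)
    (hpos₂ : ∀ t ∈ Icc (0:ℝ) T, 0 < s₂ t) :
    ∀ t ∈ Icc (0:ℝ) T,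
      (s₂ t / s₂ 0) ^ 2 ≤ (1 + 2 * α * L / r₀ ^ α * s₂ 0 ^ (2 * α) * t) ^ (-(1 / α)) := by
  intro t ht
  have h₀ : (0:ℝ) ∈ Icc 0 T := ⟨le_rfl, ht.1.trans ht.2⟩
  have hk : 0 ≤ L / r₀ ^ α := div_nonneg hL (Real.rpow_nonneg hr₀ _)
  have hdecay : ∀ τ ∈ Icc (0:ℝ) T, -((L / r₀ ^ α) * s₂ τ * (s₁ τ ^ 2 + s₂ τ ^ 2) ^ α) ≤
      -(L / r₀ ^ α) * s₂ τ ^ (1 + 2 * α) := by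
    intro τ hτ
    have hq := hpos₂ τ hτ
    have hpow : s₂ τ ^ (1 + 2 * α) = s₂ τ * (s₂ τ ^ 2) ^ α := by
      rw [Real.rpow_add hq, Real.rpow_one, Real.rpow_mul hq.le, Real.rpow_two]
    have hmono : (s₂ τ ^ 2) ^ α ≤ (s₁ τ ^ 2 + s₂ τ ^ 2) ^ α :=
      Real.rpow_le_rpow (sq_nonneg _) (le_add_of_nonneg_left (sq_nonneg _)) hα.le
    rw [hpow, neg_mul, neg_le_neg_iff, ← mul_assoc]
    exact mul_le_mul_of_nonneg_left hmono (mul_nonneg hk hq.le)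
  have hgrowth := rpow_neg_add_mul_le_of_hasDerivAt_le (convex_Icc 0 T) (by positivity) hs₂ hpos₂
    hdecay h₀ ht ht.1
  rw [sub_zero] at hgrowth
  convert sq_div_le_rpow_of_rpow_neg_add_le (hpos₂ 0 h₀) (hpos₂ t ht) hα
    (mul_nonneg (mul_nonneg (by positivity) hk) ht.1) hgrowth using 3
  ring

end KatokSlowDown

theorem slope_equation_contraction_general
    (lam α r₀ C₁ T : ℝ) (hlam : 1 < lam) (hα : 0 < α)
    (hr₀ : 0 < r₀)
    (hC₁ : C₁ = 2 * α * Real.log lam / r₀ ^ α)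
    (s₁ s₂ : ℝ → ℝ)
    (hs₂ : ∀ t ∈ Icc (0:ℝ) T,
      HasDerivAt s₂ (-((Real.log lam / r₀ ^ α) * s₂ t * (s₁ t ^ 2 + s₂ t ^ 2) ^ α)) t)
    (hpos₂ : ∀ t ∈ Icc (0:ℝ) T, 0 < s₂ t)
    (η₁ η₂ : ℝ → ℝ)
    (hη₁ : ∀ t ∈ Icc (0:ℝ) T,
      HasDerivAt η₁ (-(2 * Real.log lam *
        ((((s₁ t ^ 2 + s₂ t ^ 2) / r₀) ^ α +
            (s₁ t ^ 2 + s₂ t ^ 2) * (α / r₀ ^ α * (s₁ t ^ 2 + s₂ t ^ 2) ^ (α - 1))) * η₁ t +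
          s₁ t * s₂ t * (α / r₀ ^ α * (s₁ t ^ 2 + s₂ t ^ 2) ^ (α - 1)) *
            (η₁ t ^ 2 + 1)))) t)
    (hη₂ : ∀ t ∈ Icc (0:ℝ) T,
      HasDerivAt η₂ (-(2 * Real.log lam *
        ((((s₁ t ^ 2 + s₂ t ^ 2) / r₀) ^ α +
            (s₁ t ^ 2 + s₂ t ^ 2) * (α / r₀ ^ α * (s₁ t ^ 2 + s₂ t ^ 2) ^ (α - 1))) * η₂ t +
          s₁ t * s₂ t * (α / r₀ ^ α * (s₁ t ^ 2 + s₂ t ^ 2) ^ (α - 1)) *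
            (η₂ t ^ 2 + 1)))) t)
    (hb₁ : ∀ t ∈ Icc (0:ℝ) T, |η₁ t| ≤ 1)
    (hb₂ : ∀ t ∈ Icc (0:ℝ) T, |η₂ t| ≤ 1) :
    ∀ t ∈ Icc (0:ℝ) T,
      |η₁ t - η₂ t| ≤ |η₁ 0 - η₂ 0| * (s₂ t / s₂ 0) ^ 2 ∧
      |η₁ 0 - η₂ 0| * (s₂ t / s₂ 0) ^ 2 ≤
        |η₁ 0 - η₂ 0| * (1 + C₁ * s₂ 0 ^ (2 * α) * t) ^ (-(1 / α)) := by
  subst hC₁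
  have hL : 0 ≤ Real.log lam := Real.log_nonneg hlam.le
  intro t ht
  exact ⟨KatokSlowDown.abs_sub_le_of_slopeField hL hα.le hr₀.le hs₂ hpos₂ hη₁ hη₂ hb₁ hb₂ t ht,
    mul_le_mul_of_nonneg_left (KatokSlowDown.snd_div_sq_le_of_slowDown hL hα hr₀.le hs₂ hpos₂ t ht)
      (abs_nonneg _)⟩

/-- Lemma `bad-gamma1` (flow version) of "Thermodynamics of the Katok Map":
two solutions of the tangent (slope) equation along a positive orbit of the
explicit slow-down system staying in `D_{r₀/2}` approach each other at the
rate `(s₂(t)/s₂(0))² ≤ (1 + C₁ s₂(0)^{2α} t)^{-1/α}`. -/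
theorem slope_equation_contraction
    (lam α r₀ C₁ T : ℝ) (hlam : 1 < lam) (hα : 0 < α) (hα1 : α < 1)
    (hr₀ : 0 < r₀) (hr₀1 : r₀ < 1)
    (hC₁ : C₁ = 2 * α * Real.log lam / r₀ ^ α)
    (hT : 0 ≤ T)
    (s₁ s₂ : ℝ → ℝ)
    (hs₁ : ∀ t ∈ Icc (0:ℝ) T,
      HasDerivAt s₁ ((Real.log lam / r₀ ^ α) * s₁ t * (s₁ t ^ 2 + s₂ t ^ 2) ^ α) t)
    (hs₂ : ∀ t ∈ Icc (0:ℝ) T,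
      HasDerivAt s₂ (-((Real.log lam / r₀ ^ α) * s₂ t * (s₁ t ^ 2 + s₂ t ^ 2) ^ α)) t)
    (hpos₁ : ∀ t ∈ Icc (0:ℝ) T, 0 < s₁ t)
    (hpos₂ : ∀ t ∈ Icc (0:ℝ) T, 0 < s₂ t)
    (hsmall : ∀ t ∈ Icc (0:ℝ) T, s₁ t ^ 2 + s₂ t ^ 2 ≤ r₀ / 2)
    (η₁ η₂ : ℝ → ℝ)
    (hη₁ : ∀ t ∈ Icc (0:ℝ) T,
      HasDerivAt η₁ (-(2 * Real.log lam *
        ((((s₁ t ^ 2 + s₂ t ^ 2) / r₀) ^ α +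
            (s₁ t ^ 2 + s₂ t ^ 2) * (α / r₀ ^ α * (s₁ t ^ 2 + s₂ t ^ 2) ^ (α - 1))) * η₁ t +
          s₁ t * s₂ t * (α / r₀ ^ α * (s₁ t ^ 2 + s₂ t ^ 2) ^ (α - 1)) *
            (η₁ t ^ 2 + 1)))) t)
    (hη₂ : ∀ t ∈ Icc (0:ℝ) T,
      HasDerivAt η₂ (-(2 * Real.log lam *
        ((((s₁ t ^ 2 + s₂ t ^ 2) / r₀) ^ α +
            (s₁ t ^ 2 + s₂ t ^ 2) * (α / r₀ ^ α * (s₁ t ^ 2 + s₂ t ^ 2) ^ (α - 1))) * η₂ t +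
          s₁ t * s₂ t * (α / r₀ ^ α * (s₁ t ^ 2 + s₂ t ^ 2) ^ (α - 1)) *
            (η₂ t ^ 2 + 1)))) t)
    (hb₁ : ∀ t ∈ Icc (0:ℝ) T, |η₁ t| ≤ 1)
    (hb₂ : ∀ t ∈ Icc (0:ℝ) T, |η₂ t| ≤ 1) :
    ∀ t ∈ Icc (0:ℝ) T,
      |η₁ t - η₂ t| ≤ |η₁ 0 - η₂ 0| * (s₂ t / s₂ 0) ^ 2 ∧
      |η₁ 0 - η₂ 0| * (s₂ t / s₂ 0) ^ 2 ≤
        |η₁ 0 - η₂ 0| * (1 + C₁ * s₂ 0 ^ (2 * α) * t) ^ (-(1 / α)) :=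
  slope_equation_contraction_general lam α r₀ C₁ T hlam hα hr₀ hC₁ s₁ s₂ hs₂ hpos₂ η₁ η₂ hη₁ hη₂ hb₁
    hb₂
end

section
/- There exists T₀ > 0, depending only on λ and α (and not on r₀), such that for every Katok slow-down function ψ and every solution s=(s₁,s₂):[0,T]→ℝ² of the slow-down system, the Lebesgue measure of the set of times { t ∈ [0,T] : r₀/2 < s₁(t)²+s₂(t)² ≤ r₀ } is at most T₀. -/
open Set MeasureTheory

/-!
Write `K = s₁² + s₂²` and `f = s₁² - s₂²`. The product `s₁ s₂` is a first integral, and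
`f' = 2 ψ(K) K log λ`. Between the first and the last visit to the disc `K ≤ r₀` the orbit cannot
leave the unit disc: it would cross the unit circle outwards with `f > 0` and back inwards with
`f < 0`, but `f` does not vanish on the part of the hyperbola `s₁ s₂ = const` outside the unit
disc. So on that time interval `ψ(K) ≥ 0` and `f` is nondecreasing; it increases by at most
`2 r₀`, at rate at least `r₀ log λ / 2^α` while `K ∈ (r₀/2, r₀]`, because `ψ ≥ ψ(r₀/2) = 2^(-α)`
there. Hence the time spent in the annulus is at most `2 · 2^α / log λ`.
-/

theorem ContinuousOn.measurableSet_inter_preimage {α β : Type*} [TopologicalSpace α]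
    [MeasurableSpace α] [OpensMeasurableSpace α] [TopologicalSpace β] [MeasurableSpace β]
    [BorelSpace β] {f : α → β} {s : Set α} {t : Set β} (hf : ContinuousOn f s)
    (hs : MeasurableSet s) (ht : MeasurableSet t) : MeasurableSet (s ∩ f ⁻¹' t) := by
  have := hs.subtype_image ((continuousOn_iff_continuous_domRestrict.1 hf).measurable ht)
  convert this using 1
  ext x
  simp [and_comm]

theorem volume_le_of_monotoneOn_of_le_deriv {f f' : ℝ → ℝ} {s : Set ℝ} {a b c : ℝ} (hc : 0 < c)
    (hs : MeasurableSet s) (hsab : s ⊆ Icc a b) (hf : MonotoneOn f (Icc a b))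
    (hf' : ∀ x ∈ s, HasDerivAt f (f' x) x) (hcf' : ∀ x ∈ s, c ≤ f' x) :
    volume s ≤ ENNReal.ofReal ((f b - f a) / c) := by
  have himage : f '' s ⊆ Icc (f a) (f b) := by
    rintro _ ⟨x, hx, rfl⟩
    have hx' := hsab hx
    exact ⟨hf (left_mem_Icc.2 (hx'.1.trans hx'.2)) hx' hx'.1,
      hf hx' (right_mem_Icc.2 (hx'.1.trans hx'.2)) hx'.2⟩
  have hmul : volume s * ENNReal.ofReal c ≤ ENNReal.ofReal (f b - f a) :=
    calc volume s * ENNReal.ofReal c = ∫⁻ _ in s, ENNReal.ofReal c := by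
          rw [setLIntegral_const, mul_comm]
      _ ≤ ∫⁻ x in s, ENNReal.ofReal (f' x) :=
          setLIntegral_mono' hs fun x hx => ENNReal.ofReal_le_ofReal (hcf' x hx)
      _ = volume (f '' s) := lintegral_deriv_eq_volume_image_of_monotoneOn hs
          (fun x hx => (hf' x hx).hasDerivWithinAt) (hf.mono hsab)
      _ ≤ ENNReal.ofReal (f b - f a) := (measure_mono himage).trans_eq Real.volume_Icc
  rwa [ENNReal.ofReal_div_of_pos hc, ENNReal.le_div_iff_mul_le (by simp [hc]) (by simp)]

section Crossing

variable {K f : ℝ → ℝ} {a b m : ℝ}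

theorem ContinuousOn.exists_last_eq_of_le_of_lt {t₀ : ℝ} (hK : ContinuousOn K (Icc a t₀))
    (hat₀ : a ≤ t₀) (ha : K a ≤ m) (ht₀ : m < K t₀) :
    ∃ a' ∈ Ico a t₀, K a' = m ∧ ∀ t ∈ Icc a' t₀, m ≤ K t := by
  set S := Icc a t₀ ∩ K ⁻¹' Iic m
  have hbdd : BddAbove S := ⟨t₀, fun t ht => ht.1.2⟩
  obtain ⟨⟨haa', ha't₀⟩, hKa'⟩ : sSup S ∈ S :=
    (hK.preimage_isClosed_of_isClosed isClosed_Icc isClosed_Iic).csSup_mem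
      ⟨a, left_mem_Icc.2 hat₀, ha⟩ hbdd
  have hlast : ∀ t ∈ Icc (sSup S) t₀, K t ≤ m → t = sSup S := fun t ht hKt =>
    le_antisymm (le_csSup hbdd ⟨⟨haa'.trans ht.1, ht.2⟩, hKt⟩) ht.1
  obtain ⟨c, hc, hKc⟩ := intermediate_value_Icc ha't₀ (hK.mono (Icc_subset_Icc_left haa'))
    ⟨hKa', ht₀.le⟩
  obtain rfl := hlast c hc hKc.le
  refine ⟨sSup S, ⟨haa', ha't₀.lt_of_ne ?_⟩, hKc, fun t ht => ?_⟩
  · intro h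
    exact (h ▸ hKa').not_gt ht₀
  · by_contra! h
    exact h.ne (hlast t ht h.le ▸ hKc)

theorem ContinuousOn.exists_first_eq_of_lt_of_le {t₀ : ℝ} (hK : ContinuousOn K (Icc t₀ b))
    (ht₀b : t₀ ≤ b) (ht₀ : m < K t₀) (hb : K b ≤ m) :
    ∃ b' ∈ Ioc t₀ b, K b' = m ∧ ∀ t ∈ Icc t₀ b', m ≤ K t := by
  set S := Icc t₀ b ∩ K ⁻¹' Iic m
  have hbdd : BddBelow S := ⟨t₀, fun t ht => ht.1.1⟩
  obtain ⟨⟨ht₀b', hb'b⟩, hKb'⟩ : sInf S ∈ S :=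
    (hK.preimage_isClosed_of_isClosed isClosed_Icc isClosed_Iic).csInf_mem
      ⟨b, right_mem_Icc.2 ht₀b, hb⟩ hbdd
  have hfirst : ∀ t ∈ Icc t₀ (sInf S), K t ≤ m → t = sInf S := fun t ht hKt =>
    le_antisymm ht.2 (csInf_le hbdd ⟨⟨ht.1, ht.2.trans hb'b⟩, hKt⟩)
  obtain ⟨c, hc, hKc⟩ := intermediate_value_Icc' ht₀b' (hK.mono (Icc_subset_Icc_right hb'b))
    ⟨hKb', ht₀.le⟩
  obtain rfl := hfirst c hc hKc.le
  refine ⟨sInf S, ⟨ht₀b'.lt_of_ne ?_, hb'b⟩, hKc, fun t ht => ?_⟩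
  · intro h
    exact (h ▸ hKb').not_gt ht₀
  · by_contra! h
    exact h.ne (hfirst t ht h.le ▸ hKc)

theorem IsMinOn.hasDerivAt_nonneg_of_left {x y d : ℝ} (hxy : x < y)
    (hmin : IsMinOn K (Icc x y) x) (hd : HasDerivAt K d x) : 0 ≤ d := by
  have := hmin.localize.hasFDerivWithinAt_nonneg hd.hasDerivWithinAt
    (sub_mem_posTangentConeAt_of_segment_subset (segment_eq_Icc hxy.le).subset)
  simpa using nonneg_of_mul_nonneg_right this (sub_pos.2 hxy)

theorem IsMinOn.hasDerivAt_nonpos_of_right {x y d : ℝ} (hxy : x < y)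
    (hmin : IsMinOn K (Icc x y) y) (hd : HasDerivAt K d y) : d ≤ 0 := by
  have := hmin.localize.hasFDerivWithinAt_nonneg hd.hasDerivWithinAt
    (sub_mem_posTangentConeAt_of_segment_subset (by rw [segment_symm, segment_eq_Icc hxy.le]))
  simpa using nonpos_of_mul_nonneg_right this (sub_neg.2 hxy)

theorem forall_le_of_crossing_sign {f : ℝ → ℝ} (hKc : ContinuousOn K (Icc a b))
    (hfc : ContinuousOn f (Icc a b))
    (hK' : ∀ t ∈ Icc a b, K t = m → ∃ c > 0, HasDerivAt K (c * f t) t)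
    (hf : ∀ t ∈ Icc a b, m ≤ K t → f t ≠ 0) (ha : K a ≤ m) (hb : K b ≤ m) :
    ∀ t ∈ Icc a b, K t ≤ m := by
  by_contra! ⟨t₀, ht₀, hKt₀⟩
  obtain ⟨a', ⟨haa', ha't₀⟩, hKa', hleft⟩ :=
    (hKc.mono (Icc_subset_Icc_right ht₀.2)).exists_last_eq_of_le_of_lt ht₀.1 ha hKt₀
  obtain ⟨b', ⟨ht₀b', hb'b⟩, hKb', hright⟩ :=
    (hKc.mono (Icc_subset_Icc_left ht₀.1)).exists_first_eq_of_lt_of_le ht₀.2 hKt₀ hb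
  have ha'b' : a' < b' := ha't₀.trans ht₀b'
  have hsub : Icc a' b' ⊆ Icc a b := Icc_subset_Icc haa' hb'b
  have hge : ∀ t ∈ Icc a' b', m ≤ K t := fun t ht =>
    (le_total t t₀).elim (fun h => hleft t ⟨ht.1, h⟩) (fun h => hright t ⟨h, ht.2⟩)
  have hfa' : 0 < f a' := by
    obtain ⟨c, hc, hd⟩ := hK' a' (hsub (left_mem_Icc.2 ha'b'.le)) hKa'
    have := IsMinOn.hasDerivAt_nonneg_of_left ha'b' (isMinOn_iff.2 fun t ht => hKa' ▸ hge t ht) hd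
    exact pos_of_mul_pos_right (this.lt_of_ne (mul_ne_zero hc.ne'
      (hf a' (hsub (left_mem_Icc.2 ha'b'.le)) hKa'.ge)).symm) hc.le
  have hfb' : f b' < 0 := by
    obtain ⟨c, hc, hd⟩ := hK' b' (hsub (right_mem_Icc.2 ha'b'.le)) hKb'
    have := IsMinOn.hasDerivAt_nonpos_of_right ha'b' (isMinOn_iff.2 fun t ht => hKb' ▸ hge t ht) hd
    exact neg_of_mul_neg_right (this.lt_of_ne (mul_ne_zero hc.ne'
      (hf b' (hsub (right_mem_Icc.2 ha'b'.le)) hKb'.ge))) hc.le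
  obtain ⟨t, ht, hft⟩ := intermediate_value_Icc' ha'b'.le (hfc.mono hsub) ⟨hfb'.le, hfa'.le⟩
  exact hf t (hsub ht) (hge t ht) hft

end Crossing

section Hyperbolic

variable {s₁ s₂ g : ℝ → ℝ}

theorem hasDerivAt_mul_of_hyperbolic {t : ℝ} (h₁ : HasDerivAt s₁ (s₁ t * g t) t)
    (h₂ : HasDerivAt s₂ (-(s₂ t * g t)) t) : HasDerivAt (fun t => s₁ t * s₂ t) 0 t :=
  (h₁.fun_mul h₂).congr_deriv (by ring)

theorem hasDerivAt_sq_add_sq_of_hyperbolic {t : ℝ} (h₁ : HasDerivAt s₁ (s₁ t * g t) t)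
    (h₂ : HasDerivAt s₂ (-(s₂ t * g t)) t) :
    HasDerivAt (fun t => s₁ t ^ 2 + s₂ t ^ 2) (2 * g t * (s₁ t ^ 2 - s₂ t ^ 2)) t :=
  ((h₁.fun_pow 2).fun_add (h₂.fun_pow 2)).congr_deriv (by push_cast; ring)

theorem hasDerivAt_sq_sub_sq_of_hyperbolic {t : ℝ} (h₁ : HasDerivAt s₁ (s₁ t * g t) t)
    (h₂ : HasDerivAt s₂ (-(s₂ t * g t)) t) :
    HasDerivAt (fun t => s₁ t ^ 2 - s₂ t ^ 2) (2 * g t * (s₁ t ^ 2 + s₂ t ^ 2)) t :=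
  ((h₁.fun_pow 2).fun_sub (h₂.fun_pow 2)).congr_deriv (by push_cast; ring)

variable {a b : ℝ}

theorem mul_eq_of_hyperbolic (h₁ : ∀ t ∈ Icc a b, HasDerivAt s₁ (s₁ t * g t) t)
    (h₂ : ∀ t ∈ Icc a b, HasDerivAt s₂ (-(s₂ t * g t)) t) :
    ∀ t ∈ Icc a b, s₁ t * s₂ t = s₁ a * s₂ a :=
  constant_of_has_deriv_right_zero
    (fun t ht => (hasDerivAt_mul_of_hyperbolic (h₁ t ht) (h₂ t ht)).continuousAt.continuousWithinAt)
    (fun t ht => (hasDerivAt_mul_of_hyperbolic (h₁ t (Ico_subset_Icc_self ht))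
      (h₂ t (Ico_subset_Icc_self ht))).hasDerivWithinAt)

theorem sq_add_sq_le_one_of_hyperbolic (h₁ : ∀ t ∈ Icc a b, HasDerivAt s₁ (s₁ t * g t) t)
    (h₂ : ∀ t ∈ Icc a b, HasDerivAt s₂ (-(s₂ t * g t)) t)
    (hg : ∀ t ∈ Icc a b, s₁ t ^ 2 + s₂ t ^ 2 = 1 → 0 < g t)
    (ha : s₁ a ^ 2 + s₂ a ^ 2 < 1) (hb : s₁ b ^ 2 + s₂ b ^ 2 ≤ 1) :
    ∀ t ∈ Icc a b, s₁ t ^ 2 + s₂ t ^ 2 ≤ 1 := by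
  have hK t (ht : t ∈ Icc a b) := hasDerivAt_sq_add_sq_of_hyperbolic (h₁ t ht) (h₂ t ht)
  have hf t (ht : t ∈ Icc a b) := hasDerivAt_sq_sub_sq_of_hyperbolic (h₁ t ht) (h₂ t ht)
  refine forall_le_of_crossing_sign (fun t ht => (hK t ht).continuousAt.continuousWithinAt)
    (fun t ht => (hf t ht).continuousAt.continuousWithinAt)
    (fun t ht hKt => ⟨2 * g t, by linarith [hg t ht hKt], hK t ht⟩) (fun t ht hKt => ?_) ha.le hb
  -- `4 (s₁ s₂)² = K² - f²` is conserved and `< 1` at `a`, so `f = 0` forces `K < 1`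
  intro hft
  have hidentity (x y : ℝ) : (x ^ 2 + y ^ 2) ^ 2 - (x ^ 2 - y ^ 2) ^ 2 = 4 * (x * y) ^ 2 := by ring
  have hc := congrArg (· ^ 2) (mul_eq_of_hyperbolic h₁ h₂ t ht)
  nlinarith [hidentity (s₁ a) (s₂ a), hidentity (s₁ t) (s₂ t), one_le_pow₀ (n := 2) hKt]

theorem monotoneOn_sq_sub_sq_of_hyperbolic (h₁ : ∀ t ∈ Icc a b, HasDerivAt s₁ (s₁ t * g t) t)
    (h₂ : ∀ t ∈ Icc a b, HasDerivAt s₂ (-(s₂ t * g t)) t) (hg : ∀ t ∈ Icc a b, 0 ≤ g t) :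
    MonotoneOn (fun t => s₁ t ^ 2 - s₂ t ^ 2) (Icc a b) := by
  have hf t (ht : t ∈ Icc a b) := hasDerivAt_sq_sub_sq_of_hyperbolic (h₁ t ht) (h₂ t ht)
  refine monotoneOn_of_hasDerivWithinAt_nonneg (convex_Icc a b)
    (fun t ht => (hf t ht).continuousAt.continuousWithinAt)
    (fun t ht => (hf t (interior_subset ht)).hasDerivWithinAt) fun t ht => ?_
  have := hg t (interior_subset ht)
  positivity

theorem volume_le_of_hyperbolic {s : Set ℝ} {R c : ℝ} (hc : 0 < c) (hs : MeasurableSet s)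
    (hsab : s ⊆ Icc a b) (h₁ : ∀ t ∈ Icc a b, HasDerivAt s₁ (s₁ t * g t) t)
    (h₂ : ∀ t ∈ Icc a b, HasDerivAt s₂ (-(s₂ t * g t)) t) (hg : ∀ t ∈ Icc a b, 0 ≤ g t)
    (ha : s₁ a ^ 2 + s₂ a ^ 2 ≤ R) (hb : s₁ b ^ 2 + s₂ b ^ 2 ≤ R)
    (hcs : ∀ t ∈ s, c ≤ 2 * g t * (s₁ t ^ 2 + s₂ t ^ 2)) :
    volume s ≤ ENNReal.ofReal (2 * R / c) := by
  calc volume s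
      ≤ ENNReal.ofReal ((s₁ b ^ 2 - s₂ b ^ 2 - (s₁ a ^ 2 - s₂ a ^ 2)) / c) :=
        volume_le_of_monotoneOn_of_le_deriv hc hs hsab
          (monotoneOn_sq_sub_sq_of_hyperbolic h₁ h₂ hg)
          (fun t ht => hasDerivAt_sq_sub_sq_of_hyperbolic (h₁ t (hsab ht)) (h₂ t (hsab ht))) hcs
    _ ≤ ENNReal.ofReal (2 * R / c) := by
        gcongr
        linarith [sq_nonneg (s₁ a), sq_nonneg (s₂ b)]

theorem volume_le_of_hyperbolic_of_subset_disc {T R c : ℝ} {s : Set ℝ} (hR : R < 1) (hc : 0 < c)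
    (h₁ : ∀ t ∈ Icc 0 T, HasDerivAt s₁ (s₁ t * g t) t)
    (h₂ : ∀ t ∈ Icc 0 T, HasDerivAt s₂ (-(s₂ t * g t)) t)
    (hg₁ : ∀ t ∈ Icc 0 T, s₁ t ^ 2 + s₂ t ^ 2 = 1 → 0 < g t)
    (hg : ∀ t ∈ Icc 0 T, s₁ t ^ 2 + s₂ t ^ 2 ≤ 1 → 0 ≤ g t) (hs : MeasurableSet s)
    (hsR : s ⊆ Icc 0 T ∩ (fun t => s₁ t ^ 2 + s₂ t ^ 2) ⁻¹' Iic R)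
    (hcs : ∀ t ∈ s, c ≤ 2 * g t * (s₁ t ^ 2 + s₂ t ^ 2)) :
    volume s ≤ ENNReal.ofReal (2 * R / c) := by
  set S := Icc 0 T ∩ (fun t => s₁ t ^ 2 + s₂ t ^ 2) ⁻¹' Iic R
  obtain hS | hS := S.eq_empty_or_nonempty
  · exact (measure_mono hsR).trans (by simp [hS])
  have hSc : IsClosed S := ContinuousOn.preimage_isClosed_of_isClosed (fun t ht =>
      (hasDerivAt_sq_add_sq_of_hyperbolic (h₁ t ht) (h₂ t ht)).continuousAt.continuousWithinAt)
    isClosed_Icc isClosed_Iic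
  have hSa : BddBelow S := ⟨0, fun t ht => ht.1.1⟩
  have hSb : BddAbove S := ⟨T, fun t ht => ht.1.2⟩
  -- on `[inf S, sup S]` the orbit stays in the unit disc, where `g ≥ 0`
  obtain ⟨⟨ha, -⟩, hKa⟩ := hSc.csInf_mem hS hSa
  obtain ⟨⟨-, hb⟩, hKb⟩ := hSc.csSup_mem hS hSb
  have hsub : Icc (sInf S) (sSup S) ⊆ Icc 0 T := Icc_subset_Icc ha hb
  have h₁' t (ht : t ∈ Icc (sInf S) (sSup S)) := h₁ t (hsub ht)
  have h₂' t (ht : t ∈ Icc (sInf S) (sSup S)) := h₂ t (hsub ht)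
  have hK₁ := sq_add_sq_le_one_of_hyperbolic h₁' h₂' (fun t ht => hg₁ t (hsub ht))
    (hKa.trans_lt hR) (hKb.trans hR.le)
  exact volume_le_of_hyperbolic hc hs
    (fun t ht => ⟨csInf_le hSa (hsR ht), le_csSup hSb (hsR ht)⟩) h₁' h₂'
    (fun t ht => hg t (hsub ht) (hK₁ t ht)) hKa hKb hcs

end Hyperbolic

theorem inv_two_rpow_le_of_slowdown {ψ ψ' : ℝ → ℝ} {r₀ α : ℝ} (hr₀ : 0 < r₀)
    (hψd : ∀ u ∈ Ioc 0 r₀, HasDerivAt ψ (ψ' u) u) (hψ' : ∀ u ∈ Ioo 0 r₀, 0 < ψ' u)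
    (hψpow : ∀ u : ℝ, 0 ≤ u → u ≤ r₀ / 2 → ψ u = (u / r₀) ^ α) :
    ∀ u ∈ Icc (r₀ / 2) r₀, (2 ^ α)⁻¹ ≤ ψ u := by
  have hmono : MonotoneOn ψ (Ioc 0 r₀) := by
    refine monotoneOn_of_hasDerivWithinAt_nonneg (convex_Ioc 0 r₀)
      (fun u hu => (hψd u hu).continuousAt.continuousWithinAt)
      (fun u hu => (hψd u (interior_subset hu)).hasDerivWithinAt) fun u hu => ?_
    rw [interior_Ioc] at hu
    exact (hψ' u hu).le
  have hhalf : r₀ / 2 ∈ Ioc 0 r₀ := ⟨by positivity, by linarith⟩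
  intro u hu
  calc (2 ^ α)⁻¹ = ψ (r₀ / 2) := by
        rw [hψpow _ hhalf.1.le le_rfl, div_div_cancel_left' hr₀.ne', Real.inv_rpow zero_le_two]
    _ ≤ ψ u := hmono hhalf ⟨hhalf.1.trans_le hu.1, hu.2⟩ hu.1

/-- Lemma `tran-bound` of "Thermodynamics of the Katok Map": there is `T₀ > 0`,
depending only on `λ` and `α` (not on `r₀`), bounding the total time any orbit
of the slow-down system spends in the annulus `D_{r₀} \ D_{r₀/2}`. -/
theorem slowdown_annulus_time_bound :
    ∀ lam α : ℝ, 1 < lam → 0 < α → α < 1 →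
    ∃ T₀ : ℝ, 0 < T₀ ∧
    ∀ r₀ : ℝ, 0 < r₀ → r₀ < 1 →
    ∀ ψ ψ' : ℝ → ℝ,
      (∀ u ∈ Icc (0:ℝ) 1, ψ u ∈ Icc (0:ℝ) 1) →
      (∀ u ∈ Ioc (0:ℝ) 1, HasDerivAt ψ (ψ' u) u) →
      (∀ u : ℝ, r₀ ≤ u → u ≤ 1 → ψ u = 1) →
      (∀ u ∈ Ioo (0:ℝ) r₀, 0 < ψ' u) →
      AntitoneOn ψ' (Ioo (0:ℝ) r₀) →
      (∀ u : ℝ, 0 ≤ u → u ≤ r₀ / 2 → ψ u = (u / r₀) ^ α) →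
    ∀ T : ℝ, 0 ≤ T →
    ∀ s₁ s₂ : ℝ → ℝ,
      (∀ t ∈ Icc (0:ℝ) T,
        HasDerivAt s₁ (s₁ t * ψ (s₁ t ^ 2 + s₂ t ^ 2) * Real.log lam) t) →
      (∀ t ∈ Icc (0:ℝ) T,
        HasDerivAt s₂ (-(s₂ t * ψ (s₁ t ^ 2 + s₂ t ^ 2) * Real.log lam)) t) →
      volume {t : ℝ | t ∈ Icc (0:ℝ) T ∧
          r₀ / 2 < s₁ t ^ 2 + s₂ t ^ 2 ∧ s₁ t ^ 2 + s₂ t ^ 2 ≤ r₀} ≤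
        ENNReal.ofReal T₀ := by
  intro lam α hlam _ _
  have hL : 0 < Real.log lam := Real.log_pos hlam
  refine ⟨2 * 2 ^ α / Real.log lam, by positivity, ?_⟩
  intro r₀ hr₀ hr₀₁ ψ ψ' hψ hψd hψ1 hψ' _ hψpow T _ s₁ s₂ hs₁ hs₂
  set K : ℝ → ℝ := fun t => s₁ t ^ 2 + s₂ t ^ 2
  set g : ℝ → ℝ := fun t => ψ (K t) * Real.log lam
  have h₁ : ∀ t ∈ Icc 0 T, HasDerivAt s₁ (s₁ t * g t) t := fun t ht =>
    (hs₁ t ht).congr_deriv (mul_assoc _ _ _)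
  have h₂ : ∀ t ∈ Icc 0 T, HasDerivAt s₂ (-(s₂ t * g t)) t := fun t ht =>
    (hs₂ t ht).congr_deriv (by rw [mul_assoc])
  have hKc : ContinuousOn K (Icc 0 T) := fun t ht =>
    (hasDerivAt_sq_add_sq_of_hyperbolic (h₁ t ht) (h₂ t ht)).continuousAt.continuousWithinAt
  have hψK := inv_two_rpow_le_of_slowdown hr₀ (fun u hu => hψd u ⟨hu.1, hu.2.trans hr₀₁.le⟩)
    hψ' hψpow
  have hlower : ∀ t ∈ Icc 0 T ∩ K ⁻¹' Ioc (r₀ / 2) r₀,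
      r₀ * Real.log lam / 2 ^ α ≤ 2 * g t * K t := fun t ht =>
    calc r₀ * Real.log lam / 2 ^ α = 2 * ((2 ^ α)⁻¹ * Real.log lam) * (r₀ / 2) := by ring
      _ ≤ 2 * (ψ (K t) * Real.log lam) * K t := by
        have hψt := hψK (K t) ⟨ht.2.1.le, ht.2.2⟩
        have : 0 ≤ ψ (K t) := (by positivity : (0:ℝ) ≤ (2 ^ α)⁻¹).trans hψt
        gcongr
        exact ht.2.1.le
  calc _ ≤ ENNReal.ofReal (2 * r₀ / (r₀ * Real.log lam / 2 ^ α)) :=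
        volume_le_of_hyperbolic_of_subset_disc hr₀₁ (by positivity) h₁ h₂
          (fun t _ hKt => by simpa [g, K, hKt, hψ1 1 hr₀₁.le le_rfl] using hL)
          (fun t _ hKt => mul_nonneg (hψ _ ⟨by positivity, hKt⟩).1 hL.le)
          (hKc.measurableSet_inter_preimage measurableSet_Icc measurableSet_Ioc)
          (fun t ht => ⟨ht.1, ht.2.2⟩) hlower
    _ = ENNReal.ofReal (2 * 2 ^ α / Real.log lam) := by
        congr 1
        field_simp
end

section
/- Let k ≥ 2, let M be a k×k matrix with entries in {0,1} which is primitive (there exists N ≥ 1 such that every entry of M^N is positive), and fix a state p ∈ {1,…,k}. For n ≥ 1 let Sₙ be the number of sequences (i₀,i₁,…,iₙ) ∈ {1,…,k}^{n+1} such that i₀ = iₙ = p, iⱼ ≠ p for all 0 < j < n, and M_{iⱼ,iⱼ₊₁} = 1 for all 0 ≤ j < n (i.e., the number of admissible words of length n+1 in which the symbol p occurs only as the first and the last symbol). Then there exist a constant C > 0 and a number h with 0 ≤ h < log ρ(M), where ρ(M) denotes the spectral radius of M, such that Sₙ ≤ C·e^{h·n} for all n ≥ 1. -/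
/-!
Write `A` for `M` as a matrix over `ℕ`, `ρ` for its spectral radius and `B` for `A` with the
state `p` deleted. A first-return word of length `n + 1` is determined by its interior, a
`B`-admissible word, so `Sₙ` is at most the sum of the entries of `B ^ (n - 2)`. These sums are
submultiplicative in the exponent, so it suffices to find one `m ≥ 1` at which the sum is
`< ρ ^ m`.

Otherwise the sum for `B ^ m` is `≥ ρ ^ m` for every `m ≥ 1`. Pass to blocks of `L = 2N + 1`
steps: surrounding a `B`-path of length `s * L + 1` by `N` arbitrary steps on each side (possible
since `A ^ N > 0`) gives a walk of `s + 1` blocks from `p` to `p` avoiding `p` at the inner block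
boundaries, so these first-return counts `a s` of `A ^ L` at `p` are `≳ ρ ^ (L * (s + 1))`. The
renewal inequality `u (n + 1) ≥ ∑ a r * u (n - r)` for `u n = ((A ^ L) ^ n) p p` then makes `u`
grow at a rate strictly larger than `ρ ^ L`, contradicting Gelfand's formula.
-/

open Finset Filter Topology Real Asymptotics

theorem pow_eq_mul_pow_add_sum {R : Type*} [Semiring R] {d e : R} (hde : d + e = 1) (x : R)
    (n : ℕ) :
    x ^ n = (x * d) ^ n + ∑ r ∈ range n, (x * d) ^ r * (x * e) * x ^ (n - 1 - r) := by
  induction n with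
  | zero => simp
  | succ n ih =>
    have hx : x = x * d + x * e := by rw [← mul_add, hde, mul_one]
    calc x ^ (n + 1) = x * d * x ^ n + x * e * x ^ n := by rw [pow_succ', ← add_mul, ← hx]
      _ = x * d * ((x * d) ^ n + ∑ r ∈ range n, (x * d) ^ r * (x * e) * x ^ (n - 1 - r))
          + x * e * x ^ n := by rw [← ih]
      _ = _ := by
        rw [sum_range_succ', mul_add, mul_sum, ← pow_succ', add_assoc]
        congr 2
        · refine sum_congr rfl fun r _ => ?_
          rw [← mul_assoc, ← mul_assoc, ← pow_succ']
          congr 2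
          omega
        · simp

theorem le_of_forall_mul_pow_le_mul_pow {x y C D : ℝ} (hD : 0 < D) (hy : 0 ≤ y)
    (h : ∀ m : ℕ, D * x ^ m ≤ C * y ^ m) : x ≤ y := by
  by_contra! hxy
  have hx : 0 < x := hy.trans_lt hxy
  have hlim : Tendsto (fun m : ℕ => C * (y / x) ^ m) atTop (𝓝 (C * 0)) :=
    (tendsto_pow_atTop_nhds_zero_of_lt_one (div_nonneg hy hx.le)
      ((div_lt_one hx).2 hxy)).const_mul C
  have hle : D ≤ C * 0 := ge_of_tendsto' hlim fun m => by
    rw [div_pow, ← mul_div_assoc, le_div_iff₀ (pow_pos hx m)]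
    exact h m
  linarith

theorem one_add_pow_le_sum_range {v : ℕ → ℝ} {c : ℝ} (hc : 0 ≤ c) (h0 : 1 ≤ v 0)
    (h : ∀ n, c * ∑ j ∈ range (n + 1), v j ≤ v (n + 1)) (n : ℕ) :
    (1 + c) ^ n ≤ ∑ j ∈ range (n + 1), v j := by
  induction n with
  | zero => simpa using h0
  | succ n ih =>
    rw [sum_range_succ _ (n + 1), pow_succ]
    nlinarith [h n]

theorem mul_pow_le_of_renewal {a u : ℕ → ℝ} {β c : ℝ} (hβ : 0 < β) (hc : 0 ≤ c)
    (ha : ∀ r, c * β ^ (r + 1) ≤ a r) (hu : ∀ n, 0 ≤ u n) (hu0 : 1 ≤ u 0)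
    (hrenew : ∀ n, ∑ r ∈ range (n + 1), a r * u (n - r) ≤ u (n + 1)) (m : ℕ) :
    c / (1 + c) * ((1 + c) * β) ^ m ≤ u m := by
  set v : ℕ → ℝ := fun j => u j / β ^ j
  have hv : ∀ n, c * ∑ j ∈ range (n + 1), v j ≤ v (n + 1) := fun n => by
    rw [le_div_iff₀ (pow_pos hβ _), mul_sum, sum_mul, ← sum_range_reflect]
    refine (sum_le_sum fun r hr => ?_).trans (hrenew n)
    have hr : r ≤ n := Nat.lt_succ_iff.1 (mem_range.1 hr)
    rw [show n + 1 - 1 - r = n - r by omega, show β ^ (n + 1) = β ^ (r + 1) * β ^ (n - r) by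
      rw [← pow_add]; congr 1; omega]
    calc c * (u (n - r) / β ^ (n - r)) * (β ^ (r + 1) * β ^ (n - r))
        = c * β ^ (r + 1) * u (n - r) := by field_simp
      _ ≤ a r * u (n - r) := mul_le_mul_of_nonneg_right (ha r) (hu _)
  have h1c : 0 < 1 + c := by linarith
  cases m with
  | zero => simpa using (div_le_one h1c).2 (by linarith) |>.trans hu0
  | succ n =>
    calc c / (1 + c) * ((1 + c) * β) ^ (n + 1) = β ^ (n + 1) * (c * (1 + c) ^ n) := by
          rw [mul_pow, pow_succ (1 + c)]
          field_simp
      _ ≤ β ^ (n + 1) * v (n + 1) := by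
          gcongr
          exact (mul_le_mul_of_nonneg_left
            (one_add_pow_le_sum_range hc (by simpa [v] using hu0) hv n) hc).trans (hv n)
      _ = u (n + 1) := mul_div_cancel₀ _ (pow_pos hβ _).ne'

theorem exists_le_mul_exp_of_submultiplicative {c : ℕ → ℝ} (hc : ∀ n, 0 ≤ c n)
    (hmul : ∀ a b, c (a + b) ≤ c a * c b) {m : ℕ} (hm : 0 < m) {h : ℝ} (hh : 0 ≤ h)
    (hcm : c m ≤ exp (h * m)) : ∃ C, 0 < C ∧ ∀ n, c n ≤ C * exp (h * n) := by
  have hpow : ∀ q r, c (q * m + r) ≤ c m ^ q * c r := fun q r => by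
    induction q with
    | zero => simp
    | succ q ih =>
      calc c ((q + 1) * m + r) ≤ c m * c (q * m + r) := by
            rw [add_mul, one_mul, add_comm _ m, add_assoc]; exact hmul _ _
        _ ≤ c m * (c m ^ q * c r) := mul_le_mul_of_nonneg_left ih (hc m)
        _ = c m ^ (q + 1) * c r := by ring
  set C := ∑ r ∈ range m, c r + 1
  have hC : ∀ r < m, c r ≤ C := fun r hr =>
    (single_le_sum (fun r _ => hc r) (mem_range.2 hr)).trans (le_add_of_nonneg_right zero_le_one)
  have hC0 : 0 < C := add_pos_of_nonneg_of_pos (sum_nonneg fun r _ => hc r) one_pos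
  refine ⟨C, hC0, fun n => ?_⟩
  rw [← Nat.div_add_mod' n m]
  set q := n / m
  calc c (q * m + n % m) ≤ c m ^ q * c (n % m) := hpow q _
    _ ≤ exp (h * m) ^ q * C :=
        mul_le_mul (pow_le_pow_left₀ (hc m) hcm q) (hC _ (Nat.mod_lt n hm)) (hc _) (by positivity)
    _ = C * exp (h * (q * m : ℕ)) := by rw [← exp_nat_mul]; push_cast; ring_nf
    _ ≤ C * exp (h * (q * m + n % m : ℕ)) :=
        mul_le_mul_of_nonneg_left (exp_le_exp.2 (mul_le_mul_of_nonneg_left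
          (by exact_mod_cast Nat.le_add_right _ _) hh)) hC0.le

theorem exists_lt_log_and_le_mul_exp {c : ℕ → ℝ} (hc : ∀ n, 0 ≤ c n)
    (hmul : ∀ a b, c (a + b) ≤ c a * c b) {ρ : ℝ} (hρ : 1 < ρ) {m : ℕ} (hm : 1 ≤ m)
    (hcm : c m < ρ ^ m) :
    ∃ C h, 0 < C ∧ 0 ≤ h ∧ h < log ρ ∧ ∀ n, c n ≤ C * exp (h * n) := by
  set γ := max (c m) 1
  have hγ : 1 ≤ γ := le_max_right _ _
  have hh : 0 ≤ log γ / m := div_nonneg (log_nonneg hγ) m.cast_nonneg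
  obtain ⟨C, hC, hbound⟩ := exists_le_mul_exp_of_submultiplicative hc hmul hm hh
    (by rw [div_mul_cancel₀ _ (by positivity), exp_log (by positivity)]; exact le_max_left _ _)
  refine ⟨C, log γ / m, hC, hh, ?_, hbound⟩
  rw [div_lt_iff₀ (by positivity), mul_comm, ← Real.log_pow]
  exact log_lt_log (by positivity) (max_lt hcm (one_lt_pow₀ hρ (by omega)))

namespace Matrix

variable {K R : Type*}

def admissibleWords (A : Matrix K K ℕ) (m : ℕ) : Set (Fin (m + 1) → K) :=
  {v | ∀ t : Fin m, A (v t.castSucc) (v t.succ) = 1}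

def firstReturnWords (A : Matrix K K ℕ) (p : K) (n : ℕ) : Set (Fin (n + 1) → K) :=
  {w | w 0 = p ∧ w (Fin.last n) = p ∧
    (∀ j : Fin (n + 1), 0 < (j : ℕ) → (j : ℕ) < n → w j ≠ p) ∧
    ∀ j : Fin n, A (w j.castSucc) (w j.succ) = 1}

section Avoiding

variable [DecidableEq K] [Semiring R]

variable (R) in
def avoiding (p : K) : Matrix K K R := diagonal fun i => if i = p then 0 else 1

theorem avoiding_add_single (p : K) : avoiding R p + single p p 1 = 1 := by
  ext i j
  rcases eq_or_ne i j with rfl | hij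
  · rcases eq_or_ne i p with rfl | hip <;> simp [avoiding, *, Ne.symm]
  · simp [avoiding, single_apply, hij]
    rintro rfl rfl
    exact (hij rfl).elim

variable [Fintype K]

theorem mul_single_one_mul_apply (Y Z : Matrix K K R) (p i j : K) :
    (Y * single p p (1 : R) * Z) i j = Y i p * Z p j := by
  rw [mul_apply, sum_eq_single p (fun l _ hl => by simp [hl]) (by simp)]
  simp

def deleteState (A : Matrix K K R) (p : K) : Matrix K K R := avoiding R p * A * avoiding R p

theorem avoiding_mul_deleteState (A : Matrix K K R) (p : K) :
    avoiding R p * A.deleteState p = A.deleteState p := by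
  rw [deleteState, ← mul_assoc, ← mul_assoc, avoiding, diagonal_mul_diagonal]
  congr 3 with i
  split_ifs <;> simp

theorem deleteState_apply (A : Matrix K K R) (p i j : K) :
    A.deleteState p i j = if i = p ∨ j = p then 0 else A i j := by
  by_cases hi : i = p <;> by_cases hj : j = p <;> simp [deleteState, avoiding, hi, hj]

end Avoiding

variable [Fintype K]

section CanonicallyOrdered

variable [CommSemiring R] [PartialOrder R] [CanonicallyOrderedAdd R]

theorem mul_apply_mono {X X' Y Y' : Matrix K K R} (hX : ∀ i j, X i j ≤ X' i j)
    (hY : ∀ i j, Y i j ≤ Y' i j) (i j : K) : (X * Y) i j ≤ (X' * Y') i j :=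
  sum_le_sum fun l _ => mul_le_mul' (hX i l) (hY l j)

theorem sum_sum_mul_apply_le (X Y : Matrix K K R) :
    ∑ i, ∑ j, (X * Y) i j ≤ (∑ i, ∑ j, X i j) * ∑ i, ∑ j, Y i j := by
  calc ∑ i, ∑ j, (X * Y) i j = ∑ l, (∑ i, X i l) * ∑ j, Y l j := by
        simp only [mul_apply, sum_mul_sum]
        exact (sum_congr rfl fun _ _ => sum_comm).trans sum_comm
    _ ≤ ∑ l, (∑ i, X i l) * ∑ l', ∑ j, Y l' j :=
        sum_le_sum fun l _ => mul_le_mul' le_rfl (single_le_sum (f := fun l' => ∑ j, Y l' j)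
          (fun _ _ => zero_le) (mem_univ l))
    _ = _ := by rw [← sum_mul, sum_comm]

theorem sum_sum_le_mul_mul_apply (X Y Z : Matrix K K R) (p : K) (hX : ∀ i, 1 ≤ X p i)
    (hY : ∀ j, 1 ≤ Y j p) : ∑ i, ∑ j, Z i j ≤ (X * Z * Y) p p := by
  simp only [mul_apply, sum_mul]
  rw [sum_comm]
  exact sum_le_sum fun i _ => sum_le_sum fun j _ =>
    calc Z i j = 1 * Z i j * 1 := by rw [one_mul, mul_one]
      _ ≤ X p i * Z i j * Y j p := mul_le_mul' (mul_le_mul' (hX i) le_rfl) (hY j)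

variable [DecidableEq K]

theorem pow_apply_mono {X Y : Matrix K K R} (h : ∀ i j, X i j ≤ Y i j) (n : ℕ) (i j : K) :
    (X ^ n) i j ≤ (Y ^ n) i j := by
  induction n generalizing i j with
  | zero => rfl
  | succ n ih => simpa only [pow_succ] using mul_apply_mono ih h i j

theorem pow_apply_self_pow_le (A : Matrix K K R) (n m : ℕ) (i : K) :
    ((A ^ n) i i) ^ m ≤ (A ^ (n * m)) i i := by
  induction m with
  | zero => simp
  | succ m ih =>
    rw [pow_succ, Nat.mul_succ, pow_add]
    exact (mul_le_mul' ih le_rfl).trans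
      (single_le_sum (f := fun l => (A ^ (n * m)) i l * (A ^ n) l i) (fun _ _ => zero_le)
        (mem_univ i))

theorem deleteState_apply_le (A : Matrix K K R) (p i j : K) : A.deleteState p i j ≤ A i j := by
  rw [deleteState_apply]
  split_ifs <;> simp

/-- The renewal inequality at `p`: the summand `r` counts the paths whose first return to `p`
happens at step `r + 1`. -/
theorem sum_mul_pow_apply_le_pow_succ_apply (X : Matrix K K R) (p : K) (n : ℕ) :
    ∑ r ∈ range (n + 1), ((X * avoiding R p) ^ r * X) p p * (X ^ (n - r)) p p ≤
      (X ^ (n + 1)) p p := by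
  rw [pow_eq_mul_pow_add_sum (avoiding_add_single p) X (n + 1), add_apply, sum_apply]
  refine le_add_left (le_of_eq (sum_congr rfl fun r _ => ?_))
  rw [← mul_assoc, mul_single_one_mul_apply, Nat.add_sub_cancel]

/-- A path avoiding `p` of length `s * L + 1`, `L = 2N + 1`, extended by `N` steps at both ends,
avoids `p` at all the intermediate multiples of `L`. -/
theorem pow_mul_deleteState_pow_mul_pow_apply_le (A : Matrix K K R) (p : K) {N : ℕ}
    (hN : 1 ≤ N) (s : ℕ) (i j : K) :
    (A ^ N * A.deleteState p ^ (s * (2 * N + 1) + 1) * A ^ N) i j ≤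
      ((A ^ (2 * N + 1) * avoiding R p) ^ s * A ^ (2 * N + 1)) i j := by
  set d := avoiding R p
  set B := A.deleteState p
  have hB : ∀ i j, B i j ≤ A i j := deleteState_apply_le A p
  have hdB : d * B ^ N = B ^ N := by
    obtain ⟨N, rfl⟩ := Nat.exists_eq_add_of_le' hN
    rw [pow_succ', ← mul_assoc, avoiding_mul_deleteState]
  have hL : A ^ N * A ^ (N + 1) = A ^ (2 * N + 1) := by rw [← pow_add]; ring_nf
  induction s generalizing i j with
  | zero =>
    calc (A ^ N * B ^ (0 * (2 * N + 1) + 1) * A ^ N) i j = (A ^ N * B * A ^ N) i j := by simp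
      _ ≤ (A ^ N * A * A ^ N) i j :=
          mul_apply_mono (mul_apply_mono (fun _ _ => le_rfl) hB) (fun _ _ => le_rfl) i j
      _ = _ := by rw [pow_zero, one_mul, ← pow_succ, ← pow_add]; ring_nf
  | succ s ih =>
    have hsplit : B ^ ((s + 1) * (2 * N + 1) + 1) =
        B ^ (N + 1) * d * B ^ N * B ^ (s * (2 * N + 1) + 1) := by
      rw [mul_assoc (B ^ (N + 1)), hdB, ← pow_add, ← pow_add]
      ring_nf
    calc (A ^ N * B ^ ((s + 1) * (2 * N + 1) + 1) * A ^ N) i j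
        = (A ^ N * B ^ (N + 1) * d * (B ^ N * B ^ (s * (2 * N + 1) + 1) * A ^ N)) i j := by
          simp only [hsplit, mul_assoc]
      _ ≤ (A ^ N * A ^ (N + 1) * d * (A ^ N * B ^ (s * (2 * N + 1) + 1) * A ^ N)) i j :=
          mul_apply_mono (mul_apply_mono (mul_apply_mono (fun _ _ => le_rfl)
            (pow_apply_mono hB _)) (fun _ _ => le_rfl))
            (mul_apply_mono (mul_apply_mono (pow_apply_mono hB N) (fun _ _ => le_rfl))
              (fun _ _ => le_rfl)) i j
      _ ≤ (A ^ (2 * N + 1) * d * ((A ^ (2 * N + 1) * d) ^ s * A ^ (2 * N + 1))) i j := by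
          rw [hL]
          exact mul_apply_mono (fun _ _ => le_rfl) ih i j
      _ = _ := by simp only [pow_succ' (A ^ (2 * N + 1) * d), mul_assoc]

end CanonicallyOrdered

theorem exists_eq_map_natCast {m n : Type*} [AddMonoidWithOne R] {M : Matrix m n R}
    (hM : ∀ i j, M i j = 0 ∨ M i j = 1) : ∃ A : Matrix m n ℕ, M = A.map Nat.cast := by
  classical
  refine ⟨of fun i j => if M i j = 1 then 1 else 0, ext fun i j => ?_⟩
  rcases hM i j with h | h <;> simp [h]

theorem natCard_firstReturnWords_one_le (A : Matrix K K ℕ) (p : K) :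
    Nat.card (firstReturnWords A p 1) ≤ 1 := by
  refine Finite.card_le_one_iff_subsingleton.2
    ⟨fun w₁ w₂ => Subtype.ext (funext fun t => ?_)⟩
  fin_cases t
  · exact w₁.2.1.trans w₂.2.1.symm
  · exact w₁.2.2.1.trans w₂.2.2.1.symm

variable [DecidableEq K]

theorem dotProduct_mulVec_pow_eq_sum_prod [CommSemiring R] (A : Matrix K K R) (x y : K → R)
    (m : ℕ) : x ⬝ᵥ (A ^ m *ᵥ y) = ∑ v : Fin (m + 1) → K,
      x (v 0) * (∏ t : Fin m, A (v t.castSucc) (v t.succ)) * y (v (Fin.last m)) := by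
  induction m generalizing x with
  | zero =>
    rw [← (Equiv.funUnique (Fin 1) K).symm.sum_comp]
    simp [dotProduct]
  | succ m ih =>
    rw [pow_succ', ← mulVec_mulVec, dotProduct_mulVec, ih,
      ← (Fin.consEquiv fun _ : Fin (m + 2) => K).sum_comp, Fintype.sum_prod_type, sum_comm]
    refine sum_congr rfl fun w _ => ?_
    simp only [vecMul, dotProduct, sum_mul, Fin.consEquiv_apply, Fin.prod_univ_succ,
      Fin.castSucc_zero, ← Fin.succ_castSucc, ← Fin.succ_last, Fin.cons_zero, Fin.cons_succ,
      mul_assoc]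

theorem map_natCast_pow_apply [Semiring R] (A : Matrix K K ℕ) (n : ℕ) (i j : K) :
    ((A.map (Nat.cast : ℕ → R)) ^ n) i j = (A ^ n) i j := by
  rw [show A.map (Nat.cast : ℕ → R) = A.map (Nat.castRingHom R) from rfl, ← Matrix.map_pow]
  simp

theorem natCard_admissibleWords_le (A : Matrix K K ℕ) (m : ℕ) :
    Nat.card (admissibleWords A m) ≤ ∑ i, ∑ j, (A ^ m) i j := by
  classical
  have hsum := dotProduct_mulVec_pow_eq_sum_prod A 1 1 m
  simp only [Pi.one_apply, one_mul, mul_one, mulVec, dotProduct] at hsum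
  rw [hsum, admissibleWords, Set.coe_ofPred, Nat.card_eq_fintype_card, Fintype.card_subtype,
    card_eq_sum_ones, sum_filter]
  refine sum_le_sum fun v _ => ?_
  split_ifs with hv
  · exact (prod_eq_one fun t _ => hv t).ge
  · exact zero_le

theorem natCard_firstReturnWords_le (A : Matrix K K ℕ) (p : K) (m : ℕ) :
    Nat.card (firstReturnWords A p (m + 2)) ≤
      Nat.card (admissibleWords (A.deleteState p) m) := by
  refine Nat.card_le_card_of_injective
    (fun w => ⟨Fin.init (Fin.tail w.1), fun t => ?_⟩) ?_
  · obtain ⟨w, -, -, hp, hA⟩ := w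
    have h₁ : w t.castSucc.castSucc.succ ≠ p := hp _ (by simp) (by simp)
    have h₂ : w t.succ.castSucc.succ ≠ p := hp _ (by simp) (by simp)
    have ht : t.succ.castSucc.castSucc = t.castSucc.castSucc.succ := Fin.ext (by simp)
    simp only [Fin.init, Fin.tail, deleteState_apply, h₁, h₂, or_self, if_false]
    simpa only [ht] using hA t.succ.castSucc
  · intro w₁ w₂ h
    have hmid : Fin.init (Fin.tail w₁.1) = Fin.init (Fin.tail w₂.1) := congrArg Subtype.val h
    obtain ⟨h0₁, hl₁, -⟩ := w₁.2
    obtain ⟨h0₂, hl₂, -⟩ := w₂.2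
    apply Subtype.ext
    rw [← Fin.cons_self_tail w₁.1, ← Fin.cons_self_tail w₂.1,
      ← Fin.snoc_init_self (Fin.tail w₁.1), ← Fin.snoc_init_self (Fin.tail w₂.1), hmid]
    simp [Fin.tail, h0₁, h0₂, hl₁, hl₂]

theorem exists_norm_pow_apply_le_mul_pow (A : Matrix K K ℂ) (i j : K) {r : ℝ}
    (hr : (spectralRadius ℂ A).toReal < r) : ∃ C, ∀ m, ‖(A ^ m) i j‖ ≤ C * r ^ m := by
  have : Nonempty K := ⟨i⟩
  let _ := Matrix.linftyOpNormedRing (n := K) (α := ℂ)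
  let _ := Matrix.linftyOpNormedAlgebra (R := ℂ) (n := K) (α := ℂ)
  have hr0 : 0 < r := ENNReal.toReal_nonneg.trans_lt hr
  have hρ : spectralRadius ℂ A < ENNReal.ofReal r :=
    (ENNReal.lt_ofReal_iff_toReal_lt
      ((spectrum.spectralRadius_le_nnnorm A).trans_lt ENNReal.coe_lt_top).ne).2 hr
  have hev : ∀ᶠ m : ℕ in atTop, ‖A ^ m‖ ≤ r ^ m := by
    have hgelfand := spectrum.pow_norm_pow_one_div_tendsto_nhds_spectralRadius A
    filter_upwards [hgelfand.eventually_lt_const hρ, eventually_gt_atTop 0] with m hm hm0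
    rw [ENNReal.ofReal_lt_ofReal_iff hr0, one_div,
      Real.rpow_inv_lt_iff_of_pos (norm_nonneg _) hr0.le (by positivity)] at hm
    exact_mod_cast hm.le
  obtain ⟨C, hC⟩ := (isBigO_nat_atTop_iff fun m hm => absurd hm (pow_ne_zero m hr0.ne')).1
    (IsBigO.of_bound 1 (f := fun m => ‖A ^ m‖) (hev.mono fun m hm => by
      simpa [abs_of_pos hr0] using hm))
  refine ⟨C, fun m => ?_⟩
  have hentry : ‖(A ^ m) i j‖₊ ≤ ‖A ^ m‖₊ := by
    rw [linfty_opNNNorm_def]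
    exact (single_le_sum (f := fun j' => ‖(A ^ m) i j'‖₊) (fun _ _ => zero_le)
      (mem_univ j)).trans (le_sup (f := fun i => ∑ j', ‖(A ^ m) i j'‖₊) (mem_univ i))
  exact (NNReal.coe_le_coe.2 hentry).trans (by simpa [abs_of_pos hr0] using hC m)

theorem le_spectralRadius_pow_of_le_pow_apply (A : Matrix K K ℕ) (i j : K) (L : ℕ) {D x : ℝ}
    (hD : 0 < D) (h : ∀ m, D * x ^ m ≤ (A ^ (L * m)) i j) :
    x ≤ (spectralRadius ℂ (A.map (Nat.cast : ℕ → ℂ))).toReal ^ L := by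
  set ρ := (spectralRadius ℂ (A.map (Nat.cast : ℕ → ℂ))).toReal
  have hle : ∀ r, ρ < r → x ≤ r ^ L := fun r hr => by
    obtain ⟨C, hC⟩ := exists_norm_pow_apply_le_mul_pow _ i j hr
    refine le_of_forall_mul_pow_le_mul_pow (C := C) hD
      (pow_nonneg (ENNReal.toReal_nonneg.trans hr.le) L) fun m => ?_
    calc D * x ^ m ≤ (A ^ (L * m)) i j := h m
      _ = ‖((A.map (Nat.cast : ℕ → ℂ)) ^ (L * m)) i j‖ := by simp [map_natCast_pow_apply]
      _ ≤ C * (r ^ L) ^ m := by rw [← pow_mul]; exact hC _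
  exact ge_of_tendsto (((continuous_pow L).tendsto ρ).mono_left nhdsWithin_le_nhds)
    (eventually_nhdsWithin_of_forall (s := Set.Ioi ρ) hle)

theorem one_lt_spectralRadius_of_pow_pos (A : Matrix K K ℕ) (hK : 2 ≤ Fintype.card K) {N : ℕ}
    (hA : ∀ i j, 0 < (A ^ N) i j) :
    1 < (spectralRadius ℂ (A.map (Nat.cast : ℕ → ℂ))).toReal := by
  obtain ⟨p⟩ : Nonempty K := Fintype.card_pos_iff.1 (by omega)
  have hdiag : Fintype.card K ≤ (A ^ (2 * N)) p p := by
    rw [two_mul, pow_add, mul_apply]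
    simpa using sum_le_sum fun l (_ : l ∈ univ) => Nat.mul_le_mul (hA p l) (hA l p)
  have hρ := le_spectralRadius_pow_of_le_pow_apply A p p (2 * N) (x := Fintype.card K) one_pos
    fun m => by
      rw [one_mul]
      exact_mod_cast (Nat.pow_le_pow_left hdiag m).trans (pow_apply_self_pow_le A (2 * N) m p)
  by_contra! h
  have h2 : (2 : ℝ) ≤ Fintype.card K := by exact_mod_cast hK
  linarith [pow_le_one₀ ENNReal.toReal_nonneg h (n := 2 * N)]

theorem lt_spectralRadius_of_pow_le_sum_sum (A : Matrix K K ℕ) {N : ℕ} (hN : 1 ≤ N)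
    (hA : ∀ i j, 0 < (A ^ N) i j) (p : K) {r : ℝ} (hr : 0 < r)
    (h : ∀ m, 1 ≤ m → r ^ m ≤ ∑ i, ∑ j, (A.deleteState p ^ m) i j) :
    r < (spectralRadius ℂ (A.map (Nat.cast : ℕ → ℂ))).toReal := by
  set L := 2 * N + 1
  set c : ℝ := (r ^ (2 * N))⁻¹
  have hc : 0 < c := by positivity
  have hfirst : ∀ s, c * (r ^ L) ^ (s + 1) ≤ ((A ^ L * avoiding ℕ p) ^ s * A ^ L) p p :=
    fun s =>
    calc c * (r ^ L) ^ (s + 1) = r ^ (s * L + 1) := by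
          rw [← pow_mul, show L * (s + 1) = s * L + 1 + 2 * N by ring, pow_add]
          simp only [c]
          field_simp
      _ ≤ ∑ i, ∑ j, (A.deleteState p ^ (s * L + 1)) i j := h _ (by omega)
      _ ≤ (A ^ N * A.deleteState p ^ (s * L + 1) * A ^ N) p p := by
          exact_mod_cast sum_sum_le_mul_mul_apply _ _ _ p (fun i => hA p i) (fun j => hA j p)
      _ ≤ _ := by exact_mod_cast pow_mul_deleteState_pow_mul_pow_apply_le A p hN s p p
  have hgrowth := mul_pow_le_of_renewal (u := fun n => ((A ^ L) ^ n) p p) (pow_pos hr L) hc.le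
    hfirst (fun n => Nat.cast_nonneg _) (by simp)
    (fun n => by exact_mod_cast sum_mul_pow_apply_le_pow_succ_apply (A ^ L) p n)
  have hρ := le_spectralRadius_pow_of_le_pow_apply A p p L (x := (1 + c) * r ^ L)
    (D := c / (1 + c)) (by positivity) fun m => by
      rw [pow_mul]
      exact hgrowth m
  refine lt_of_pow_lt_pow_left₀ L ENNReal.toReal_nonneg (hρ.trans_lt' ?_)
  nlinarith [pow_pos hr L]

theorem exists_natCard_firstReturnWords_le_mul_exp (A : Matrix K K ℕ)
    (hK : 2 ≤ Fintype.card K) {N : ℕ} (hN : 1 ≤ N) (hA : ∀ i j, 0 < (A ^ N) i j) (p : K) :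
    ∃ C h : ℝ, 0 < C ∧ 0 ≤ h ∧
      h < log (spectralRadius ℂ (A.map (Nat.cast : ℕ → ℂ))).toReal ∧
      ∀ n, 1 ≤ n → (Nat.card (firstReturnWords A p n) : ℝ) ≤ C * exp (h * n) := by
  set ρ := (spectralRadius ℂ (A.map (Nat.cast : ℕ → ℂ))).toReal
  have hρ : 1 < ρ := one_lt_spectralRadius_of_pow_pos A hK hA
  set c : ℕ → ℝ := fun m => ((∑ i, ∑ j, (A.deleteState p ^ m) i j : ℕ) : ℝ)
  obtain ⟨m, hm, hcm⟩ : ∃ m, 1 ≤ m ∧ c m < ρ ^ m := by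
    by_contra! hc
    exact (lt_spectralRadius_of_pow_le_sum_sum A hN hA p (by linarith) hc).false
  obtain ⟨C, h, hC, hh, hhρ, hbound⟩ := exists_lt_log_and_le_mul_exp (c := c)
    (fun n => Nat.cast_nonneg _)
    (fun a b => by simp only [c, pow_add]; exact_mod_cast sum_sum_mul_apply_le _ _) hρ hm hcm
  refine ⟨max C 1, h, by positivity, hh, hhρ, fun n hn => ?_⟩
  obtain rfl | ⟨n, rfl⟩ : n = 1 ∨ ∃ n', n = n' + 2 := by
    rcases n with _ | _ | n <;> simp_all
  · calc (Nat.card (firstReturnWords A p 1) : ℝ) ≤ 1 :=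
          mod_cast natCard_firstReturnWords_one_le A p
      _ ≤ max C 1 * exp (h * (1 : ℕ)) :=
          one_le_mul_of_one_le_of_one_le (le_max_right _ _) (one_le_exp (by positivity))
  · calc (Nat.card (firstReturnWords A p (n + 2)) : ℝ) ≤ c n := by
          simp only [c]
          exact_mod_cast (natCard_firstReturnWords_le A p n).trans (natCard_admissibleWords_le _ n)
      _ ≤ C * exp (h * n) := hbound n
      _ ≤ max C 1 * exp (h * (n + 2 : ℕ)) := by
          gcongr
          · exact le_max_left _ _
          · exact_mod_cast Nat.le_add_right _ _

end Matrix

/-- Lemma `h1` of "Thermodynamics of the Katok Map" (abstract symbolic form):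
for a primitive 0-1 transition matrix `M` and a fixed state `p`, the number
`Sₙ` of admissible words of length `n+1` in which the symbol `p` occurs only
as the first and last symbol grows at an exponential rate strictly smaller
than `log ρ(M)`, where `ρ(M)` is the spectral radius of `M`. -/
theorem first_return_word_count_bound
    (k : ℕ) (hk : 2 ≤ k) (M : Matrix (Fin k) (Fin k) ℝ)
    (hM01 : ∀ i j, M i j = 0 ∨ M i j = 1)
    (hprim : ∃ N : ℕ, 1 ≤ N ∧ ∀ i j, 0 < (M ^ N) i j)
    (p : Fin k)
    (S : ℕ → ℕ)
    (hS : ∀ n : ℕ, S n = Nat.card {w : Fin (n + 1) → Fin k //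
      w 0 = p ∧ w (Fin.last n) = p ∧
      (∀ j : Fin (n + 1), 0 < (j : ℕ) → (j : ℕ) < n → w j ≠ p) ∧
      (∀ j : Fin n, M (w j.castSucc) (w j.succ) = 1)}) :
    ∃ C h : ℝ, 0 < C ∧ 0 ≤ h ∧
      h < Real.log ((spectralRadius ℂ (M.map (Complex.ofReal ·))).toReal) ∧
      ∀ n : ℕ, 1 ≤ n → (S n : ℝ) ≤ C * Real.exp (h * n) := by
  obtain ⟨N, hN, hMN⟩ := hprim
  obtain ⟨A, rfl⟩ := Matrix.exists_eq_map_natCast hM01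
  simp only [Matrix.map_apply, Nat.cast_eq_one] at hS
  rw [show (A.map (Nat.cast : ℕ → ℝ)).map (Complex.ofReal ·) = A.map Nat.cast by ext; simp]
  obtain ⟨C, h, hC, hh, hhρ, hbound⟩ := Matrix.exists_natCard_firstReturnWords_le_mul_exp A
    (by simpa using hk) hN (fun i j => by simpa [Matrix.map_natCast_pow_apply] using hMN i j) p
  exact ⟨C, h, hC, hh, hhρ, fun n hn => by rw [hS n]; exact hbound n hn⟩
end

section
/- Let ψ:(0,1]→(0,∞) be continuous with ∫₀^u dτ/ψ(τ) < ∞ for every u∈(0,1], and let κ₀ > 0. Define φ:ℝ²→ℝ² on the punctured disk {s=(s₁,s₂) : 0 < s₁²+s₂² < 1} by φ(s) = ( (1/(κ₀·(s₁²+s₂²))) · ∫₀^{s₁²+s₂²} dτ/ψ(τ) )^{1/2} · (s₁,s₂). Then φ is differentiable at every such point s and the determinant of its derivative satisfies det Dφ(s) = 1/(κ₀·ψ(s₁²+s₂²)). Consequently φ pushes the measure with density (κ₀·ψ(s₁²+s₂²))^{−1} with respect to Lebesgue measure forward to Lebesgue measure on the image. -/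
/-!
Write `r = s₁² + s₂²` and `F(r) = ∫₀^r dτ/ψ(τ)`. Then `φ(s) = g(r) s` with `g(r) = √(F(r)/(κ₀ r))`
is a radial map, and `|φ(s)|² = r g(r)² = F(r)/κ₀`. A radial map `s ↦ g(r) s` keeps the polar
angle and sends `r` to `r g(r)²`; since Lebesgue measure is `½ dr dθ`, its Jacobian is
`d/dr (r g(r)²) = 1/(κ₀ ψ(r))` (concretely, by the matrix determinant lemma,
`det (g I + 2 g' s sᵀ) = g² + 2 r g g'`). As `1/ψ > 0`, `F` is strictly increasing, so `φ` is
injective on the punctured disk and the change of variables formula gives the pushforward.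
-/

open Set MeasureTheory intervalIntegral

theorem LinearMap.det_smul_id_add_smulRight_prod {R : Type*} [CommRing R] (a : R)
    (L : R × R →ₗ[R] R) (w : R × R) :
    LinearMap.det (a • LinearMap.id + L.smulRight w) = a ^ 2 + a * L w := by
  have hLw : L w = w.1 * L (1, 0) + w.2 * L (0, 1) := by
    conv_lhs => rw [show w = w.1 • ((1 : R), (0 : R)) + w.2 • ((0 : R), (1 : R)) by ext <;> simp]
    simp only [map_add, map_smul, smul_eq_mul]
  rw [← LinearMap.det_toMatrix (Module.Basis.finTwoProd R), Matrix.det_fin_two, hLw]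
  simp only [Fin.isValue, toMatrix_apply, Module.Basis.finTwoProd_zero, add_apply, smul_apply,
    id_coe, id_eq, Prod.smul_mk, smul_eq_mul, mul_one, mul_zero, coe_smulRight, map_add, map_smul,
    Finsupp.coe_add, Module.Basis.coe_finTwoProd_repr, Finsupp.coe_smul, Matrix.smul_cons,
    Matrix.smul_empty, Pi.add_apply, Matrix.cons_val_zero, Module.Basis.finTwoProd_one,
    Matrix.cons_val_one, Matrix.cons_val_fin_one, zero_add]
  ring

theorem map_withDensity_eq_restrict_image {E : Type*} [NormedAddCommGroup E] [NormedSpace ℝ E]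
    [FiniteDimensional ℝ E] [MeasurableSpace E] [BorelSpace E] (μ : Measure E)
    [μ.IsAddHaarMeasure] {s : Set E} {f : E → E} {f' : E → E →L[ℝ] E} {ρ : E → ℝ}
    (hs : MeasurableSet s) (hf' : ∀ x ∈ s, HasFDerivWithinAt f (f' x) s x) (hf : InjOn f s)
    (hρ : ∀ x ∈ s, |(f' x).det| = ρ x) :
    Measure.map f ((μ.restrict s).withDensity fun x => ENNReal.ofReal (ρ x)) =
      μ.restrict (f '' s) := by
  have hdens : (fun x => ENNReal.ofReal |(f' x).det|) =ᵐ[μ.restrict s]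
      fun x => ENNReal.ofReal (ρ x) :=
    (ae_restrict_iff' hs).2 (.of_forall fun x hx => by simp only [hρ x hx])
  rw [← withDensity_congr_ae hdens]
  exact map_withDensity_abs_det_fderiv_eq_addHaar μ hs.nullMeasurableSet hf' hf

theorem hasFDerivAt_sq_add_sq (s : ℝ × ℝ) :
    HasFDerivAt (fun t : ℝ × ℝ => t.1 ^ 2 + t.2 ^ 2)
      ((2 * s.1) • ContinuousLinearMap.fst ℝ ℝ ℝ + (2 * s.2) • ContinuousLinearMap.snd ℝ ℝ ℝ)
      s :=
  (((hasFDerivAt_fst (p := s)).pow 2).add ((hasFDerivAt_snd (p := s)).pow 2)).congr_fderiv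
    (by ext <;> simp)

def radialMap (h : ℝ → ℝ) (s : ℝ × ℝ) : ℝ × ℝ := h (s.1 ^ 2 + s.2 ^ 2) • s

theorem sq_add_sq_radialMap (h : ℝ → ℝ) (s : ℝ × ℝ) :
    (radialMap h s).1 ^ 2 + (radialMap h s).2 ^ 2 =
      (s.1 ^ 2 + s.2 ^ 2) * h (s.1 ^ 2 + s.2 ^ 2) ^ 2 := by
  simp only [radialMap, Prod.smul_fst, Prod.smul_snd, smul_eq_mul]
  ring

section RadialMap

variable {h : ℝ → ℝ} {s : ℝ × ℝ}

theorem injOn_radialMap {I : Set ℝ} (hI : InjOn (fun r => r * h r ^ 2) I)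
    (hh : ∀ r ∈ I, h r ≠ 0) : InjOn (radialMap h) {s | s.1 ^ 2 + s.2 ^ 2 ∈ I} := by
  intro s hs t ht hst
  have hr : s.1 ^ 2 + s.2 ^ 2 = t.1 ^ 2 + t.2 ^ 2 := by
    have := congrArg (fun p : ℝ × ℝ => p.1 ^ 2 + p.2 ^ 2) hst
    simp only [sq_add_sq_radialMap] at this
    exact hI hs ht this
  simp only [radialMap, hr] at hst
  exact smul_right_injective _ (hh _ ht) hst

theorem DifferentiableAt.hasFDerivAt_radialMap (hh : DifferentiableAt ℝ h (s.1 ^ 2 + s.2 ^ 2)) :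
    HasFDerivAt (radialMap h)
      (h (s.1 ^ 2 + s.2 ^ 2) • ContinuousLinearMap.id ℝ (ℝ × ℝ) +
        (deriv h (s.1 ^ 2 + s.2 ^ 2) •
          ((2 * s.1) • ContinuousLinearMap.fst ℝ ℝ ℝ +
            (2 * s.2) • ContinuousLinearMap.snd ℝ ℝ ℝ)).smulRight s) s :=
  (hh.hasDerivAt.comp_hasFDerivAt s (hasFDerivAt_sq_add_sq s)).smul (hasFDerivAt_id s)

theorem det_fderiv_radialMap {D : ℝ} (hh : DifferentiableAt ℝ h (s.1 ^ 2 + s.2 ^ 2))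
    (hD : HasDerivAt (fun r => r * h r ^ 2) D (s.1 ^ 2 + s.2 ^ 2)) :
    LinearMap.det (fderiv ℝ (radialMap h) s).toLinearMap = D := by
  set r := s.1 ^ 2 + s.2 ^ 2
  have hD' : HasDerivAt (fun r => r * h r ^ 2) (h r ^ 2 + r * (2 * h r * deriv h r)) r :=
    ((hasDerivAt_id' r).fun_mul (hh.hasDerivAt.fun_pow 2)).congr_deriv (by simp)
  rw [hD.unique hD', hh.hasFDerivAt_radialMap.fderiv, ContinuousLinearMap.toLinearMap_add,
    ContinuousLinearMap.toLinearMap_smul, ContinuousLinearMap.coe_id,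
    ContinuousLinearMap.coe_smulRight, LinearMap.det_smul_id_add_smulRight_prod]
  simp only [smul_add, ContinuousLinearMap.toLinearMap_add, ContinuousLinearMap.toLinearMap_smul,
    ContinuousLinearMap.coe_fst, ContinuousLinearMap.coe_snd, LinearMap.add_apply,
    LinearMap.smul_apply, LinearMap.fst_apply, smul_eq_mul, LinearMap.snd_apply, add_right_inj, r]
  ring

end RadialMap

section Primitive

variable {f : ℝ → ℝ} {b : ℝ}

theorem hasDerivAt_integral_of_continuousOn_Ioo
    (hf_int : ∀ u ∈ Ioo 0 b, IntervalIntegrable f volume 0 u) (hf : ContinuousOn f (Ioo 0 b))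
    {u : ℝ} (hu : u ∈ Ioo 0 b) : HasDerivAt (fun u => ∫ τ in (0:ℝ)..u, f τ) (f u) u :=
  integral_hasDerivAt_right (hf_int u hu)
    (hf.stronglyMeasurableAtFilter isOpen_Ioo u hu) (hf.continuousAt (isOpen_Ioo.mem_nhds hu))

theorem strictMonoOn_integral_of_pos
    (hf_int : ∀ u ∈ Ioo 0 b, IntervalIntegrable f volume 0 u) (hf : ContinuousOn f (Ioo 0 b))
    (hf_pos : ∀ u ∈ Ioo 0 b, 0 < f u) :
    StrictMonoOn (fun u => ∫ τ in (0:ℝ)..u, f τ) (Ioo 0 b) := by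
  have hF := fun u (hu : u ∈ Ioo 0 b) => hasDerivAt_integral_of_continuousOn_Ioo hf_int hf hu
  refine strictMonoOn_of_deriv_pos (convex_Ioo 0 b)
    (fun u hu => (hF u hu).continuousAt.continuousWithinAt) fun u hu => ?_
  rw [interior_Ioo] at hu
  rw [(hF u hu).deriv]
  exact hf_pos u hu

end Primitive

noncomputable def radialFactor (κ : ℝ) (F : ℝ → ℝ) (r : ℝ) : ℝ :=
  Real.sqrt (1 / (κ * r) * F r)

section RadialFactor

variable {κ r : ℝ} {F : ℝ → ℝ}

theorem radialFactor_pos (hκ : 0 < κ) (hr : 0 < r) (hF : 0 < F r) : 0 < radialFactor κ F r :=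
  Real.sqrt_pos.2 (by positivity)

theorem mul_radialFactor_sq (hκ : 0 < κ) (hr : 0 < r) (hF : 0 ≤ F r) :
    r * radialFactor κ F r ^ 2 = F r / κ := by
  rw [radialFactor, Real.sq_sqrt (by positivity)]
  field_simp

theorem differentiableAt_radialFactor (hκ : κ ≠ 0) (hr : r ≠ 0) (hF : DifferentiableAt ℝ F r)
    (hFr : F r ≠ 0) : DifferentiableAt ℝ (radialFactor κ F) r := by
  unfold radialFactor
  fun_prop (disch := simp [hκ, hr, hFr])

theorem hasDerivAt_mul_radialFactor_sq {f : ℝ} (hκ : 0 < κ) (hr : 0 < r) (hFr : 0 < F r)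
    (hF : HasDerivAt F f r) : HasDerivAt (fun r => r * radialFactor κ F r ^ 2) (f / κ) r := by
  have hpos : ∀ᶠ x in nhds r, 0 < x ∧ 0 < F x :=
    (lt_mem_nhds hr).and (hF.continuousAt.eventually (lt_mem_nhds hFr))
  refine (hF.div_const κ).congr_of_eventuallyEq ?_
  filter_upwards [hpos] with x hx using mul_radialFactor_sq hκ hx.1 hx.2.le

theorem injOn_mul_radialFactor_sq {I : Set ℝ} (hκ : 0 < κ) (hI : I ⊆ Ioi 0)
    (hF : StrictMonoOn F I) (hF_nonneg : ∀ r ∈ I, 0 ≤ F r) :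
    InjOn (fun r => r * radialFactor κ F r ^ 2) I := by
  intro x hx y hy hxy
  simp only [mul_radialFactor_sq hκ (hI hx) (hF_nonneg x hx),
    mul_radialFactor_sq hκ (hI hy) (hF_nonneg y hy), div_left_inj' hκ.ne'] at hxy
  exact hF.injOn hx hy hxy

end RadialFactor

/-- The coordinate change `φ` of Section 2 of "Thermodynamics of the Katok Map":
on the punctured unit disk, `φ` is differentiable with Jacobian determinant
`1/(κ₀ ψ(s₁²+s₂²))`; consequently `φ` pushes the measure with density
`(κ₀ ψ(s₁²+s₂²))⁻¹` with respect to Lebesgue measure forward to Lebesgue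
measure on the image. -/
theorem coordinate_change_jacobian
    (ψ : ℝ → ℝ) (κ₀ : ℝ) (hκ₀ : 0 < κ₀)
    (hψc : ContinuousOn ψ (Ioc (0:ℝ) 1))
    (hψpos : ∀ u ∈ Ioc (0:ℝ) 1, 0 < ψ u)
    (hint : ∀ u ∈ Ioc (0:ℝ) 1,
      IntervalIntegrable (fun τ => (ψ τ)⁻¹) volume 0 u)
    (φ : ℝ × ℝ → ℝ × ℝ)
    (hφ : ∀ s : ℝ × ℝ, φ s =
      (Real.sqrt ((1 / (κ₀ * (s.1 ^ 2 + s.2 ^ 2))) *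
        ∫ τ in (0:ℝ)..(s.1 ^ 2 + s.2 ^ 2), (ψ τ)⁻¹)) • s) :
    (∀ s : ℝ × ℝ, 0 < s.1 ^ 2 + s.2 ^ 2 → s.1 ^ 2 + s.2 ^ 2 < 1 →
      DifferentiableAt ℝ φ s ∧
      LinearMap.det (fderiv ℝ φ s).toLinearMap = 1 / (κ₀ * ψ (s.1 ^ 2 + s.2 ^ 2))) ∧
    Measure.map φ
      ((volume.restrict {s : ℝ × ℝ | 0 < s.1 ^ 2 + s.2 ^ 2 ∧ s.1 ^ 2 + s.2 ^ 2 < 1}).withDensity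
        (fun s => ENNReal.ofReal (1 / (κ₀ * ψ (s.1 ^ 2 + s.2 ^ 2))))) =
      volume.restrict
        (φ '' {s : ℝ × ℝ | 0 < s.1 ^ 2 + s.2 ^ 2 ∧ s.1 ^ 2 + s.2 ^ 2 < 1}) := by
  set F : ℝ → ℝ := fun u => ∫ τ in (0:ℝ)..u, (ψ τ)⁻¹
  have hφF : φ = radialMap (radialFactor κ₀ F) := funext hφ
  have hint' : ∀ u ∈ Ioo (0:ℝ) 1, IntervalIntegrable (fun τ => (ψ τ)⁻¹) volume 0 u :=
    fun u hu => hint u (Ioo_subset_Ioc_self hu)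
  have hψinv_cont : ContinuousOn (fun τ => (ψ τ)⁻¹) (Ioo 0 1) :=
    (hψc.mono Ioo_subset_Ioc_self).inv₀ fun u hu => (hψpos u (Ioo_subset_Ioc_self hu)).ne'
  have hψinv_pos : ∀ u ∈ Ioo (0:ℝ) 1, 0 < (ψ u)⁻¹ :=
    fun u hu => inv_pos.2 (hψpos u (Ioo_subset_Ioc_self hu))
  have hF_pos : ∀ u ∈ Ioo (0:ℝ) 1, 0 < F u := fun u hu =>
    intervalIntegral_pos_of_pos_on (hint' u hu)
      (fun τ hτ => hψinv_pos τ ⟨hτ.1, hτ.2.trans hu.2⟩) hu.1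
  have hφ_deriv : ∀ s ∈ {s : ℝ × ℝ | s.1 ^ 2 + s.2 ^ 2 ∈ Ioo (0:ℝ) 1},
      DifferentiableAt ℝ φ s ∧
      LinearMap.det (fderiv ℝ φ s).toLinearMap = 1 / (κ₀ * ψ (s.1 ^ 2 + s.2 ^ 2)) := by
    intro s hs
    have hF := hasDerivAt_integral_of_continuousOn_Ioo hint' hψinv_cont hs
    have hdiff := differentiableAt_radialFactor hκ₀.ne' hs.1.ne' hF.differentiableAt
      (hF_pos _ hs).ne'
    rw [hφF, one_div, mul_inv_rev, ← div_eq_mul_inv]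
    exact ⟨hdiff.hasFDerivAt_radialMap.differentiableAt,
      det_fderiv_radialMap hdiff (hasDerivAt_mul_radialFactor_sq hκ₀ hs.1 (hF_pos _ hs) hF)⟩
  have hφ_inj : InjOn φ {s : ℝ × ℝ | s.1 ^ 2 + s.2 ^ 2 ∈ Ioo (0:ℝ) 1} := hφF ▸
    injOn_radialMap (injOn_mul_radialFactor_sq hκ₀ (fun _ hr => hr.1)
        (strictMonoOn_integral_of_pos hint' hψinv_cont hψinv_pos) fun r hr => (hF_pos r hr).le)
      fun r hr => (radialFactor_pos hκ₀ hr.1 (hF_pos r hr)).ne'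
  refine ⟨fun s h0 h1 => hφ_deriv s ⟨h0, h1⟩, ?_⟩
  refine map_withDensity_eq_restrict_image volume ?_
    (fun s hs => (hφ_deriv s hs).1.hasFDerivAt.hasFDerivWithinAt) hφ_inj fun s hs => ?_
  · exact (isOpen_Ioo.preimage (by fun_prop)).measurableSet
  · rw [ContinuousLinearMap.det, (hφ_deriv s hs).2, abs_of_pos]
    have := hψpos _ (Ioo_subset_Ioc_self hs)
    positivity
end
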